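/- arXiv:1904.00429 — 7 statements merged into one kernel-verified Lean document; each statement's English description precedes it below -/
import Mathlib

section
/- Let a, b ∈ ℝ^n be random vectors whose 2n coordinates are mutually independent with finite nonzero moments w_j = E[a_j^2 b_j^2], let s be a positive integer, and let ξ^u be the uniform probability vector ξ^u_j = 1/n. Then the expected (over a, b) variance (over the sampled indices) of the sketched inner product X_s with sampling distribution ξ^u equals (n·ν + μ)/s, where μ = (Σ_{j=1}^n √(w_j))^2 − E[(aᵀb)^2] and ν = Σ_{i=1}^n ( √(w_i) − (1/n) Σ_{j=1}^n √(w_j) )^2. Equivalently, it exceeds the minimal expected variance μ/s (attained at ξ*_j = √(w_j)/Σ_i √(w_i)) by exactly n·ν/s. The core arithmetic identity is n·Σ_{j=1}^n w_j − (Σ_{j=1}^n √(w_j))^2 = n·Σ_{i=1}^n ( √(w_i) − (1/n) Σ_{j=1}^n √(w_j) )^2. -/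
open MeasureTheory ProbabilityTheory

/-- AM–GM integrability: product of two L² functions is integrable. -/
lemma aux_integrable_mul {Ω : Type*} [MeasureSpace Ω] {f g : Ω → ℝ}
    (hfm : AEStronglyMeasurable f ℙ) (hgm : AEStronglyMeasurable g ℙ)
    (hf : Integrable (fun ω => f ω ^ 2) ℙ) (hg : Integrable (fun ω => g ω ^ 2) ℙ) :
    Integrable (fun ω => f ω * g ω) ℙ := by
  refine (hf.add hg).mono' (hfm.mul hgm) ?_
  filter_upwards with ω
  have h := abs_mul (f ω) (g ω)
  have h2 := sq_abs (f ω)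
  have h3 := sq_abs (g ω)
  have := sq_nonneg (|f ω| - |g ω|)
  simp only [Real.norm_eq_abs, Pi.add_apply]
  nlinarith [abs_nonneg (f ω), abs_nonneg (g ω)]

/-- double sum of an if-then-else over a finite type -/
lemma aux_sum_ite (s : ℕ) (d e : ℝ) :
    ∑ i : Fin s, ∑ i' : Fin s, (if i = i' then d else e)
      = (s : ℝ) * d + ((s : ℝ) * s - s) * e := by
  have h1 : ∀ i : Fin s, ∑ i' : Fin s, (if i = i' then d else e)
      = (s : ℝ) * e + (d - e) := by
    intro i
    have : ∀ i' : Fin s, (if i = i' then d else e) = e + (if i = i' then d - e else 0) := by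
      intro i'; by_cases h : i = i' <;> simp [h]
    rw [Finset.sum_congr rfl fun i' _ => this i']
    rw [Finset.sum_add_distrib, Finset.sum_const, Finset.sum_ite_eq]
    simp
  rw [Finset.sum_congr rfl fun i _ => h1 i, Finset.sum_const]
  simp; ring

/-- core arithmetic identity -/
lemma aux_core_identity (n : ℕ) (hn : 0 < n) (w : Fin n → ℝ) (hw : ∀ i, 0 ≤ w i) :
    (n : ℝ) * ∑ j, w j - (∑ j, Real.sqrt (w j)) ^ 2
      = (n : ℝ) * ∑ i, (Real.sqrt (w i) - (1 / (n : ℝ)) * ∑ j, Real.sqrt (w j)) ^ 2 := by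
  have hn' : (n : ℝ) ≠ 0 := Nat.cast_ne_zero.mpr hn.ne'
  set S := ∑ j, Real.sqrt (w j) with hS
  have h1 : ∀ i, (Real.sqrt (w i) - (1 / (n : ℝ)) * S) ^ 2
      = w i - 2 * ((1 / (n : ℝ)) * S) * Real.sqrt (w i) + ((1 / (n : ℝ)) * S) ^ 2 := by
    intro i
    have := Real.sq_sqrt (hw i)
    nlinarith [this]
  rw [Finset.sum_congr rfl fun i _ => h1 i]
  rw [Finset.sum_add_distrib, Finset.sum_sub_distrib, Finset.sum_const, ← Finset.mul_sum, ← hS]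
  simp only [Finset.card_univ, Fintype.card_fin, nsmul_eq_mul]
  field_simp
  ring

/-- For random vectors `a, b ∈ ℝⁿ` with mutually independent
coordinates and moments `w j = E[aⱼ² bⱼ²]`, the expected (over `a, b`) variance (over
the `s` i.i.d. uniformly sampled indices) of the sketched inner product
`X_s = (n/s) ∑ᵢ a_{rᵢ} b_{rᵢ}` — which, since `E[X_s | a, b] = aᵀb`, equals
`E[(X_s − aᵀb)²]` — is exactly `(n ν + μ)/s`, i.e. it exceeds the minimal expected
variance `μ/s` by exactly `n ν / s`.  Moreover the core arithmetic identity
`n ∑ⱼ w j − (∑ⱼ √(w j))² = n ∑ᵢ (√(w i) − (1/n) ∑ⱼ √(w j))²` holds. -/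
theorem uniform_sampling_variance_inner_product
    {Ω : Type*} [MeasureSpace Ω] [IsProbabilityMeasure (ℙ : Measure Ω)]
    (n s : ℕ) (hn : 0 < n) (hs : 0 < s)
    (a b : Ω → Fin n → ℝ)
    (ha : ∀ j, Measurable fun ω => a ω j) (hb : ∀ j, Measurable fun ω => b ω j)
    -- the 2n coordinates of a and b are mutually independent
    (hab_indep : iIndepFun (m := fun _ : Fin n ⊕ Fin n => (inferInstance : MeasurableSpace ℝ))
      (Sum.elim (fun j ω => a ω j) (fun j ω => b ω j)) ℙ)
    (w : Fin n → ℝ) (hw : ∀ j, w j = ∫ ω, (a ω j) ^ 2 * (b ω j) ^ 2 ∂ℙ)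
    (hw_int : ∀ j, Integrable (fun ω => (a ω j) ^ 2 * (b ω j) ^ 2) ℙ)
    (hw_pos : ∀ j, 0 < w j)
    (hab_sq_int : Integrable (fun ω => (∑ j, a ω j * b ω j) ^ 2) ℙ)
    -- s i.i.d. indices, each uniform on {1,…,n}, independent of (a, b)
    (r : Ω → Fin s → Fin n) (hr : ∀ i, Measurable fun ω => r ω i)
    (hr_iid : iIndepFun (m := fun _ : Fin s => (inferInstance : MeasurableSpace (Fin n)))
      (fun i ω => r ω i) ℙ)
    (hr_unif : ∀ i j, ℙ {ω | r ω i = j} = (n : ENNReal)⁻¹)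
    (hr_ab : IndepFun (fun ω => (a ω, b ω)) r ℙ)
    (μ ν : ℝ)
    (hμ : μ = (∑ j, Real.sqrt (w j)) ^ 2 - ∫ ω, (∑ j, a ω j * b ω j) ^ 2 ∂ℙ)
    (hν : ν = ∑ i, (Real.sqrt (w i) - (1 / (n : ℝ)) * ∑ j, Real.sqrt (w j)) ^ 2) :
    (∫ ω, ((n : ℝ) / (s : ℝ) * ∑ i, a ω (r ω i) * b ω (r ω i)
          - ∑ j, a ω j * b ω j) ^ 2 ∂ℙ = ((n : ℝ) * ν + μ) / s) ∧
      (n : ℝ) * ∑ j, w j - (∑ j, Real.sqrt (w j)) ^ 2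
        = (n : ℝ) * ∑ i, (Real.sqrt (w i) - (1 / (n : ℝ)) * ∑ j, Real.sqrt (w j)) ^ 2 := by
  have hid := aux_core_identity n hn w (fun i => (hw_pos i).le)
  refine ⟨?_, hid⟩
  have hn' : (n : ℝ) ≠ 0 := Nat.cast_ne_zero.mpr hn.ne'
  have hs' : (s : ℝ) ≠ 0 := Nat.cast_ne_zero.mpr hs.ne'
  -- notation
  set c : Fin n → Ω → ℝ := fun j ω => a ω j * b ω j with hc
  set T : Ω → ℝ := fun ω => ∑ j, c j ω with hT
  have mc : ∀ j, Measurable (c j) := fun j => (ha j).mul (hb j)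
  have mT : Measurable T := Finset.measurable_sum _ fun j _ => mc j
  have hrM : Measurable r := measurable_pi_lambda _ hr
  have hcsq : ∀ j, Integrable (fun ω => c j ω ^ 2) ℙ := by
    intro j; simpa [hc, mul_pow] using hw_int j
  have hTsq : Integrable (fun ω => T ω ^ 2) ℙ := hab_sq_int
  have intcc : ∀ j k, Integrable (fun ω => c j ω * c k ω) ℙ := fun j k =>
    aux_integrable_mul (mc j).aestronglyMeasurable (mc k).aestronglyMeasurable
      (hcsq j) (hcsq k)
  have intcT : ∀ j, Integrable (fun ω => c j ω * T ω) ℙ := fun j =>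
    aux_integrable_mul (mc j).aestronglyMeasurable mT.aestronglyMeasurable (hcsq j) hTsq
  -- key independence lemma
  have key : ∀ (A : Set (Fin s → Fin n)) (G : ((Fin n) → ℝ) × ((Fin n) → ℝ) → ℝ),
      Measurable G → Integrable (fun ω => G (a ω, b ω)) ℙ →
      ∫ ω, (r ⁻¹' A).indicator (fun ω' => G (a ω', b ω')) ω ∂ℙ
        = (ℙ (r ⁻¹' A)).toReal * ∫ ω, G (a ω, b ω) ∂ℙ := by
    intro A G hG hGi
    have hA : MeasurableSet (r ⁻¹' A) := hrM MeasurableSet.of_discrete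
    have hψ : Measurable (A.indicator (fun _ : Fin s → Fin n => (1 : ℝ))) :=
      measurable_of_countable _
    have hindep : IndepFun (fun ω => G (a ω, b ω))
        (fun ω => A.indicator (fun _ => (1 : ℝ)) (r ω)) ℙ := hr_ab.comp hG hψ
    have hii : Integrable (fun ω => A.indicator (fun _ => (1 : ℝ)) (r ω)) ℙ := by
      have : (fun ω => A.indicator (fun _ => (1 : ℝ)) (r ω))
          = (r ⁻¹' A).indicator (fun _ => (1 : ℝ)) := by
        funext ω; by_cases h : r ω ∈ A <;> simp [Set.indicator, h]
      rw [this]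
      exact (integrable_const (1 : ℝ)).indicator hA
    have hmul := hindep.integral_mul_eq_mul_integral hGi.aestronglyMeasurable hii.aestronglyMeasurable
    have heq : ((fun ω => G (a ω, b ω)) * fun ω => A.indicator (fun _ => (1 : ℝ)) (r ω))
        = fun ω => (r ⁻¹' A).indicator (fun ω' => G (a ω', b ω')) ω := by
      funext ω; by_cases h : r ω ∈ A <;> simp [Set.indicator, h]
    have heq2 : (fun ω => A.indicator (fun _ => (1 : ℝ)) (r ω))
        = (r ⁻¹' A).indicator (1 : Ω → ℝ) := by
      funext ω; by_cases h : r ω ∈ A <;> simp [Set.indicator, h]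
    rw [← heq, hmul, heq2, integral_indicator_one hA]
    rw [measureReal_def]
    ring
  -- measures of the relevant events
  have tR : ((n : ENNReal)⁻¹).toReal = (n : ℝ)⁻¹ := by
    rw [ENNReal.toReal_inv]; simp
  have PA1 : ∀ (i : Fin s) (j : Fin n), ℙ (r ⁻¹' {f | f i = j}) = (n : ENNReal)⁻¹ := by
    intro i j
    have : r ⁻¹' {f | f i = j} = {ω | r ω i = j} := rfl
    rw [this, hr_unif]
  have PA2 : ∀ (i i' : Fin s), i ≠ i' → ∀ (j k : Fin n),
      ℙ (r ⁻¹' {f | f i = j ∧ f i' = k}) = (n : ENNReal)⁻¹ * (n : ENNReal)⁻¹ := by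
    intro i i' hii jj kk
    have hind : IndepFun (fun ω => r ω i) (fun ω => r ω i') ℙ := hr_iid.indepFun hii
    have hseteq : r ⁻¹' {f | f i = jj ∧ f i' = kk}
        = (fun ω => r ω i) ⁻¹' {jj} ∩ (fun ω => r ω i') ⁻¹' {kk} := by
      ext ω; simp [Set.mem_preimage]
    rw [hseteq, hind.measure_inter_preimage_eq_mul _ _ (measurableSet_singleton jj)
      (measurableSet_singleton kk)]
    have h1 : (fun ω => r ω i) ⁻¹' {jj} = {ω | r ω i = jj} := rfl
    have h2 : (fun ω => r ω i') ⁻¹' {kk} = {ω | r ω i' = kk} := rfl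
    rw [h1, h2, hr_unif, hr_unif]
  -- decomposition of the pair terms
  have decompq : ∀ (i i' : Fin s),
      (fun ω => c (r ω i) ω * c (r ω i') ω)
        = fun ω => ∑ j, ∑ k, (r ⁻¹' {f | f i = j ∧ f i' = k}).indicator
            (fun ω' => c j ω' * c k ω') ω := by
    intro i i'; funext ω; symm
    have h0 : ∀ j k : Fin n, (r ⁻¹' {f | f i = j ∧ f i' = k}).indicator
        (fun ω' => c j ω' * c k ω') ω
        = if r ω i = j ∧ r ω i' = k then c j ω * c k ω else 0 := by
      intro j k
      by_cases h : r ω i = j ∧ r ω i' = k <;>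
        simp [Set.indicator, Set.mem_preimage, Set.mem_setOf_eq, h]
    simp only [h0]
    have h2 : ∀ j : Fin n, ∑ k, (if r ω i = j ∧ r ω i' = k then c j ω * c k ω else 0)
        = if r ω i = j then c j ω * c (r ω i') ω else 0 := by
      intro j
      by_cases h : r ω i = j
      · simp [h, Finset.sum_ite_eq]
      · simp [h]
    rw [Finset.sum_congr rfl fun j _ => h2 j]
    simp [Finset.sum_ite_eq]
  have intq : ∀ i i', Integrable (fun ω => c (r ω i) ω * c (r ω i') ω) ℙ := by
    intro i i'; rw [decompq i i']
    exact integrable_finset_sum _ fun j _ => integrable_finset_sum _ fun k _ =>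
      (intcc j k).indicator (hrM MeasurableSet.of_discrete)
  have Eq0 : ∀ i i', ∫ ω, c (r ω i) ω * c (r ω i') ω ∂ℙ
      = ∑ j, ∑ k, (ℙ (r ⁻¹' {f | f i = j ∧ f i' = k})).toReal
          * ∫ ω, c j ω * c k ω ∂ℙ := by
    intro i i'; rw [decompq i i']
    rw [integral_finset_sum _ (fun j _ => integrable_finset_sum _ fun k _ =>
      (intcc j k).indicator (hrM MeasurableSet.of_discrete))]
    refine Finset.sum_congr rfl fun j _ => ?_
    rw [integral_finset_sum _ (fun k _ =>
      (intcc j k).indicator (hrM MeasurableSet.of_discrete))]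
    refine Finset.sum_congr rfl fun k _ => ?_
    exact key _ (fun p => (p.1 j * p.2 j) * (p.1 k * p.2 k)) (by fun_prop) (intcc j k)
  -- decomposition of the cross terms
  have decompp : ∀ i : Fin s, (fun ω => c (r ω i) ω * T ω)
      = fun ω => ∑ j, (r ⁻¹' {f | f i = j}).indicator (fun ω' => c j ω' * T ω') ω := by
    intro i; funext ω; symm
    have h0 : ∀ j : Fin n, (r ⁻¹' {f | f i = j}).indicator (fun ω' => c j ω' * T ω') ω
        = if r ω i = j then c j ω * T ω else 0 := by
      intro j
      by_cases h : r ω i = j <;> simp [Set.indicator, Set.mem_preimage, Set.mem_setOf_eq, h]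
    simp only [h0]
    simp [Finset.sum_ite_eq]
  have intp : ∀ i, Integrable (fun ω => c (r ω i) ω * T ω) ℙ := by
    intro i; rw [decompp i]
    exact integrable_finset_sum _ fun j _ =>
      (intcT j).indicator (hrM MeasurableSet.of_discrete)
  have hsumcT : ∑ j, ∫ ω, c j ω * T ω ∂ℙ = ∫ ω, T ω ^ 2 ∂ℙ := by
    rw [← integral_finset_sum _ fun j _ => intcT j]
    congr 1; funext ω
    rw [← Finset.sum_mul, pow_two]
  have hTT : ∫ ω, T ω ^ 2 ∂ℙ = ∑ j, ∑ k, ∫ ω, c j ω * c k ω ∂ℙ := by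
    have h1 : ∫ ω, ∑ j, ∑ k, c j ω * c k ω ∂ℙ = ∑ j, ∑ k, ∫ ω, c j ω * c k ω ∂ℙ := by
      rw [integral_finset_sum _ (fun j _ => integrable_finset_sum _ fun k _ => intcc j k)]
      exact Finset.sum_congr rfl fun j _ => integral_finset_sum _ fun k _ => intcc j k
    rw [← h1]
    congr 1; funext ω
    rw [pow_two, Finset.sum_mul_sum]
  have Ep : ∀ i, ∫ ω, c (r ω i) ω * T ω ∂ℙ = (n : ℝ)⁻¹ * ∫ ω, T ω ^ 2 ∂ℙ := by
    intro i; rw [decompp i]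
    rw [integral_finset_sum _ (fun j _ => (intcT j).indicator (hrM MeasurableSet.of_discrete))]
    have h1 : ∀ j : Fin n, ∫ ω, (r ⁻¹' {f | f i = j}).indicator
        (fun ω' => c j ω' * T ω') ω ∂ℙ = (n : ℝ)⁻¹ * ∫ ω, c j ω * T ω ∂ℙ := by
      intro j
      have := key {f | f i = j} (fun p => (p.1 j * p.2 j) * (∑ k, p.1 k * p.2 k))
        (by fun_prop) (intcT j)
      rw [PA1, tR] at this
      exact this
    rw [Finset.sum_congr rfl fun j _ => h1 j, ← Finset.mul_sum, hsumcT]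
  have Eq1 : ∀ i i', ∫ ω, c (r ω i) ω * c (r ω i') ω ∂ℙ
      = if i = i' then (n : ℝ)⁻¹ * ∑ j, w j
        else (n : ℝ)⁻¹ * (n : ℝ)⁻¹ * ∫ ω, T ω ^ 2 ∂ℙ := by
    intro i i'; rw [Eq0 i i']
    by_cases h : i = i'
    · subst h
      simp only [if_true]
      have hjk : ∀ j k : Fin n, (ℙ (r ⁻¹' {f | f i = j ∧ f i = k})).toReal
          * ∫ ω, c j ω * c k ω ∂ℙ
          = if j = k then (n : ℝ)⁻¹ * ∫ ω, c j ω * c j ω ∂ℙ else 0 := by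
        intro j k
        by_cases hjk : j = k
        · subst hjk
          have hset : r ⁻¹' {f | f i = j ∧ f i = j} = {ω | r ω i = j} := by
            ext ω; simp [Set.mem_preimage]
          rw [if_pos rfl, hset, hr_unif, tR]
        · have hset : r ⁻¹' {f | f i = j ∧ f i = k} = (∅ : Set Ω) := by
            ext ω
            simp only [Set.mem_preimage, Set.mem_setOf_eq, Set.mem_empty_iff_false, iff_false]
            rintro ⟨h1, h2⟩
            exact hjk (h1.symm.trans h2)
          rw [if_neg hjk, hset]
          simp
      rw [Finset.sum_congr rfl fun j _ => Finset.sum_congr rfl fun k _ => hjk j k]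
      have h2 : ∀ j : Fin n, ∑ k, (if j = k then (n : ℝ)⁻¹ * ∫ ω, c j ω * c j ω ∂ℙ else 0)
          = (n : ℝ)⁻¹ * w j := by
        intro j
        rw [Finset.sum_ite_eq]
        have : ∫ ω, c j ω * c j ω ∂ℙ = w j := by
          rw [hw j]; congr 1; funext ω; simp [hc]; ring
        simp [this]
      rw [Finset.sum_congr rfl fun j _ => h2 j, ← Finset.mul_sum]
    · rw [if_neg h]
      have hjk : ∀ j k : Fin n, (ℙ (r ⁻¹' {f | f i = j ∧ f i' = k})).toReal
          * ∫ ω, c j ω * c k ω ∂ℙ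
          = (n : ℝ)⁻¹ * (n : ℝ)⁻¹ * ∫ ω, c j ω * c k ω ∂ℙ := by
        intro j k
        rw [PA2 i i' h, ENNReal.toReal_mul, tR]
      rw [Finset.sum_congr rfl fun j _ => Finset.sum_congr rfl fun k _ => hjk j k]
      rw [hTT]
      simp only [← Finset.mul_sum]
  -- final assembly
  set W : ℝ := ∑ j, w j with hWdef
  set I : ℝ := ∫ ω, T ω ^ 2 ∂ℙ with hIdef
  have expand : (fun ω => ((n : ℝ) / s * ∑ i, c (r ω i) ω - T ω) ^ 2)
      = fun ω => (((n : ℝ) / s) ^ 2 * (∑ i, ∑ i', c (r ω i) ω * c (r ω i') ω)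
          - 2 * ((n : ℝ) / s) * (∑ i, c (r ω i) ω * T ω)) + T ω ^ 2 := by
    funext ω
    have h1 : (∑ i, c (r ω i) ω) ^ 2 = ∑ i, ∑ i', c (r ω i) ω * c (r ω i') ω := by
      rw [pow_two, Finset.sum_mul_sum]
    have h2 : (∑ i, c (r ω i) ω) * T ω = ∑ i, c (r ω i) ω * T ω := by
      rw [Finset.sum_mul]
    rw [← h1, ← h2]; ring
  have ig1 : Integrable (fun ω => ∑ i, ∑ i', c (r ω i) ω * c (r ω i') ω) ℙ :=
    integrable_finset_sum _ fun i _ => integrable_finset_sum _ fun i' _ => intq i i'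
  have ig2 : Integrable (fun ω => ∑ i, c (r ω i) ω * T ω) ℙ :=
    integrable_finset_sum _ fun i _ => intp i
  have igA : Integrable (fun ω => ((n : ℝ) / s) ^ 2 * (∑ i, ∑ i', c (r ω i) ω * c (r ω i') ω)
      - 2 * ((n : ℝ) / s) * (∑ i, c (r ω i) ω * T ω)) ℙ :=
    (ig1.const_mul _).sub (ig2.const_mul _)
  have main : ∫ ω, ((n : ℝ) / s * ∑ i, c (r ω i) ω - T ω) ^ 2 ∂ℙ
      = ((n : ℝ) / s) ^ 2 * (∑ i, ∑ i', ∫ ω, c (r ω i) ω * c (r ω i') ω ∂ℙ)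
        - 2 * ((n : ℝ) / s) * (∑ i, ∫ ω, c (r ω i) ω * T ω ∂ℙ) + I := by
    rw [expand]
    rw [integral_add igA hTsq, integral_sub (ig1.const_mul _) (ig2.const_mul _),
        integral_const_mul, integral_const_mul,
        integral_finset_sum _ (fun i _ => integrable_finset_sum _ fun i' _ => intq i i'),
        integral_finset_sum _ (fun i _ => intp i)]
    have hq2 : ∑ i, ∫ ω, ∑ i', c (r ω i) ω * c (r ω i') ω ∂ℙ
        = ∑ i, ∑ i', ∫ ω, c (r ω i) ω * c (r ω i') ω ∂ℙ :=
      Finset.sum_congr rfl fun i _ => integral_finset_sum _ fun i' _ => intq i i'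
    rw [hq2]
  have hqv : ∑ i, ∑ i', ∫ ω, c (r ω i) ω * c (r ω i') ω ∂ℙ
      = (s : ℝ) * ((n : ℝ)⁻¹ * W) + ((s : ℝ) * s - s) * ((n : ℝ)⁻¹ * (n : ℝ)⁻¹ * I) := by
    rw [Finset.sum_congr rfl fun i _ => Finset.sum_congr rfl fun i' _ => Eq1 i i']
    exact aux_sum_ite s _ _
  have hpv : ∑ i, ∫ ω, c (r ω i) ω * T ω ∂ℙ = (s : ℝ) * ((n : ℝ)⁻¹ * I) := by
    rw [Finset.sum_congr rfl fun i _ => Ep i, Finset.sum_const]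
    simp [Finset.card_univ]
  have hnν : (n : ℝ) * ν = (n : ℝ) * W - (∑ j, Real.sqrt (w j)) ^ 2 := by
    rw [hν]; linarith [hid]
  have hμ' : μ = (∑ j, Real.sqrt (w j)) ^ 2 - I := hμ
  have final : ∫ ω, ((n : ℝ) / s * ∑ i, c (r ω i) ω - T ω) ^ 2 ∂ℙ
      = ((n : ℝ) * ν + μ) / s := by
    rw [main, hqv, hpv, hnν, hμ']
    field_simp
    ring
  exact final
end

section
/- (Standard Monte Carlo complexity, second part of the MLMC complexity theorem.) Fix an integer M ≥ 2 and positive constants c_1, c_2, c_3. Let P and P̂ be square-integrable real random variables, let 0 < ε ≤ e^{−1}, set L := ⌈ log(2 c_1^2 ε^{−2}) / log M ⌉ and N := ⌈ 2 c_2 ε^{−2} ⌉, and suppose the bias satisfies |E[P̂] − E[P]| ≤ c_1 M^{−L/2} and the variance satisfies Var[P̂] ≤ c_2 N^{−1}. Then the mean square error satisfies E[(P̂ − E[P])^2] ≤ ε^2, and the computational complexity satisfies c_3 N M^L ≤ c_6 ε^{−4}, where c_6 = 2 c_1^2 c_3 M^2 (2 c_2 + e^{−2}). -/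
open MeasureTheory ProbabilityTheory

/-- Standard Monte Carlo complexity: with
`L = ⌈log(2 c₁² ε⁻²)/log M⌉`, `N = ⌈2 c₂ ε⁻²⌉`, bias `|E[P̂] − E[P]| ≤ c₁ M^(−L/2)`
and variance `Var[P̂] ≤ c₂ N⁻¹`, the mean square error `E[(P̂ − E[P])²]` is at most
`ε²`, and the cost satisfies `c₃ N M^L ≤ c₆ ε⁻⁴` with
`c₆ = 2 c₁² c₃ M² (2 c₂ + e⁻²)`. -/
theorem standard_monte_carlo_complexity
    {Ω : Type*} [MeasureSpace Ω] [IsProbabilityMeasure (ℙ : Measure Ω)]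
    (c₁ c₂ c₃ : ℝ) (hc₁ : 0 < c₁) (hc₂ : 0 < c₂) (hc₃ : 0 < c₃)
    (M : ℕ) (hM : 2 ≤ M)
    (P Phat : Ω → ℝ) (hP : MemLp P 2 ℙ) (hPhat : MemLp Phat 2 ℙ)
    (ε : ℝ) (hε : 0 < ε) (hε' : ε ≤ Real.exp (-1))
    (L : ℕ) (hL : (L : ℤ) = ⌈Real.log (2 * c₁ ^ 2 * ε⁻¹ ^ 2) / Real.log M⌉)
    (N : ℕ) (hN : N = ⌈2 * c₂ * ε⁻¹ ^ 2⌉₊)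
    (hbias : |(∫ ω, Phat ω ∂ℙ) - ∫ ω, P ω ∂ℙ| ≤ c₁ * (M : ℝ) ^ (-(L : ℝ) / 2))
    (hvar : variance Phat ℙ ≤ c₂ * (N : ℝ)⁻¹)
    (c₆ : ℝ) (hc₆ : c₆ = 2 * c₁ ^ 2 * c₃ * (M : ℝ) ^ 2 * (2 * c₂ + Real.exp (-2))) :
    (∫ ω, (Phat ω - ∫ ω', P ω' ∂ℙ) ^ 2 ∂ℙ ≤ ε ^ 2) ∧
      c₃ * (N : ℝ) * (M : ℝ) ^ L ≤ c₆ * ε⁻¹ ^ 4 := by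
  have hε2 : (0:ℝ) < ε⁻¹ := inv_pos.mpr hε
  have hMR : (1:ℝ) < (M:ℝ) := by exact_mod_cast lt_of_lt_of_le one_lt_two hM
  have hM0 : (0:ℝ) < (M:ℝ) := by linarith
  have hlogM : 0 < Real.log M := Real.log_pos hMR
  set A : ℝ := 2 * c₁ ^ 2 * ε⁻¹ ^ 2 with hA
  have hApos : 0 < A := by positivity
  -- bounds on M^L
  have hLlow : Real.log A / Real.log M ≤ (L : ℝ) := by
    have : ((⌈Real.log A / Real.log M⌉ : ℤ) : ℝ) = (L : ℝ) := by exact_mod_cast hL.symm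
    linarith [Int.le_ceil (Real.log A / Real.log M), this]
  have hLhigh : (L : ℝ) ≤ Real.log A / Real.log M + 1 := by
    have h2 := Int.ceil_lt_add_one (Real.log A / Real.log M)
    have h3 : ((⌈Real.log A / Real.log M⌉ : ℤ) : ℝ) < Real.log A / Real.log M + 1 := by
      exact_mod_cast h2
    have h4 : ((L : ℤ) : ℝ) = (L : ℝ) := by norm_cast
    rw [hL] at h4
    linarith
  have hexpL : Real.exp ((L : ℝ) * Real.log M) = (M : ℝ) ^ L := by
    rw [Real.exp_nat_mul, Real.exp_log hM0]
  have hML_low : A ≤ (M : ℝ) ^ L := by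
    have h1 : Real.log A ≤ (L : ℝ) * Real.log M := by
      rw [div_le_iff₀ hlogM] at hLlow; linarith
    calc A = Real.exp (Real.log A) := (Real.exp_log hApos).symm
      _ ≤ Real.exp ((L : ℝ) * Real.log M) := Real.exp_le_exp.mpr h1
      _ = (M : ℝ) ^ L := hexpL
  have hML_high : (M : ℝ) ^ L ≤ A * M := by
    have h0 : (L : ℝ) - 1 ≤ Real.log A / Real.log M := by linarith
    have h1 : (L : ℝ) * Real.log M ≤ Real.log A + Real.log M := by
      have := (le_div_iff₀ hlogM).mp h0
      nlinarith
    calc (M : ℝ) ^ L = Real.exp ((L : ℝ) * Real.log M) := hexpL.symm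
      _ ≤ Real.exp (Real.log A + Real.log M) := Real.exp_le_exp.mpr h1
      _ = A * M := by rw [Real.exp_add, Real.exp_log hApos, Real.exp_log hM0]
  -- N bounds
  have hNlow : 2 * c₂ * ε⁻¹ ^ 2 ≤ (N : ℝ) := by rw [hN]; exact Nat.le_ceil _
  have hNhigh : (N : ℝ) ≤ 2 * c₂ * ε⁻¹ ^ 2 + 1 := by
    rw [hN]
    exact le_of_lt (Nat.ceil_lt_add_one (by positivity))
  have hNpos : (0:ℝ) < (N : ℝ) := lt_of_lt_of_le (by positivity) hNlow
  -- MSE decomposition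
  set μP : ℝ := ∫ ω', P ω' ∂ℙ
  have hint : Integrable Phat ℙ := hPhat.integrable one_le_two
  have hintsq : Integrable (fun ω => Phat ω ^ 2) ℙ := hPhat.integrable_sq
  have hdecomp : ∫ ω, (Phat ω - μP) ^ 2 ∂ℙ
      = variance Phat ℙ + ((∫ ω, Phat ω ∂ℙ) - μP) ^ 2 := by
    rw [variance_eq_sub hPhat]
    have h1 : ∀ ω, (Phat ω - μP) ^ 2 = (Phat ω ^ 2 - (2 * μP) * Phat ω) + μP ^ 2 := by
      intro ω; ring
    simp_rw [h1]
    have hg : Integrable (fun ω => Phat ω ^ 2 - (2 * μP) * Phat ω) ℙ :=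
      hintsq.sub (hint.const_mul _)
    rw [integral_add hg (integrable_const _),
      integral_sub hintsq (hint.const_mul _), integral_const_mul, integral_const]
    simp only [measure_univ, probReal_univ, ENNReal.toReal_one, smul_eq_mul, one_mul, Pi.pow_apply]
    ring
  -- bias squared bound
  have hbias2 : ((∫ ω, Phat ω ∂ℙ) - μP) ^ 2 ≤ c₁ ^ 2 * ((M : ℝ) ^ L)⁻¹ := by
    have hab := abs_le.mp hbias
    have hsq0 : ((M:ℝ) ^ (-(L : ℝ) / 2)) ^ 2 = ((M : ℝ) ^ L)⁻¹ := by
      rw [← Real.rpow_natCast ((M:ℝ) ^ (-(L : ℝ) / 2)) 2, ← Real.rpow_mul hM0.le]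
      rw [show -(L : ℝ) / 2 * ((2:ℕ):ℝ) = -(L:ℝ) by push_cast; ring]
      rw [Real.rpow_neg hM0.le, Real.rpow_natCast]
    have := sq_le_sq' hab.1 hab.2
    rw [mul_pow, hsq0] at this
    exact this
  have hbias3 : ((∫ ω, Phat ω ∂ℙ) - μP) ^ 2 ≤ ε ^ 2 / 2 := by
    have h1 : c₁ ^ 2 * ((M : ℝ) ^ L)⁻¹ ≤ c₁ ^ 2 * A⁻¹ := by
      apply mul_le_mul_of_nonneg_left _ (by positivity)
      exact inv_anti₀ hApos hML_low
    have h2 : c₁ ^ 2 * A⁻¹ = ε ^ 2 / 2 := by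
      rw [hA]; field_simp
    linarith
  have hvar2 : variance Phat ℙ ≤ ε ^ 2 / 2 := by
    have h1 : c₂ * (N : ℝ)⁻¹ ≤ c₂ * (2 * c₂ * ε⁻¹ ^ 2)⁻¹ := by
      apply mul_le_mul_of_nonneg_left _ hc₂.le
      exact inv_anti₀ (by positivity) hNlow
    have h2 : c₂ * (2 * c₂ * ε⁻¹ ^ 2)⁻¹ = ε ^ 2 / 2 := by
      field_simp
    linarith
  constructor
  · rw [hdecomp]; linarith
  · -- cost bound
    have hεe : ε⁻¹ ^ 2 ≤ Real.exp (-2) * ε⁻¹ ^ 4 := by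
      have h1 : ε ^ 2 ≤ Real.exp (-1) ^ 2 := by
        apply pow_le_pow_left₀ hε.le hε'
      have h2 : Real.exp (-1) ^ 2 = Real.exp (-2) := by
        rw [← Real.exp_nat_mul]; norm_num
      have h3 : ε⁻¹ ^ 2 = ε ^ 2 * ε⁻¹ ^ 4 := by
        field_simp
      rw [h3, ← h2]
      exact mul_le_mul_of_nonneg_right h1 (by positivity)
    have key : c₃ * (N : ℝ) * (M : ℝ) ^ L ≤
        c₃ * (2 * c₂ * ε⁻¹ ^ 2 + 1) * (A * M) := by
      apply mul_le_mul (mul_le_mul_of_nonneg_left hNhigh hc₃.le) hML_high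
        (by positivity) (by positivity)
    have expand : c₃ * (2 * c₂ * ε⁻¹ ^ 2 + 1) * (A * M)
        = 2 * c₁ ^ 2 * c₃ * (M : ℝ) * (2 * c₂ * ε⁻¹ ^ 4 + ε⁻¹ ^ 2) := by
      rw [hA]; ring
    have hX : 2 * c₂ * ε⁻¹ ^ 4 + ε⁻¹ ^ 2 ≤ (2 * c₂ + Real.exp (-2)) * ε⁻¹ ^ 4 := by
      have : (2 * c₂ + Real.exp (-2)) * ε⁻¹ ^ 4
          = 2 * c₂ * ε⁻¹ ^ 4 + Real.exp (-2) * ε⁻¹ ^ 4 := by ring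
      linarith
    have hMsq : 2 * c₁ ^ 2 * c₃ * (M : ℝ) ≤ 2 * c₁ ^ 2 * c₃ * (M : ℝ) ^ 2 := by
      have h5 : (M : ℝ) ≤ (M : ℝ) ^ 2 := le_self_pow₀ hMR.le two_ne_zero
      exact mul_le_mul_of_nonneg_left h5 (by positivity)
    have final : 2 * c₁ ^ 2 * c₃ * (M : ℝ) * (2 * c₂ * ε⁻¹ ^ 4 + ε⁻¹ ^ 2)
        ≤ c₆ * ε⁻¹ ^ 4 := by
      calc 2 * c₁ ^ 2 * c₃ * (M : ℝ) * (2 * c₂ * ε⁻¹ ^ 4 + ε⁻¹ ^ 2)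
          ≤ 2 * c₁ ^ 2 * c₃ * (M : ℝ) * ((2 * c₂ + Real.exp (-2)) * ε⁻¹ ^ 4) :=
            mul_le_mul_of_nonneg_left hX (by positivity)
        _ ≤ 2 * c₁ ^ 2 * c₃ * (M : ℝ) ^ 2 * ((2 * c₂ + Real.exp (-2)) * ε⁻¹ ^ 4) := by
            apply mul_le_mul_of_nonneg_right hMsq
            positivity
        _ = c₆ * ε⁻¹ ^ 4 := by rw [hc₆]; ring
    linarith
end

section
/- Let a, b ∈ ℝ^n be random vectors whose 2n coordinates are mutually independent with finite nonzero moments w_j = E[a_j^2 b_j^2] and E[(aᵀb)^2] < ∞, let f : ℝ → ℝ be Lipschitz with constant C_f, and let l ≥ 0 be an integer. Let X_l be the sketched inner product of a and b using M^l i.i.d. uniformly sampled indices (sampling probability ξ^u_j = 1/n), for an integer M ≥ 2. Then the squared bias satisfies ( E[f(aᵀb)] − E[f(X_l)] )^2 ≤ C_f^2 M^{−l} (n·ν + μ), where μ = (Σ_{j=1}^n √(w_j))^2 − E[(aᵀb)^2] and ν = Σ_{i=1}^n ( √(w_i) − (1/n) Σ_{j=1}^n √(w_j) )^2. -/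
open MeasureTheory ProbabilityTheory

lemma aux_int_mul {Ω : Type*} [MeasureSpace Ω] {f g : Ω → ℝ}
    (hf : AEStronglyMeasurable f ℙ) (hg : AEStronglyMeasurable g ℙ)
    (hf2 : Integrable (fun ω => f ω ^ 2) ℙ) (hg2 : Integrable (fun ω => g ω ^ 2) ℙ) :
    Integrable (fun ω => f ω * g ω) ℙ := by
  refine Integrable.mono' (((hf2.add hg2)).const_mul (1/2 : ℝ)) (hf.mul hg)
    (Filter.Eventually.of_forall fun ω => ?_)
  have h := two_mul_le_add_sq (|f ω|) (|g ω|)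
  rw [Real.norm_eq_abs, abs_mul]
  simp only [Pi.add_apply]
  nlinarith [sq_abs (f ω), sq_abs (g ω)]

/-- Squared bias of a Lipschitz functional of the uniformly sketched
inner product with `M^l` sampled indices:
`(E[f(aᵀb)] − E[f(X_l)])² ≤ C_f² M^(−l) (n ν + μ)`. -/
theorem lipschitz_sketch_bias_inner_product
    {Ω : Type*} [MeasureSpace Ω] [IsProbabilityMeasure (ℙ : Measure Ω)]
    (n : ℕ) (hn : 0 < n)
    (a b : Ω → Fin n → ℝ)
    (ha : ∀ j, Measurable fun ω => a ω j) (hb : ∀ j, Measurable fun ω => b ω j)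
    -- the 2n coordinates of a and b are mutually independent
    (hab_indep : iIndepFun
      (Sum.elim (fun j ω => a ω j) (fun j ω => b ω j)) ℙ)
    (w : Fin n → ℝ) (hw : ∀ j, w j = ∫ ω, (a ω j) ^ 2 * (b ω j) ^ 2 ∂ℙ)
    (hw_int : ∀ j, Integrable (fun ω => (a ω j) ^ 2 * (b ω j) ^ 2) ℙ)
    (hw_pos : ∀ j, 0 < w j)
    (hab_sq_int : Integrable (fun ω => (∑ j, a ω j * b ω j) ^ 2) ℙ)
    -- f Lipschitz with constant C_f
    (f : ℝ → ℝ) (Cf : ℝ) (hf : ∀ x y, |f x - f y| ≤ Cf * |x - y|)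
    (M l : ℕ) (hM : 2 ≤ M)
    -- M^l i.i.d. indices, each uniform on {1,…,n}, independent of (a, b)
    (r : Ω → Fin (M ^ l) → Fin n) (hr : ∀ i, Measurable fun ω => r ω i)
    (hr_iid : iIndepFun
      (fun i ω => r ω i) ℙ)
    (hr_unif : ∀ i j, ℙ {ω | r ω i = j} = (n : ENNReal)⁻¹)
    (hr_ab : IndepFun (fun ω => (a ω, b ω)) r ℙ)
    (μ ν : ℝ)
    (hμ : μ = (∑ j, Real.sqrt (w j)) ^ 2 - ∫ ω, (∑ j, a ω j * b ω j) ^ 2 ∂ℙ)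
    (hν : ν = ∑ i, (Real.sqrt (w i) - (1 / (n : ℝ)) * ∑ j, Real.sqrt (w j)) ^ 2) :
    ((∫ ω, f (∑ j, a ω j * b ω j) ∂ℙ) -
        ∫ ω, f ((n : ℝ) / (M ^ l : ℝ) * ∑ i, a ω (r ω i) * b ω (r ω i)) ∂ℙ) ^ 2 ≤
      Cf ^ 2 * ((M : ℝ) ^ l)⁻¹ * ((n : ℝ) * ν + μ) := by
  classical
  -- basic notation
  set g : Fin n → Ω → ℝ := fun k ω => a ω k * b ω k with hg_def
  set S : Ω → ℝ := fun ω => ∑ k, a ω k * b ω k with hS_def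
  set c : ℝ := (n : ℝ) / (M ^ l : ℝ) with hc_def
  set T : Fin (M ^ l) → Ω → ℝ := fun i ω => a ω (r ω i) * b ω (r ω i) with hT_def
  set X : Ω → ℝ := fun ω => c * ∑ i, T i ω with hX_def
  set χ : Fin (M ^ l) → Fin n → Ω → ℝ :=
    fun i k ω => if r ω i = k then (1 : ℝ) else 0 with hχ_def
  have hn' : (0:ℝ) < n := by exact_mod_cast hn
  have hMl_pos : (0:ℝ) < (M:ℝ) ^ l := by positivity
  have hs_card : (Finset.univ : Finset (Fin (M ^ l))).card = M ^ l := by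
    simp
  -- measurability
  have hgm : ∀ k, Measurable (g k) := fun k => (ha k).mul (hb k)
  have hSm : Measurable S := by
    apply Finset.measurable_sum
    intro k _
    exact (ha k).mul (hb k)
  have habm : Measurable fun ω => (a ω, b ω) :=
    (measurable_pi_lambda a ha).prod (measurable_pi_lambda b hb)
  have hrm : Measurable r := measurable_pi_lambda r hr
  have hχm : ∀ i k, Measurable (χ i k) := by
    intro i k
    exact Measurable.ite ((hr i) (measurableSet_singleton k)) measurable_const measurable_const
  have hχ_bdd : ∀ i k, ∃ C, ∀ ω, ‖χ i k ω‖ ≤ C := by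
    intro i k
    refine ⟨1, fun ω => ?_⟩
    simp only [hχ_def]
    split <;> simp
  -- L² facts
  have hg2 : ∀ k, Integrable (fun ω => g k ω ^ 2) ℙ := by
    intro k
    simpa [hg_def, mul_pow] using hw_int k
  have hS2 : Integrable (fun ω => S ω ^ 2) ℙ := hab_sq_int
  have hS_mem2 : MemLp S 2 ℙ :=
    (memLp_two_iff_integrable_sq hSm.aestronglyMeasurable).2 hS2
  have hS_int : Integrable S ℙ := hS_mem2.integrable one_le_two
  have hg_int : ∀ k, Integrable (g k) ℙ := fun k =>
    (((memLp_two_iff_integrable_sq (hgm k).aestronglyMeasurable).2 (hg2 k)).integrable one_le_two)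
  have hSg_int : ∀ k, Integrable (fun ω => S ω * g k ω) ℙ := fun k =>
    aux_int_mul hSm.aestronglyMeasurable (hgm k).aestronglyMeasurable hS2 (hg2 k)
  have hgg_int : ∀ k k', Integrable (fun ω => g k ω * g k' ω) ℙ := fun k k' =>
    aux_int_mul (hgm k).aestronglyMeasurable (hgm k').aestronglyMeasurable (hg2 k) (hg2 k')
  -- integral of χ
  have hχ_int : ∀ i k, ∫ ω, χ i k ω ∂ℙ = (n : ℝ)⁻¹ := by
    intro i k
    have hset : MeasurableSet {ω | r ω i = k} := (hr i) (measurableSet_singleton k)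
    have : (fun ω => χ i k ω) = Set.indicator {ω | r ω i = k} (fun _ => (1:ℝ)) := by
      funext ω
      by_cases h : r ω i = k <;> simp [hχ_def, h, Set.indicator_apply, Set.mem_setOf_eq]
    rw [this, integral_indicator_const (1:ℝ) hset, measureReal_def, hr_unif i k]
    simp
  -- key: independence of χ and functions of (a,b)
  have keyA : ∀ (i : Fin (M ^ l)) (k : Fin n) (G : Ω → ℝ)
      (ψ : (Fin n → ℝ) × (Fin n → ℝ) → ℝ), Measurable ψ → (∀ ω, G ω = ψ (a ω, b ω)) →
      ∫ ω, χ i k ω * G ω ∂ℙ = (n : ℝ)⁻¹ * ∫ ω, G ω ∂ℙ := by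
    intro i k G ψ hψ hG
    have hφ : Measurable fun v : Fin (M ^ l) → Fin n => if v i = k then (1:ℝ) else 0 :=
      (Measurable.of_discrete (f := fun x : Fin n => if x = k then (1:ℝ) else 0)).comp
        (measurable_pi_apply i)
    have hGm : Measurable G := by
      have : G = fun ω => ψ (a ω, b ω) := funext hG
      rw [this]; exact hψ.comp habm
    have h1 : IndepFun (χ i k) G ℙ := by
      have := (hr_ab.symm.comp hφ hψ)
      have he1 : ((fun v : Fin (M ^ l) → Fin n => if v i = k then (1:ℝ) else 0) ∘ r) = χ i k := rfl
      have he2 : (ψ ∘ fun ω => (a ω, b ω)) = G := by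
        funext ω; exact (hG ω).symm
      rwa [he1, he2] at this
    have h2 := h1.integral_mul_eq_mul_integral (hχm i k).aestronglyMeasurable hGm.aestronglyMeasurable
    have h3 : (fun ω => χ i k ω * G ω) = χ i k * G := rfl
    rw [h3, h2, hχ_int i k]
  have keyB : ∀ (i i' : Fin (M ^ l)), i ≠ i' → ∀ (k k' : Fin n) (G : Ω → ℝ)
      (ψ : (Fin n → ℝ) × (Fin n → ℝ) → ℝ), Measurable ψ → (∀ ω, G ω = ψ (a ω, b ω)) →
      ∫ ω, (χ i k ω * χ i' k' ω) * G ω ∂ℙ = (n : ℝ)⁻¹ * (n : ℝ)⁻¹ * ∫ ω, G ω ∂ℙ := by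
    intro i i' hii' k k' G ψ hψ hG
    have hφ : Measurable fun v : Fin (M ^ l) → Fin n =>
        (if v i = k then (1:ℝ) else 0) * (if v i' = k' then (1:ℝ) else 0) := by
      apply Measurable.mul
      · exact (Measurable.of_discrete (f := fun x : Fin n => if x = k then (1:ℝ) else 0)).comp
          (measurable_pi_apply i)
      · exact (Measurable.of_discrete (f := fun x : Fin n => if x = k' then (1:ℝ) else 0)).comp
          (measurable_pi_apply i')
    have hGm : Measurable G := by
      have : G = fun ω => ψ (a ω, b ω) := funext hG
      rw [this]; exact hψ.comp habm
    have h1 : IndepFun (fun ω => χ i k ω * χ i' k' ω) G ℙ := by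
      have := (hr_ab.symm.comp hφ hψ)
      have he2 : (ψ ∘ fun ω => (a ω, b ω)) = G := by funext ω; exact (hG ω).symm
      rw [he2] at this
      exact this
    have h2 := h1.integral_mul_eq_mul_integral ((hχm i k).mul (hχm i' k')).aestronglyMeasurable
      hGm.aestronglyMeasurable
    have h3 : (fun ω => (χ i k ω * χ i' k' ω) * G ω) = (fun ω => χ i k ω * χ i' k' ω) * G := rfl
    -- ∫ χ i k * χ i' k' = n⁻¹ * n⁻¹
    have hχχ : ∫ ω, χ i k ω * χ i' k' ω ∂ℙ = (n : ℝ)⁻¹ * (n : ℝ)⁻¹ := by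
      have hind : IndepFun (χ i k) (χ i' k') ℙ := by
        have hpair := hr_iid.indepFun hii'
        have hφ1 : Measurable fun v : Fin n => if v = k then (1:ℝ) else 0 :=
          Measurable.of_discrete
        have hφ2 : Measurable fun v : Fin n => if v = k' then (1:ℝ) else 0 :=
          Measurable.of_discrete
        exact hpair.comp hφ1 hφ2
      have := hind.integral_mul_eq_mul_integral (hχm i k).aestronglyMeasurable (hχm i' k').aestronglyMeasurable
      have h4 : (fun ω => χ i k ω * χ i' k' ω) = χ i k * χ i' k' := rfl
      rw [h4, this, hχ_int, hχ_int]
    rw [h3, h2]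
    have h5 : (fun ω => χ i k ω * χ i' k' ω) = χ i k * χ i' k' := rfl
    rw [← h5] at *
    rw [hχχ]
  -- abbreviations for the second moments
  set E2 : ℝ := ∫ ω, S ω ^ 2 ∂ℙ with hE2_def
  set W : ℝ := ∑ k, w k with hW_def
  have hw' : ∀ k, ∫ ω, g k ω ^ 2 ∂ℙ = w k := by
    intro k
    rw [hw k]
    congr 1
    funext ω
    simp [hg_def, mul_pow]
  -- pointwise expansions via the indicator functions χ
  have hT_eq : ∀ i ω, T i ω = ∑ k, χ i k ω * g k ω := by
    intro i ω
    simp [hT_def, hχ_def, hg_def, ite_mul, one_mul, zero_mul, Finset.sum_ite_eq]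
  have hST_eq : ∀ i ω, S ω * T i ω = ∑ k, χ i k ω * (S ω * g k ω) := by
    intro i ω
    rw [hT_eq i ω, Finset.mul_sum]
    refine Finset.sum_congr rfl fun k _ => by ring
  have hT2_eq : ∀ i ω, T i ω ^ 2 = ∑ k, χ i k ω * g k ω ^ 2 := by
    intro i ω
    simp [hT_def, hχ_def, hg_def, ite_mul, one_mul, zero_mul, Finset.sum_ite_eq, mul_pow]
  have hTT_eq : ∀ i i' ω, T i ω * T i' ω =
      ∑ k, ∑ k', (χ i k ω * χ i' k' ω) * (g k ω * g k' ω) := by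
    intro i i' ω
    rw [hT_eq i ω, hT_eq i' ω, Finset.sum_mul_sum]
    refine Finset.sum_congr rfl fun k _ => Finset.sum_congr rfl fun k' _ => by ring
  -- integrability of the pieces
  have hSTχ_int : ∀ i k, Integrable (fun ω => χ i k ω * (S ω * g k ω)) ℙ := fun i k =>
    (hSg_int k).bdd_mul (hχm i k).aestronglyMeasurable
      (Filter.Eventually.of_forall (hχ_bdd i k).choose_spec)
  have hTχ_int : ∀ i k, Integrable (fun ω => χ i k ω * g k ω) ℙ := fun i k =>
    (hg_int k).bdd_mul (hχm i k).aestronglyMeasurable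
      (Filter.Eventually.of_forall (hχ_bdd i k).choose_spec)
  have hT2χ_int : ∀ i k, Integrable (fun ω => χ i k ω * g k ω ^ 2) ℙ := fun i k =>
    (hg2 k).bdd_mul (hχm i k).aestronglyMeasurable
      (Filter.Eventually.of_forall (hχ_bdd i k).choose_spec)
  have hTTχ_int : ∀ i i' k k', Integrable (fun ω => (χ i k ω * χ i' k' ω) * (g k ω * g k' ω)) ℙ :=
    fun i i' k k' => (hgg_int k k').bdd_mul ((hχm i k).mul (hχm i' k')).aestronglyMeasurable
      (c := 1) (by
        obtain ⟨C1, h1⟩ := hχ_bdd i k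
        obtain ⟨C2, h2⟩ := hχ_bdd i' k'
        exact Filter.Eventually.of_forall fun ω => by
          simp only [hχ_def, Real.norm_eq_abs]
          split <;> split <;> norm_num)
  have hT_int : ∀ i, Integrable (T i) ℙ := by
    intro i
    have : Integrable (fun ω => ∑ k, χ i k ω * g k ω) ℙ :=
      integrable_finset_sum _ fun k _ => hTχ_int i k
    exact this.congr (Filter.Eventually.of_forall fun ω => (hT_eq i ω).symm)
  have hST_int : ∀ i, Integrable (fun ω => S ω * T i ω) ℙ := by
    intro i
    have : Integrable (fun ω => ∑ k, χ i k ω * (S ω * g k ω)) ℙ :=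
      integrable_finset_sum _ fun k _ => hSTχ_int i k
    exact this.congr (Filter.Eventually.of_forall fun ω => (hST_eq i ω).symm)
  have hT2_int : ∀ i, Integrable (fun ω => T i ω ^ 2) ℙ := by
    intro i
    have : Integrable (fun ω => ∑ k, χ i k ω * g k ω ^ 2) ℙ :=
      integrable_finset_sum _ fun k _ => hT2χ_int i k
    exact this.congr (Filter.Eventually.of_forall fun ω => (hT2_eq i ω).symm)
  have hTT_int : ∀ i i', Integrable (fun ω => T i ω * T i' ω) ℙ := by
    intro i i'
    have : Integrable (fun ω => ∑ k, ∑ k', (χ i k ω * χ i' k' ω) * (g k ω * g k' ω)) ℙ :=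
      integrable_finset_sum _ fun k _ => integrable_finset_sum _ fun k' _ => hTTχ_int i i' k k'
    exact this.congr (Filter.Eventually.of_forall fun ω => (hTT_eq i i' ω).symm)
  -- the three moment computations
  have hψS : Measurable fun p : (Fin n → ℝ) × (Fin n → ℝ) => ∑ j, p.1 j * p.2 j := by
    apply Finset.measurable_sum
    intro j _
    exact ((measurable_pi_apply j).comp measurable_fst).mul
      ((measurable_pi_apply j).comp measurable_snd)
  have hψg : ∀ k, Measurable fun p : (Fin n → ℝ) × (Fin n → ℝ) => p.1 k * p.2 k := fun k =>
    ((measurable_pi_apply k).comp measurable_fst).mul ((measurable_pi_apply k).comp measurable_snd)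
  have momST : ∀ i, ∫ ω, S ω * T i ω ∂ℙ = (n : ℝ)⁻¹ * E2 := by
    intro i
    calc ∫ ω, S ω * T i ω ∂ℙ = ∫ ω, ∑ k, χ i k ω * (S ω * g k ω) ∂ℙ := by
          exact integral_congr_ae (Filter.Eventually.of_forall fun ω => hST_eq i ω)
      _ = ∑ k, ∫ ω, χ i k ω * (S ω * g k ω) ∂ℙ :=
          integral_finset_sum _ fun k _ => hSTχ_int i k
      _ = ∑ k, (n : ℝ)⁻¹ * ∫ ω, S ω * g k ω ∂ℙ := by
          refine Finset.sum_congr rfl fun k _ => ?_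
          exact keyA i k _ (fun p => (∑ j, p.1 j * p.2 j) * (p.1 k * p.2 k))
            (hψS.mul (hψg k)) (fun ω => rfl)
      _ = (n : ℝ)⁻¹ * ∑ k, ∫ ω, S ω * g k ω ∂ℙ := by rw [Finset.mul_sum]
      _ = (n : ℝ)⁻¹ * E2 := by
          rw [← integral_finset_sum _ fun k _ => hSg_int k]
          congr 1
          refine integral_congr_ae (Filter.Eventually.of_forall fun ω => ?_)
          show ∑ k, S ω * g k ω = S ω ^ 2
          rw [← Finset.mul_sum]
          simp [hS_def, hg_def, sq]
  have momT2 : ∀ i, ∫ ω, T i ω ^ 2 ∂ℙ = (n : ℝ)⁻¹ * W := by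
    intro i
    calc ∫ ω, T i ω ^ 2 ∂ℙ = ∫ ω, ∑ k, χ i k ω * g k ω ^ 2 ∂ℙ :=
          integral_congr_ae (Filter.Eventually.of_forall fun ω => hT2_eq i ω)
      _ = ∑ k, ∫ ω, χ i k ω * g k ω ^ 2 ∂ℙ := integral_finset_sum _ fun k _ => hT2χ_int i k
      _ = ∑ k, (n : ℝ)⁻¹ * ∫ ω, g k ω ^ 2 ∂ℙ := by
          refine Finset.sum_congr rfl fun k _ => ?_
          exact keyA i k _ (fun p => (p.1 k * p.2 k) ^ 2) ((hψg k).pow_const 2) (fun ω => rfl)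
      _ = (n : ℝ)⁻¹ * W := by
          rw [Finset.mul_sum]
          exact Finset.sum_congr rfl fun k _ => by rw [hw' k]
  have momTT : ∀ i i', i ≠ i' → ∫ ω, T i ω * T i' ω ∂ℙ = (n : ℝ)⁻¹ * (n : ℝ)⁻¹ * E2 := by
    intro i i' hii'
    calc ∫ ω, T i ω * T i' ω ∂ℙ
        = ∫ ω, ∑ k, ∑ k', (χ i k ω * χ i' k' ω) * (g k ω * g k' ω) ∂ℙ :=
          integral_congr_ae (Filter.Eventually.of_forall fun ω => hTT_eq i i' ω)
      _ = ∑ k, ∑ k', ∫ ω, (χ i k ω * χ i' k' ω) * (g k ω * g k' ω) ∂ℙ := by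
          rw [integral_finset_sum _ fun k _ => integrable_finset_sum _ fun k' _ =>
            hTTχ_int i i' k k']
          exact Finset.sum_congr rfl fun k _ =>
            integral_finset_sum _ fun k' _ => hTTχ_int i i' k k'
      _ = ∑ k, ∑ k', (n : ℝ)⁻¹ * (n : ℝ)⁻¹ * ∫ ω, g k ω * g k' ω ∂ℙ := by
          refine Finset.sum_congr rfl fun k _ => Finset.sum_congr rfl fun k' _ => ?_
          exact keyB i i' hii' k k' _ (fun p => (p.1 k * p.2 k) * (p.1 k' * p.2 k'))
            ((hψg k).mul (hψg k')) (fun ω => rfl)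
      _ = (n : ℝ)⁻¹ * (n : ℝ)⁻¹ * ∑ k, ∑ k', ∫ ω, g k ω * g k' ω ∂ℙ := by
          rw [Finset.mul_sum]
          exact Finset.sum_congr rfl fun k _ => by rw [Finset.mul_sum]
      _ = (n : ℝ)⁻¹ * (n : ℝ)⁻¹ * E2 := by
          congr 1
          calc ∑ k, ∑ k', ∫ ω, g k ω * g k' ω ∂ℙ
              = ∑ k, ∫ ω, ∑ k', g k ω * g k' ω ∂ℙ :=
                Finset.sum_congr rfl fun k _ =>
                  (integral_finset_sum _ fun k' _ => hgg_int k k').symm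
            _ = ∫ ω, ∑ k, ∑ k', g k ω * g k' ω ∂ℙ :=
                (integral_finset_sum _ fun k _ =>
                  integrable_finset_sum _ fun k' _ => hgg_int k k').symm
            _ = E2 := by
                refine integral_congr_ae (Filter.Eventually.of_forall fun ω => ?_)
                show ∑ k, ∑ k', g k ω * g k' ω = S ω ^ 2
                rw [← Finset.sum_mul_sum]
                simp [hS_def, hg_def, sq]
  -- pointwise expansion of the squared error
  have hD2_eq : ∀ ω, (S ω - X ω) ^ 2 =
      S ω ^ 2 - 2 * c * (∑ i, S ω * T i ω) + c ^ 2 * ∑ i, ∑ i', T i ω * T i' ω := by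
    intro ω
    have h1 : ∑ i, ∑ i', T i ω * T i' ω = (∑ i, T i ω) * (∑ i', T i' ω) :=
      (Finset.sum_mul_sum _ _ _ _).symm
    have h2 : ∑ i, S ω * T i ω = S ω * ∑ i, T i ω := (Finset.mul_sum _ _ _).symm
    rw [h1, h2]
    show (S ω - c * ∑ i, T i ω) ^ 2 = _
    ring
  have hsum_ST_int : Integrable (fun ω => ∑ i, S ω * T i ω) ℙ :=
    integrable_finset_sum _ fun i _ => hST_int i
  have hsum_TT_int : Integrable (fun ω => ∑ i, ∑ i', T i ω * T i' ω) ℙ :=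
    integrable_finset_sum _ fun i _ => integrable_finset_sum _ fun i' _ => hTT_int i i'
  have hD2_int : Integrable (fun ω => (S ω - X ω) ^ 2) ℙ := by
    have h : Integrable (fun ω => S ω ^ 2 - 2 * c * (∑ i, S ω * T i ω)
        + c ^ 2 * ∑ i, ∑ i', T i ω * T i' ω) ℙ :=
      (hS2.sub (hsum_ST_int.const_mul _)).add (hsum_TT_int.const_mul _)
    exact h.congr (Filter.Eventually.of_forall fun ω => (hD2_eq ω).symm)
  -- row sums of the second-moment matrix
  have hrow : ∀ i : Fin (M ^ l), ∑ i', ∫ ω, T i ω * T i' ω ∂ℙ =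
      (M:ℝ)^l * ((n:ℝ)⁻¹ * (n:ℝ)⁻¹ * E2) + ((n:ℝ)⁻¹ * W - (n:ℝ)⁻¹ * (n:ℝ)⁻¹ * E2) := by
    intro i
    have hval : ∀ i', ∫ ω, T i ω * T i' ω ∂ℙ =
        ((n:ℝ)⁻¹ * (n:ℝ)⁻¹ * E2) +
          (if i' = i then (n:ℝ)⁻¹ * W - (n:ℝ)⁻¹ * (n:ℝ)⁻¹ * E2 else 0) := by
      intro i'
      by_cases h : i' = i
      · subst h
        rw [if_pos rfl]
        have : ∫ ω, T i' ω * T i' ω ∂ℙ = ∫ ω, T i' ω ^ 2 ∂ℙ :=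
          integral_congr_ae (Filter.Eventually.of_forall fun ω => (sq (T i' ω)).symm)
        rw [this, momT2]
        ring
      · rw [if_neg h, momTT i i' (fun e => h e.symm)]
        ring
    rw [Finset.sum_congr rfl fun i' _ => hval i', Finset.sum_add_distrib,
      Finset.sum_const, Finset.card_univ, Fintype.card_fin, nsmul_eq_mul,
      Finset.sum_ite_eq' Finset.univ i
        (fun _ => (n:ℝ)⁻¹ * W - (n:ℝ)⁻¹ * (n:ℝ)⁻¹ * E2),
      if_pos (Finset.mem_univ i)]
    push_cast
    ring
  -- value of the mean squared error
  have hD2_val : ∫ ω, (S ω - X ω) ^ 2 ∂ℙ = ((n:ℝ) * W - E2) / (M:ℝ)^l := by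
    have hI1 : Integrable (fun ω => S ω ^ 2 - 2 * c * (∑ i, S ω * T i ω)) ℙ :=
      hS2.sub (hsum_ST_int.const_mul _)
    have hI2 : Integrable (fun ω => c ^ 2 * ∑ i, ∑ i', T i ω * T i' ω) ℙ :=
      hsum_TT_int.const_mul _
    have hI3 : Integrable (fun ω => 2 * c * (∑ i, S ω * T i ω)) ℙ :=
      hsum_ST_int.const_mul _
    calc ∫ ω, (S ω - X ω) ^ 2 ∂ℙ
        = ∫ ω, (S ω ^ 2 - 2 * c * (∑ i, S ω * T i ω)
            + c ^ 2 * ∑ i, ∑ i', T i ω * T i' ω) ∂ℙ :=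
          integral_congr_ae (Filter.Eventually.of_forall hD2_eq)
      _ = (∫ ω, S ω ^ 2 ∂ℙ) - 2 * c * ∫ ω, (∑ i, S ω * T i ω) ∂ℙ
            + c ^ 2 * ∫ ω, (∑ i, ∑ i', T i ω * T i' ω) ∂ℙ := by
          rw [integral_add hI1 hI2, integral_sub hS2 hI3, integral_const_mul,
            integral_const_mul]
      _ = E2 - 2 * c * ((M:ℝ)^l * ((n:ℝ)⁻¹ * E2))
            + c ^ 2 * ((M:ℝ)^l * ((M:ℝ)^l * ((n:ℝ)⁻¹ * (n:ℝ)⁻¹ * E2)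
              + ((n:ℝ)⁻¹ * W - (n:ℝ)⁻¹ * (n:ℝ)⁻¹ * E2))) := by
          congr 1
          · congr 1
            rw [integral_finset_sum _ fun i _ => hST_int i,
              Finset.sum_congr rfl fun i _ => momST i, Finset.sum_const, Finset.card_univ,
              Fintype.card_fin, nsmul_eq_mul]
            push_cast
            ring
          · congr 1
            rw [integral_finset_sum _ fun i _ => integrable_finset_sum _ fun i' _ => hTT_int i i']
            rw [Finset.sum_congr rfl fun i _ => by
              rw [integral_finset_sum _ fun i' _ => hTT_int i i', hrow i]]
            rw [Finset.sum_const, Finset.card_univ, Fintype.card_fin, nsmul_eq_mul]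
            push_cast
            ring
      _ = ((n:ℝ) * W - E2) / (M:ℝ)^l := by
          rw [hc_def]
          have hn0 : (n:ℝ) ≠ 0 := ne_of_gt hn'
          have hM0 : (M:ℝ)^l ≠ 0 := ne_of_gt hMl_pos
          field_simp
          ring
  -- algebra: n ν + μ = n W - E2
  have halg : (n:ℝ) * ν + μ = (n:ℝ) * W - E2 := by
    have hQ : ∀ i : Fin n, Real.sqrt (w i) ^ 2 = w i := fun i => Real.sq_sqrt (hw_pos i).le
    have hn0 : (n:ℝ) ≠ 0 := ne_of_gt hn'
    have hexp : ∑ i, (Real.sqrt (w i) - 1/(n:ℝ) * ∑ j, Real.sqrt (w j)) ^ 2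
        = W - (∑ j, Real.sqrt (w j)) ^ 2 / (n:ℝ) := by
      have hterm : ∀ i : Fin n, (Real.sqrt (w i) - 1/(n:ℝ) * ∑ j, Real.sqrt (w j)) ^ 2
          = w i - (2/(n:ℝ) * ∑ j, Real.sqrt (w j)) * Real.sqrt (w i)
            + (1/(n:ℝ) * ∑ j, Real.sqrt (w j)) ^ 2 := by
        intro i
        rw [sub_sq, hQ i]
        ring
      rw [Finset.sum_congr rfl fun i _ => hterm i, Finset.sum_add_distrib,
        Finset.sum_sub_distrib, ← Finset.mul_sum, Finset.sum_const, Finset.card_univ,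
        Fintype.card_fin, nsmul_eq_mul, hW_def]
      field_simp
      ring
    rw [hμ, hν, hexp]
    field_simp
    ring
  -- measurability and integrability of X, f∘S, f∘X
  have hTm : ∀ i, Measurable (T i) := by
    intro i
    have hm : Measurable (fun ω => ∑ k, χ i k ω * g k ω) :=
      Finset.measurable_sum _ fun k _ => (hχm i k).mul (hgm k)
    rw [show T i = fun ω => ∑ k, χ i k ω * g k ω from funext (hT_eq i)]
    exact hm
  have hXm : Measurable X := by
    apply Measurable.const_mul
    exact Finset.measurable_sum _ fun i _ => hTm i
  have hX_int : Integrable X ℙ :=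
    (integrable_finset_sum _ fun i _ => hT_int i).const_mul c
  have hD_int : Integrable (fun ω => S ω - X ω) ℙ := hS_int.sub hX_int
  have hDm : Measurable fun ω => S ω - X ω := hSm.sub hXm
  have hD_mem2 : MemLp (fun ω => S ω - X ω) 2 ℙ :=
    (memLp_two_iff_integrable_sq hDm.aestronglyMeasurable).2 hD2_int
  have hCf0 : 0 ≤ Cf := by
    have h1 := hf 1 0
    have h0 := abs_nonneg (f 1 - f 0)
    rw [sub_zero, abs_one, mul_one] at h1
    linarith
  have hf_cont : Continuous f := by
    have : LipschitzWith (Real.toNNReal Cf) f := by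
      refine LipschitzWith.of_dist_le_mul fun x y => ?_
      rw [Real.dist_eq, Real.dist_eq, Real.coe_toNNReal _ hCf0]
      exact hf x y
    exact this.continuous
  have hfint : ∀ Y : Ω → ℝ, Measurable Y → Integrable Y ℙ →
      Integrable (fun ω => f (Y ω)) ℙ := by
    intro Y hYm hY_int
    refine Integrable.mono' ((integrable_const |f 0|).add (hY_int.abs.const_mul Cf))
      (hf_cont.measurable.comp hYm).aestronglyMeasurable
      (Filter.Eventually.of_forall fun ω => ?_)
    have h1 := hf (Y ω) 0
    rw [sub_zero] at h1
    have h2 : |f (Y ω)| ≤ |f (Y ω) - f 0| + |f 0| := by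
      have := abs_add_le (f (Y ω) - f 0) (f 0)
      simpa using this
    simp only [Pi.add_apply, Real.norm_eq_abs]
    linarith
  have hfS_int : Integrable (fun ω => f (S ω)) ℙ := hfint S hSm hS_int
  have hfX_int : Integrable (fun ω => f (X ω)) ℙ := hfint X hXm hX_int
  -- bias bound
  have hbias : |(∫ ω, f (S ω) ∂ℙ) - ∫ ω, f (X ω) ∂ℙ| ≤ Cf * ∫ ω, |S ω - X ω| ∂ℙ := by
    rw [← integral_sub hfS_int hfX_int]
    calc |∫ ω, (f (S ω) - f (X ω)) ∂ℙ| ≤ ∫ ω, |f (S ω) - f (X ω)| ∂ℙ := by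
          simpa [Real.norm_eq_abs] using
            norm_integral_le_integral_norm (fun ω => f (S ω) - f (X ω))
      _ ≤ ∫ ω, Cf * |S ω - X ω| ∂ℙ :=
          integral_mono (hfS_int.sub hfX_int).abs (hD_int.abs.const_mul Cf)
            (fun ω => hf _ _)
      _ = Cf * ∫ ω, |S ω - X ω| ∂ℙ := integral_const_mul _ _
  -- Cauchy–Schwarz via nonnegativity of the variance
  have hCS : (∫ ω, |S ω - X ω| ∂ℙ) ^ 2 ≤ ∫ ω, (S ω - X ω) ^ 2 ∂ℙ := by
    have habs_mem : MemLp (fun ω => |S ω - X ω|) 2 ℙ := by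
      simpa [Real.norm_eq_abs] using hD_mem2.norm
    have h0 := variance_nonneg (fun ω => |S ω - X ω|) ℙ
    rw [variance_eq_sub habs_mem] at h0
    simp only [Pi.pow_apply, sq_abs] at h0
    linarith
  -- conclusion
  have hkey : ∫ ω, (S ω - X ω) ^ 2 ∂ℙ = ((n:ℝ) * ν + μ) / (M:ℝ)^l := by
    rw [hD2_val, halg]
  have hmain : ((∫ ω, f (S ω) ∂ℙ) - ∫ ω, f (X ω) ∂ℙ) ^ 2 ≤
      Cf ^ 2 * ((M:ℝ)^l)⁻¹ * ((n:ℝ) * ν + μ) := by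
    have h1 : ((∫ ω, f (S ω) ∂ℙ) - ∫ ω, f (X ω) ∂ℙ) ^ 2 ≤
        (Cf * ∫ ω, |S ω - X ω| ∂ℙ) ^ 2 := by
      rw [← sq_abs ((∫ ω, f (S ω) ∂ℙ) - ∫ ω, f (X ω) ∂ℙ)]
      exact pow_le_pow_left₀ (abs_nonneg _) hbias 2
    refine h1.trans ?_
    rw [mul_pow]
    calc Cf ^ 2 * (∫ ω, |S ω - X ω| ∂ℙ) ^ 2
        ≤ Cf ^ 2 * ∫ ω, (S ω - X ω) ^ 2 ∂ℙ :=
          mul_le_mul_of_nonneg_left hCS (by positivity)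
      _ = Cf ^ 2 * ((M:ℝ)^l)⁻¹ * ((n:ℝ) * ν + μ) := by
          rw [hkey]
          field_simp
  show ((∫ ω, f (S ω) ∂ℙ) - ∫ ω, f (X ω) ∂ℙ) ^ 2 ≤
      Cf ^ 2 * ((M:ℝ)^l)⁻¹ * ((n:ℝ) * ν + μ)
  exact hmain
end

section
/- Let a, b ∈ ℝ^n be random vectors whose 2n coordinates are mutually independent with finite nonzero moments w_j = E[a_j^2 b_j^2] and E[(aᵀb)^2] < ∞, let f : ℝ → ℝ be Lipschitz with constant C_f, let M ≥ 2 be an integer and l ≥ 1 an integer. Let X_l and X_{l−1} be sketched inner products of a and b using M^l and M^{l−1} uniformly sampled indices respectively, defined on the same probability space (with arbitrary coupling, e.g. X_{l−1} using a subset of the indices of X_l). Then Var[ f(X_l) − f(X_{l−1}) ] ≤ 2 C_f^2 (M + 1)(n·ν + μ) M^{−l}, where μ = (Σ_{j=1}^n √(w_j))^2 − E[(aᵀb)^2] and ν = Σ_{i=1}^n ( √(w_i) − (1/n) Σ_{j=1}^n √(w_j) )^2. -/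
open MeasureTheory ProbabilityTheory

private lemma sketch_moment
    {Ω : Type*} [MeasureSpace Ω] [IsProbabilityMeasure (ℙ : Measure Ω)]
    {n : ℕ} (hn : 0 < n) (c : Ω → Fin n → ℝ)
    (hc : ∀ j, Measurable fun ω => c ω j)
    (hcc_int : ∀ j m, Integrable (fun ω => c ω j * c ω m) ℙ)
    {s : ℕ} (hs : 0 < s)
    (r : Ω → Fin s → Fin n) (hr : ∀ i, Measurable fun ω => r ω i)
    (hr_iid : iIndepFun
      (fun i ω => r ω i) ℙ)
    (hr_unif : ∀ i j, ℙ {ω | r ω i = j} = (n : ENNReal)⁻¹)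
    (hr_c : IndepFun (fun ω => c ω) r ℙ) :
    Integrable (fun ω => ((∑ j, c ω j) - (n : ℝ) / (s : ℝ) * ∑ i, c ω (r ω i)) ^ 2) ℙ ∧
    ∫ ω, ((∑ j, c ω j) - (n : ℝ) / (s : ℝ) * ∑ i, c ω (r ω i)) ^ 2 ∂ℙ =
      ((n : ℝ) * (∑ j, ∫ ω, c ω j * c ω j ∂ℙ) - ∫ ω, (∑ j, c ω j) ^ 2 ∂ℙ) / s := by
  classical
  have hn' : (n : ℝ) ≠ 0 := Nat.cast_ne_zero.2 hn.ne'
  have hs' : (s : ℝ) ≠ 0 := Nat.cast_ne_zero.2 hs.ne'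
  have hrm : Measurable r := measurable_pi_lambda r hr
  -- the key independence fact
  have hbase : ∀ (φ : (Fin s → Fin n) → ℝ) (H : (Fin n → ℝ) → ℝ), Measurable φ → Measurable H →
      Integrable (fun ω => H (c ω)) ℙ →
      ∫ ω, φ (r ω) * H (c ω) ∂ℙ = (∫ ω, φ (r ω) ∂ℙ) * ∫ ω, H (c ω) ∂ℙ := by
    intro φ H hφ hH hHint
    have hind : IndepFun (fun ω => φ (r ω)) (fun ω => H (c ω)) ℙ :=
      (hr_c.comp hH hφ).symm
    obtain ⟨C, hC⟩ := Finite.exists_le fun v => ‖φ v‖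
    have hφint : Integrable (fun ω => φ (r ω)) ℙ :=
      ⟨(hφ.comp hrm).aestronglyMeasurable,
        HasFiniteIntegral.of_bounded (C := C) (Filter.Eventually.of_forall fun ω => hC (r ω))⟩
    exact hind.integral_fun_mul_eq_mul_integral hφint.1 hHint.1
  have hmeasset : ∀ (i : Fin s) (j : Fin n), MeasurableSet {ω | r ω i = j} := fun i j =>
    (hr i) (measurableSet_singleton j)
  have hset : ∀ (i : Fin s) (j : Fin n), MeasurableSet {v : Fin s → Fin n | v i = j} := by
    intro i j
    have h : {v : Fin s → Fin n | v i = j} = (fun v : Fin s → Fin n => v i) ⁻¹' {j} := rfl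
    rw [h]; exact (measurable_pi_apply i) (measurableSet_singleton j)
  have hind_meas : ∀ (i : Fin s) (j : Fin n),
      Measurable fun ω => if r ω i = j then (1 : ℝ) else 0 := fun i j =>
    Measurable.ite (hmeasset i j) measurable_const measurable_const
  -- indicator integrals
  have hind1 : ∀ (i : Fin s) (j : Fin n),
      ∫ ω, (if r ω i = j then (1 : ℝ) else 0) ∂ℙ = (n : ℝ)⁻¹ := by
    intro i j
    have h1 : (fun ω => if r ω i = j then (1 : ℝ) else 0)
        = Set.indicator {ω | r ω i = j} (1 : Ω → ℝ) := by
      funext ω; by_cases h : r ω i = j <;> simp [Set.indicator_apply, Set.mem_setOf_eq, h]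
    rw [h1, integral_indicator_one (hmeasset i j), measureReal_def, hr_unif i j]
    simp
  have hind2 : ∀ (i k : Fin s) (j m : Fin n), i ≠ k →
      ∫ ω, (if r ω i = j then (1 : ℝ) else 0) * (if r ω k = m then (1 : ℝ) else 0) ∂ℙ
        = (n : ℝ)⁻¹ * (n : ℝ)⁻¹ := by
    intro i k j m hik
    have h1 : (fun ω => (if r ω i = j then (1 : ℝ) else 0) * (if r ω k = m then (1 : ℝ) else 0))
        = Set.indicator ({ω | r ω i = j} ∩ {ω | r ω k = m}) (1 : Ω → ℝ) := by
      funext ω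
      by_cases h : r ω i = j <;> by_cases h' : r ω k = m <;>
        simp [Set.indicator_apply, Set.mem_setOf_eq, h, h']
    rw [h1, integral_indicator_one ((hmeasset i j).inter (hmeasset k m))]
    have h2 : ℙ ({ω | r ω i = j} ∩ {ω | r ω k = m})
        = ℙ {ω | r ω i = j} * ℙ {ω | r ω k = m} :=
      (hr_iid.indepFun hik).measure_inter_preimage_eq_mul {j} {m}
        (measurableSet_singleton j) (measurableSet_singleton m)
    rw [measureReal_def, h2, hr_unif, hr_unif]
    simp [ENNReal.toReal_mul]
  -- pointwise representation
  have hrep : ∀ (i : Fin s) (ω : Ω),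
      c ω (r ω i) = ∑ j, (if r ω i = j then (1 : ℝ) else 0) * c ω j := by
    intro i ω; simp [ite_mul, Finset.sum_ite_eq]
  -- integrability pieces
  have hT2_int : Integrable (fun ω => (∑ j, c ω j) ^ 2) ℙ := by
    have h : (fun ω => (∑ j, c ω j) ^ 2) = fun ω => ∑ j, ∑ m, c ω j * c ω m := by
      funext ω; rw [sq, Finset.sum_mul_sum]
    rw [h]
    exact integrable_finset_sum _ fun j _ => integrable_finset_sum _ fun m _ => hcc_int j m
  have hcT_int : ∀ j, Integrable (fun ω => c ω j * ∑ m, c ω m) ℙ := by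
    intro j
    have h : (fun ω => c ω j * ∑ m, c ω m) = fun ω => ∑ m, c ω j * c ω m := by
      funext ω; rw [Finset.mul_sum]
    rw [h]; exact integrable_finset_sum _ fun m _ => hcc_int j m
  have hbddmul : ∀ (i : Fin s) (j : Fin n) (g : Ω → ℝ), Integrable g ℙ →
      Integrable (fun ω => (if r ω i = j then (1 : ℝ) else 0) * g ω) ℙ := fun i j g hg =>
    hg.bdd_mul (hind_meas i j).aestronglyMeasurable (c := 1) (Filter.Eventually.of_forall fun ω => by split <;> simp)
  have hbdd2 : ∀ (i k : Fin s) (j m : Fin n) (g : Ω → ℝ), Integrable g ℙ →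
      Integrable (fun ω =>
        ((if r ω i = j then (1 : ℝ) else 0) * (if r ω k = m then (1 : ℝ) else 0)) * g ω) ℙ :=
    fun i k j m g hg => hg.bdd_mul (((hind_meas i j).mul (hind_meas k m)).aestronglyMeasurable)
      (c := 1) (Filter.Eventually.of_forall fun ω => by
        by_cases h1 : r ω i = j <;> by_cases h2 : r ω k = m <;> simp [h1, h2])
  have hcrT_int : ∀ i : Fin s, Integrable (fun ω => c ω (r ω i) * ∑ m, c ω m) ℙ := by
    intro i
    have h : (fun ω => c ω (r ω i) * ∑ m, c ω m)
        = fun ω => ∑ j, (if r ω i = j then (1 : ℝ) else 0) * (c ω j * ∑ m, c ω m) := by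
      funext ω; rw [hrep i ω, Finset.sum_mul]
      exact Finset.sum_congr rfl fun j _ => by ring
    rw [h]
    exact integrable_finset_sum _ fun j _ => hbddmul i j _ (hcT_int j)
  have hcrcr_int : ∀ i k : Fin s, Integrable (fun ω => c ω (r ω i) * c ω (r ω k)) ℙ := by
    intro i k
    have h : (fun ω => c ω (r ω i) * c ω (r ω k))
        = fun ω => ∑ j, ∑ m, ((if r ω i = j then (1 : ℝ) else 0) *
            (if r ω k = m then (1 : ℝ) else 0)) * (c ω j * c ω m) := by
      funext ω; rw [hrep i ω, hrep k ω, Finset.sum_mul_sum]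
      exact Finset.sum_congr rfl fun j _ => Finset.sum_congr rfl fun m _ => by ring
    rw [h]
    exact integrable_finset_sum _ fun j _ => integrable_finset_sum _ fun m _ =>
      hbdd2 i k j m _ (hcc_int j m)
  -- expectation of squared sum
  have ht2 : ∫ ω, (∑ j, c ω j) ^ 2 ∂ℙ = ∑ j, ∑ m, ∫ ω, c ω j * c ω m ∂ℙ := by
    have h : (fun ω => (∑ j, c ω j) ^ 2) = fun ω => ∑ j, ∑ m, c ω j * c ω m := by
      funext ω; rw [sq, Finset.sum_mul_sum]
    rw [h, integral_finset_sum _ fun j _ => integrable_finset_sum _ fun m _ => hcc_int j m]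
    exact Finset.sum_congr rfl fun j _ => integral_finset_sum _ fun m _ => hcc_int j m
  -- off-diagonal and diagonal second moments
  have hpair : ∀ i k : Fin s, i ≠ k →
      ∫ ω, c ω (r ω i) * c ω (r ω k) ∂ℙ
        = (n : ℝ)⁻¹ * (n : ℝ)⁻¹ * ∫ ω, (∑ j, c ω j) ^ 2 ∂ℙ := by
    intro i k hik
    have h : (fun ω => c ω (r ω i) * c ω (r ω k))
        = fun ω => ∑ j, ∑ m, ((if r ω i = j then (1 : ℝ) else 0) *
            (if r ω k = m then (1 : ℝ) else 0)) * (c ω j * c ω m) := by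
      funext ω; rw [hrep i ω, hrep k ω, Finset.sum_mul_sum]
      exact Finset.sum_congr rfl fun j _ => Finset.sum_congr rfl fun m _ => by ring
    rw [h, integral_finset_sum _ fun j _ => integrable_finset_sum _ fun m _ =>
      hbdd2 i k j m _ (hcc_int j m)]
    have hterm : ∀ j m : Fin n,
        ∫ ω, ((if r ω i = j then (1 : ℝ) else 0) * (if r ω k = m then (1 : ℝ) else 0))
          * (c ω j * c ω m) ∂ℙ = (n : ℝ)⁻¹ * (n : ℝ)⁻¹ * ∫ ω, c ω j * c ω m ∂ℙ := by
      intro j m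
      have hφ : Measurable fun v : Fin s → Fin n =>
          (if v i = j then (1 : ℝ) else 0) * (if v k = m then (1 : ℝ) else 0) :=
        (Measurable.ite (hset i j) measurable_const measurable_const).mul
        (Measurable.ite (hset k m) measurable_const measurable_const)
      have hH : Measurable fun p : Fin n → ℝ => p j * p m :=
        (measurable_pi_apply j).mul (measurable_pi_apply m)
      have h := hbase _ _ hφ hH (hcc_int j m)
      beta_reduce at h
      rw [h, hind2 i k j m hik]
    rw [Finset.sum_congr rfl fun j _ => integral_finset_sum _ fun m _ =>
      hbdd2 i k j m _ (hcc_int j m)]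
    rw [Finset.sum_congr rfl fun j (_ : j ∈ Finset.univ) =>
      Finset.sum_congr rfl fun m (_ : m ∈ Finset.univ) => hterm j m]
    rw [ht2]
    simp only [Finset.mul_sum]
  have hdiag : ∀ i : Fin s, ∫ ω, c ω (r ω i) * c ω (r ω i) ∂ℙ
      = (n : ℝ)⁻¹ * ∑ j, ∫ ω, c ω j * c ω j ∂ℙ := by
    intro i
    have h : (fun ω => c ω (r ω i) * c ω (r ω i))
        = fun ω => ∑ j, (if r ω i = j then (1 : ℝ) else 0) * (c ω j * c ω j) := by
      funext ω; simp [ite_mul, Finset.sum_ite_eq]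
    rw [h, integral_finset_sum _ fun j _ => hbddmul i j _ (hcc_int j j)]
    rw [Finset.mul_sum]
    refine Finset.sum_congr rfl fun j _ => ?_
    have hφ : Measurable fun v : Fin s → Fin n => if v i = j then (1 : ℝ) else 0 :=
      Measurable.ite (hset i j) measurable_const measurable_const
    have hH : Measurable fun p : Fin n → ℝ => p j * p j :=
      (measurable_pi_apply j).mul (measurable_pi_apply j)
    have h2 := hbase _ _ hφ hH (hcc_int j j)
    beta_reduce at h2
    rw [h2, hind1 i j]
  have hcrT : ∀ i : Fin s, ∫ ω, c ω (r ω i) * (∑ m, c ω m) ∂ℙ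
      = (n : ℝ)⁻¹ * ∫ ω, (∑ j, c ω j) ^ 2 ∂ℙ := by
    intro i
    have h : (fun ω => c ω (r ω i) * ∑ m, c ω m)
        = fun ω => ∑ j, (if r ω i = j then (1 : ℝ) else 0) * (c ω j * ∑ m, c ω m) := by
      funext ω; rw [hrep i ω, Finset.sum_mul]
      exact Finset.sum_congr rfl fun j _ => by ring
    rw [h, integral_finset_sum _ fun j _ => hbddmul i j _ (hcT_int j)]
    have hterm : ∀ j : Fin n,
        ∫ ω, (if r ω i = j then (1 : ℝ) else 0) * (c ω j * ∑ m, c ω m) ∂ℙ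
          = (n : ℝ)⁻¹ * ∫ ω, c ω j * ∑ m, c ω m ∂ℙ := by
      intro j
      have hφ : Measurable fun v : Fin s → Fin n => if v i = j then (1 : ℝ) else 0 :=
        Measurable.ite (hset i j) measurable_const measurable_const
      have hH : Measurable fun p : Fin n → ℝ => p j * ∑ m, p m :=
        (measurable_pi_apply j).mul (Finset.measurable_sum _ fun m _ => measurable_pi_apply m)
      have h2 := hbase _ _ hφ hH (hcT_int j)
      beta_reduce at h2
      rw [h2, hind1 i j]
    rw [Finset.sum_congr rfl fun j (_ : j ∈ Finset.univ) => hterm j, ← Finset.mul_sum]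
    congr 1
    rw [← integral_finset_sum _ fun j _ => hcT_int j]
    congr 1; funext ω; rw [sq, ← Finset.sum_mul]
  -- expansion of the square
  have hXexp : (fun ω => ((∑ j, c ω j) - (n : ℝ) / (s : ℝ) * ∑ i, c ω (r ω i)) ^ 2)
      = fun ω => (∑ j, c ω j) ^ 2
          - 2 * ((n : ℝ) / (s : ℝ)) * (∑ i, c ω (r ω i) * ∑ m, c ω m)
          + ((n : ℝ) / (s : ℝ)) ^ 2 * ∑ i, ∑ k, c ω (r ω i) * c ω (r ω k) := by
    funext ω
    have e1 : ∑ i, c ω (r ω i) * ∑ m, c ω m = (∑ i, c ω (r ω i)) * ∑ m, c ω m :=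
      (Finset.sum_mul _ _ _).symm
    have e2 : ∑ i, ∑ k, c ω (r ω i) * c ω (r ω k)
        = (∑ i, c ω (r ω i)) * ∑ k, c ω (r ω k) := (Finset.sum_mul_sum _ _ _ _).symm
    rw [e1, e2]; ring
  have hB_int : Integrable
      (fun ω => 2 * ((n : ℝ) / (s : ℝ)) * (∑ i, c ω (r ω i) * ∑ m, c ω m)) ℙ :=
    (integrable_finset_sum _ fun i _ => hcrT_int i).const_mul _
  have hC_int : Integrable
      (fun ω => ((n : ℝ) / (s : ℝ)) ^ 2 * ∑ i, ∑ k, c ω (r ω i) * c ω (r ω k)) ℙ :=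
    (integrable_finset_sum _ fun i _ =>
      integrable_finset_sum _ fun k _ => hcrcr_int i k).const_mul _
  constructor
  · rw [hXexp]; exact (hT2_int.sub hB_int).add hC_int
  have hIadd : ∫ ω, ((∑ j, c ω j) ^ 2
          - 2 * ((n : ℝ) / (s : ℝ)) * (∑ i, c ω (r ω i) * ∑ m, c ω m)
          + ((n : ℝ) / (s : ℝ)) ^ 2 * ∑ i, ∑ k, c ω (r ω i) * c ω (r ω k)) ∂ℙ
      = (∫ ω, ((∑ j, c ω j) ^ 2
          - 2 * ((n : ℝ) / (s : ℝ)) * (∑ i, c ω (r ω i) * ∑ m, c ω m)) ∂ℙ)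
        + ∫ ω, ((n : ℝ) / (s : ℝ)) ^ 2 * ∑ i, ∑ k, c ω (r ω i) * c ω (r ω k) ∂ℙ :=
    integral_add (hT2_int.sub hB_int) hC_int
  have hIsub : ∫ ω, ((∑ j, c ω j) ^ 2
          - 2 * ((n : ℝ) / (s : ℝ)) * (∑ i, c ω (r ω i) * ∑ m, c ω m)) ∂ℙ
      = (∫ ω, (∑ j, c ω j) ^ 2 ∂ℙ)
        - ∫ ω, 2 * ((n : ℝ) / (s : ℝ)) * (∑ i, c ω (r ω i) * ∑ m, c ω m) ∂ℙ :=
    integral_sub hT2_int hB_int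
  have hIB : ∫ ω, 2 * ((n : ℝ) / (s : ℝ)) * (∑ i, c ω (r ω i) * ∑ m, c ω m) ∂ℙ
      = 2 * ((n : ℝ) / (s : ℝ)) * ∫ ω, (∑ i, c ω (r ω i) * ∑ m, c ω m) ∂ℙ :=
    integral_const_mul _ _
  have hIC : ∫ ω, ((n : ℝ) / (s : ℝ)) ^ 2 * ∑ i, ∑ k, c ω (r ω i) * c ω (r ω k) ∂ℙ
      = ((n : ℝ) / (s : ℝ)) ^ 2 * ∫ ω, (∑ i, ∑ k, c ω (r ω i) * c ω (r ω k)) ∂ℙ :=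
    integral_const_mul _ _
  have hIsumT : ∫ ω, (∑ i, c ω (r ω i) * ∑ m, c ω m) ∂ℙ
      = ∑ i, ∫ ω, c ω (r ω i) * ∑ m, c ω m ∂ℙ :=
    integral_finset_sum _ fun i _ => hcrT_int i
  have hIsum2 : ∫ ω, (∑ i, ∑ k, c ω (r ω i) * c ω (r ω k)) ∂ℙ
      = ∑ i, ∑ k, ∫ ω, c ω (r ω i) * c ω (r ω k) ∂ℙ := by
    rw [integral_finset_sum _ fun i _ => integrable_finset_sum _ fun k _ => hcrcr_int i k]
    exact Finset.sum_congr rfl fun i _ => integral_finset_sum _ fun k _ => hcrcr_int i k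
  rw [hXexp, hIadd, hIsub, hIB, hIC, hIsumT, hIsum2]
  set t2 := ∫ ω, (∑ j, c ω j) ^ 2 ∂ℙ with ht2def
  set W := ∑ j, ∫ ω, c ω j * c ω j ∂ℙ with hWdef
  have e1 : ∑ i : Fin s, ∫ ω, c ω (r ω i) * ∑ m, c ω m ∂ℙ = (s : ℝ) * ((n : ℝ)⁻¹ * t2) := by
    rw [Finset.sum_congr rfl fun i (_ : i ∈ Finset.univ) => hcrT i, Finset.sum_const,
      Finset.card_univ, Fintype.card_fin, nsmul_eq_mul]
  have e2 : ∑ i : Fin s, ∑ k : Fin s, ∫ ω, c ω (r ω i) * c ω (r ω k) ∂ℙ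
      = (s : ℝ) * ((s : ℝ) * ((n : ℝ)⁻¹ * (n : ℝ)⁻¹ * t2)
          + ((n : ℝ)⁻¹ * W - (n : ℝ)⁻¹ * (n : ℝ)⁻¹ * t2)) := by
    have step : ∀ i k : Fin s, ∫ ω, c ω (r ω i) * c ω (r ω k) ∂ℙ
        = (n : ℝ)⁻¹ * (n : ℝ)⁻¹ * t2
          + (if i = k then (n : ℝ)⁻¹ * W - (n : ℝ)⁻¹ * (n : ℝ)⁻¹ * t2 else 0) := by
      intro i k
      by_cases h : i = k
      · subst h; rw [hdiag i, if_pos rfl]; ring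
      · rw [hpair i k h]; simp [h]
    simp only [step, Finset.sum_add_distrib, Finset.sum_const, Finset.sum_ite_eq,
      Finset.mem_univ, if_true, Finset.card_univ, Fintype.card_fin, nsmul_eq_mul]
    ring
  rw [e1, e2]
  field_simp
  ring
private lemma measurable_comp_index {Ω : Type*} [MeasurableSpace Ω] {n s : ℕ}
    (c : Ω → Fin n → ℝ) (hc : ∀ j, Measurable fun ω => c ω j)
    (r : Ω → Fin s → Fin n) (hr : ∀ i, Measurable fun ω => r ω i) (i : Fin s) :
    Measurable fun ω => c ω (r ω i) := by
  have h : (fun ω => c ω (r ω i)) = fun ω => ∑ j, if r ω i = j then c ω j else 0 := by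
    funext ω; simp [Finset.sum_ite_eq]
  rw [h]
  exact Finset.measurable_sum _ fun j _ =>
    Measurable.ite ((hr i) (measurableSet_singleton j)) (hc j) measurable_const

set_option maxHeartbeats 1000000 in
/-- Variance of the multilevel correction term: for sketched inner
products `X_l` (with `M^l` uniform indices) and `X_{l−1}` (with `M^(l−1)` uniform
indices) on the same probability space (arbitrary coupling),
`Var[f(X_l) − f(X_{l−1})] ≤ 2 C_f² (M+1) (n ν + μ) M^(−l)`. -/
theorem lipschitz_sketch_level_variance_inner_product
    {Ω : Type*} [MeasureSpace Ω] [IsProbabilityMeasure (ℙ : Measure Ω)]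
    (n : ℕ) (hn : 0 < n)
    (a b : Ω → Fin n → ℝ)
    (ha : ∀ j, Measurable fun ω => a ω j) (hb : ∀ j, Measurable fun ω => b ω j)
    (hab_indep : iIndepFun
      (Sum.elim (fun j ω => a ω j) (fun j ω => b ω j)) ℙ)
    (w : Fin n → ℝ) (hw : ∀ j, w j = ∫ ω, (a ω j) ^ 2 * (b ω j) ^ 2 ∂ℙ)
    (hw_int : ∀ j, Integrable (fun ω => (a ω j) ^ 2 * (b ω j) ^ 2) ℙ)
    (hw_pos : ∀ j, 0 < w j)
    (hab_sq_int : Integrable (fun ω => (∑ j, a ω j * b ω j) ^ 2) ℙ)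
    (f : ℝ → ℝ) (Cf : ℝ) (hf : ∀ x y, |f x - f y| ≤ Cf * |x - y|)
    (M l : ℕ) (hM : 2 ≤ M) (hl : 1 ≤ l)
    -- M^l i.i.d. uniform indices for level l, independent of (a, b)
    (r : Ω → Fin (M ^ l) → Fin n) (hr : ∀ i, Measurable fun ω => r ω i)
    (hr_iid : iIndepFun
      (fun i ω => r ω i) ℙ)
    (hr_unif : ∀ i j, ℙ {ω | r ω i = j} = (n : ENNReal)⁻¹)
    (hr_ab : IndepFun (fun ω => (a ω, b ω)) r ℙ)
    -- M^(l−1) i.i.d. uniform indices for level l−1, independent of (a, b),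
    -- with arbitrary coupling to the level-l indices
    (r' : Ω → Fin (M ^ (l - 1)) → Fin n) (hr' : ∀ i, Measurable fun ω => r' ω i)
    (hr'_iid : iIndepFun
      (fun i ω => r' ω i) ℙ)
    (hr'_unif : ∀ i j, ℙ {ω | r' ω i = j} = (n : ENNReal)⁻¹)
    (hr'_ab : IndepFun (fun ω => (a ω, b ω)) r' ℙ)
    (μ ν : ℝ)
    (hμ : μ = (∑ j, Real.sqrt (w j)) ^ 2 - ∫ ω, (∑ j, a ω j * b ω j) ^ 2 ∂ℙ)
    (hν : ν = ∑ i, (Real.sqrt (w i) - (1 / (n : ℝ)) * ∑ j, Real.sqrt (w j)) ^ 2) :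
    variance (fun ω =>
        f ((n : ℝ) / (M ^ l : ℝ) * ∑ i, a ω (r ω i) * b ω (r ω i)) -
        f ((n : ℝ) / (M ^ (l - 1) : ℝ) * ∑ i, a ω (r' ω i) * b ω (r' ω i))) ℙ ≤
      2 * Cf ^ 2 * ((M : ℝ) + 1) * ((n : ℝ) * ν + μ) * ((M : ℝ) ^ l)⁻¹ := by
  classical
  have hn' : (n : ℝ) ≠ 0 := Nat.cast_ne_zero.2 hn.ne'
  have hMpos : 0 < M := by omega
  have hM' : (M : ℝ) ≠ 0 := Nat.cast_ne_zero.2 hMpos.ne'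
  have hc : ∀ j, Measurable fun ω => a ω j * b ω j := fun j => (ha j).mul (hb j)
  have hcc_int : ∀ j m, Integrable (fun ω => (a ω j * b ω j) * (a ω m * b ω m)) ℙ := by
    intro j m
    have hgi : Integrable
        (fun ω => (a ω j) ^ 2 * (b ω j) ^ 2 + (a ω m) ^ 2 * (b ω m) ^ 2) ℙ :=
      (hw_int j).add (hw_int m)
    refine hgi.mono' (((hc j).mul (hc m)).aestronglyMeasurable)
      (Filter.Eventually.of_forall fun ω => ?_)
    rw [Real.norm_eq_abs, abs_mul]
    nlinarith [sq_nonneg (|a ω j * b ω j| - |a ω m * b ω m|),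
      sq_abs (a ω j * b ω j), sq_abs (a ω m * b ω m),
      mul_pow (a ω j) (b ω j) 2, mul_pow (a ω m) (b ω m) 2,
      mul_nonneg (abs_nonneg (a ω j * b ω j)) (abs_nonneg (a ω m * b ω m))]
  have hφm : Measurable fun p : (Fin n → ℝ) × (Fin n → ℝ) => fun j => p.1 j * p.2 j :=
    measurable_pi_lambda _ fun j =>
      ((measurable_pi_apply j).comp measurable_fst).mul
        ((measurable_pi_apply j).comp measurable_snd)
  have hr_c : IndepFun (fun ω => fun j => a ω j * b ω j) r ℙ := hr_ab.comp hφm measurable_id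
  have hr'_c : IndepFun (fun ω => fun j => a ω j * b ω j) r' ℙ := hr'_ab.comp hφm measurable_id
  obtain ⟨hInt_l, hEq_l⟩ := sketch_moment hn (fun ω j => a ω j * b ω j) hc hcc_int
    (pow_pos hMpos l) r hr hr_iid hr_unif hr_c
  obtain ⟨hInt_l', hEq_l'⟩ := sketch_moment hn (fun ω j => a ω j * b ω j) hc hcc_int
    (pow_pos hMpos (l - 1)) r' hr' hr'_iid hr'_unif hr'_c
  beta_reduce at hInt_l hEq_l hInt_l' hEq_l'
  rw [Nat.cast_pow] at hInt_l hEq_l hInt_l' hEq_l'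
  -- measurability of the sketched inner products
  have hXl_meas : Measurable fun ω => (n : ℝ) / (M : ℝ) ^ l *
      ∑ i, a ω (r ω i) * b ω (r ω i) :=
    ((Finset.measurable_sum _ fun i _ =>
      measurable_comp_index _ hc r hr i).const_mul _)
  have hX'_meas : Measurable fun ω => (n : ℝ) / (M : ℝ) ^ (l - 1) *
      ∑ i, a ω (r' ω i) * b ω (r' ω i) :=
    ((Finset.measurable_sum _ fun i _ =>
      measurable_comp_index _ hc r' hr' i).const_mul _)
  have hCf : 0 ≤ Cf := by
    have h := hf 0 1
    have h2 : |(0 : ℝ) - 1| = 1 := by norm_num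
    rw [h2, mul_one] at h
    linarith [abs_nonneg (f 0 - f 1)]
  have hfc : Continuous f := by
    have hlip : LipschitzWith (Real.toNNReal Cf) f :=
      LipschitzWith.of_dist_le_mul fun x y => by
        rw [Real.dist_eq, Real.dist_eq, Real.coe_toNNReal _ hCf]
        exact hf x y
    exact hlip.continuous
  have hZmeas : AEStronglyMeasurable (fun ω =>
      f ((n : ℝ) / (M : ℝ) ^ l * ∑ i, a ω (r ω i) * b ω (r ω i)) -
      f ((n : ℝ) / (M : ℝ) ^ (l - 1) * ∑ i, a ω (r' ω i) * b ω (r' ω i))) ℙ :=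
    ((hfc.measurable.comp hXl_meas).sub (hfc.measurable.comp hX'_meas)).aestronglyMeasurable
  have hG_int : Integrable (fun ω => 2 * Cf ^ 2 *
      (((∑ j, a ω j * b ω j) - (n : ℝ) / (M : ℝ) ^ l *
          ∑ i, a ω (r ω i) * b ω (r ω i)) ^ 2 +
        ((∑ j, a ω j * b ω j) - (n : ℝ) / (M : ℝ) ^ (l - 1) *
          ∑ i, a ω (r' ω i) * b ω (r' ω i)) ^ 2)) ℙ :=
    (hInt_l.add hInt_l').const_mul _
  have hpt : ∀ ω,
      (f ((n : ℝ) / (M : ℝ) ^ l * ∑ i, a ω (r ω i) * b ω (r ω i)) -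
        f ((n : ℝ) / (M : ℝ) ^ (l - 1) * ∑ i, a ω (r' ω i) * b ω (r' ω i))) ^ 2 ≤
      2 * Cf ^ 2 *
      (((∑ j, a ω j * b ω j) - (n : ℝ) / (M : ℝ) ^ l *
          ∑ i, a ω (r ω i) * b ω (r ω i)) ^ 2 +
        ((∑ j, a ω j * b ω j) - (n : ℝ) / (M : ℝ) ^ (l - 1) *
          ∑ i, a ω (r' ω i) * b ω (r' ω i)) ^ 2) := by
    intro ω
    set x := (n : ℝ) / (M : ℝ) ^ l * ∑ i, a ω (r ω i) * b ω (r ω i) with hx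
    set y := (n : ℝ) / (M : ℝ) ^ (l - 1) * ∑ i, a ω (r' ω i) * b ω (r' ω i) with hy
    set t := ∑ j, a ω j * b ω j with ht
    have h := hf x y
    have h1 : (f x - f y) ^ 2 ≤ Cf ^ 2 * (x - y) ^ 2 := by
      nlinarith [h, abs_nonneg (f x - f y), abs_nonneg (x - y),
        sq_abs (f x - f y), sq_abs (x - y), hCf]
    have h2 : (x - y) ^ 2 ≤ 2 * ((t - x) ^ 2 + (t - y) ^ 2) := by
      nlinarith [sq_nonneg ((t - x) + (t - y))]
    nlinarith [mul_le_mul_of_nonneg_left h2 (sq_nonneg Cf)]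
  have hZ2_int : Integrable (fun ω =>
      (f ((n : ℝ) / (M : ℝ) ^ l * ∑ i, a ω (r ω i) * b ω (r ω i)) -
        f ((n : ℝ) / (M : ℝ) ^ (l - 1) * ∑ i, a ω (r' ω i) * b ω (r' ω i))) ^ 2) ℙ := by
    refine hG_int.mono' ?_ (Filter.Eventually.of_forall fun ω => ?_)
    · exact (((hfc.measurable.comp hXl_meas).sub
        (hfc.measurable.comp hX'_meas)).pow_const 2).aestronglyMeasurable
    · rw [Real.norm_eq_abs, abs_of_nonneg (sq_nonneg _)]
      exact hpt ω
  -- the algebraic identity n ν + μ = n Σ w − E[T²]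
  have hkey : (n : ℝ) * ν + μ =
      (n : ℝ) * (∑ j, ∫ ω, (a ω j * b ω j) * (a ω j * b ω j) ∂ℙ) -
        ∫ ω, (∑ j, a ω j * b ω j) ^ 2 ∂ℙ := by
    have hsq : ∀ i : Fin n, Real.sqrt (w i) ^ 2 = w i := fun i => Real.sq_sqrt (hw_pos i).le
    have hWW : ∀ j : Fin n, w j = ∫ ω, (a ω j * b ω j) * (a ω j * b ω j) ∂ℙ := by
      intro j; rw [hw j]; congr 1; funext ω; ring
    have h1 : ∀ i : Fin n, (Real.sqrt (w i) - 1 / (n : ℝ) * ∑ j, Real.sqrt (w j)) ^ 2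
        = w i - 2 * (1 / (n : ℝ) * ∑ j, Real.sqrt (w j)) * Real.sqrt (w i)
          + (1 / (n : ℝ) * ∑ j, Real.sqrt (w j)) ^ 2 := by
      intro i; rw [sub_sq, hsq i]; ring
    rw [hν, hμ]
    rw [Finset.sum_congr rfl fun i (_ : i ∈ Finset.univ) => h1 i]
    rw [Finset.sum_add_distrib, Finset.sum_sub_distrib, ← Finset.mul_sum,
      Finset.sum_const, Finset.card_univ, Fintype.card_fin, nsmul_eq_mul]
    rw [Finset.sum_congr rfl fun j (_ : j ∈ Finset.univ) => hWW j]
    field_simp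
    ring
  have hMl : (M : ℝ) ^ l = (M : ℝ) ^ (l - 1) * M := by
    rw [← pow_succ]; congr 1; omega
  calc variance (fun ω =>
        f ((n : ℝ) / (M : ℝ) ^ l * ∑ i, a ω (r ω i) * b ω (r ω i)) -
        f ((n : ℝ) / (M : ℝ) ^ (l - 1) * ∑ i, a ω (r' ω i) * b ω (r' ω i))) ℙ
      ≤ ∫ ω, (f ((n : ℝ) / (M : ℝ) ^ l * ∑ i, a ω (r ω i) * b ω (r ω i)) -
          f ((n : ℝ) / (M : ℝ) ^ (l - 1) * ∑ i, a ω (r' ω i) * b ω (r' ω i))) ^ 2 ∂ℙ := by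
        have h := variance_le_expectation_sq (μ := ℙ) hZmeas
        simpa using h
    _ ≤ ∫ ω, 2 * Cf ^ 2 *
        (((∑ j, a ω j * b ω j) - (n : ℝ) / (M : ℝ) ^ l *
            ∑ i, a ω (r ω i) * b ω (r ω i)) ^ 2 +
          ((∑ j, a ω j * b ω j) - (n : ℝ) / (M : ℝ) ^ (l - 1) *
            ∑ i, a ω (r' ω i) * b ω (r' ω i)) ^ 2) ∂ℙ :=
        integral_mono hZ2_int hG_int fun ω => hpt ω
    _ = 2 * Cf ^ 2 *
        ((∫ ω, ((∑ j, a ω j * b ω j) - (n : ℝ) / (M : ℝ) ^ l *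
            ∑ i, a ω (r ω i) * b ω (r ω i)) ^ 2 ∂ℙ) +
          ∫ ω, ((∑ j, a ω j * b ω j) - (n : ℝ) / (M : ℝ) ^ (l - 1) *
            ∑ i, a ω (r' ω i) * b ω (r' ω i)) ^ 2 ∂ℙ) := by
        rw [integral_const_mul]
        congr 1
        exact integral_add hInt_l hInt_l'
    _ = 2 * Cf ^ 2 * ((M : ℝ) + 1) * ((n : ℝ) * ν + μ) * ((M : ℝ) ^ l)⁻¹ := by
        rw [hEq_l, hEq_l', hkey, hMl]
        have hMl1 : ((M : ℝ) ^ (l - 1)) ≠ 0 := pow_ne_zero _ hM'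
        field_simp
        ring
end

section
/- Let a, b ∈ ℝ^n be random vectors whose 2n coordinates are mutually independent with finite nonzero moments w_j = E[a_j^2 b_j^2] and E[(aᵀb)^2] < ∞, let f : ℝ → ℝ be Lipschitz with constant C_f and assume f(aᵀb) is square-integrable. Let X_0 be the sketched inner product of a and b using a single uniformly sampled index, i.e. X_0 = n·a_r b_r with r uniform on {1,...,n} independent of (a,b). Then Var[ f(X_0) ] ≤ 2 C_f^2 (n·ν + μ) + 2 Var[ f(aᵀb) ], where μ = (Σ_{j=1}^n √(w_j))^2 − E[(aᵀb)^2] and ν = Σ_{i=1}^n ( √(w_i) − (1/n) Σ_{j=1}^n √(w_j) )^2. -/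
open MeasureTheory ProbabilityTheory

section Aux
variable {Ω : Type*} [MeasureSpace Ω] [IsProbabilityMeasure (ℙ : Measure Ω)]

omit [IsProbabilityMeasure (ℙ : Measure Ω)] in
lemma aux_L2_mul {g h : Ω → ℝ} (hg : MemLp g 2 ℙ) (hh : MemLp h 2 ℙ) :
    Integrable (fun ω => g ω * h ω) ℙ := by
  have h1 : MemLp (g • h) 1 ℙ := MemLp.smul (p := 2) (q := 2) (r := 1) hh hg
  exact memLp_one_iff_integrable.mp h1

lemma aux_var_le {F : Ω → ℝ} (hF : MemLp F 2 ℙ) (c : ℝ) :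
    variance F ℙ ≤ ∫ ω, (F ω - c) ^ 2 ∂ℙ := by
  have h1 := variance_eq_sub hF
  simp only [Pi.pow_apply] at h1
  have hFi : Integrable F ℙ := hF.integrable one_le_two
  have hF2 : Integrable (fun ω => F ω ^ 2) ℙ := hF.integrable_sq
  have h2 : ∫ ω, (F ω - c) ^ 2 ∂ℙ
      = (∫ ω, F ω ^ 2 ∂ℙ) - 2 * c * (∫ ω, F ω ∂ℙ) + c ^ 2 := by
    have e : ∀ ω, (F ω - c) ^ 2 = F ω ^ 2 - 2 * c * F ω + c ^ 2 := fun ω => by ring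
    simp_rw [e]
    have i1 : Integrable (fun ω => F ω ^ 2 - 2 * c * F ω) ℙ := hF2.sub (hFi.const_mul (2*c))
    have i2 : Integrable (fun ω => 2 * c * F ω) ℙ := hFi.const_mul (2*c)
    rw [integral_add i1 (integrable_const (c^2)), integral_sub hF2 i2,
      integral_const_mul, integral_const]
    simp
  rw [h1, h2]
  nlinarith [sq_nonneg ((∫ ω, F ω ∂ℙ) - c)]

end Aux

set_option maxHeartbeats 1000000 in
/-- Variance at the coarsest level: for the single-index uniform
sketch `X₀ = n a_r b_r`, `Var[f(X₀)] ≤ 2 C_f² (n ν + μ) + 2 Var[f(aᵀb)]`. -/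
theorem lipschitz_sketch_level_zero_variance_inner_product
    {Ω : Type*} [MeasureSpace Ω] [IsProbabilityMeasure (ℙ : Measure Ω)]
    (n : ℕ) (hn : 0 < n)
    (a b : Ω → Fin n → ℝ)
    (ha : ∀ j, Measurable fun ω => a ω j) (hb : ∀ j, Measurable fun ω => b ω j)
    (hab_indep : iIndepFun (m := fun _ : Fin n ⊕ Fin n => (inferInstance : MeasurableSpace ℝ))
      (Sum.elim (fun j ω => a ω j) (fun j ω => b ω j)) ℙ)
    (w : Fin n → ℝ) (hw : ∀ j, w j = ∫ ω, (a ω j) ^ 2 * (b ω j) ^ 2 ∂ℙ)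
    (hw_int : ∀ j, Integrable (fun ω => (a ω j) ^ 2 * (b ω j) ^ 2) ℙ)
    (hw_pos : ∀ j, 0 < w j)
    (hab_sq_int : Integrable (fun ω => (∑ j, a ω j * b ω j) ^ 2) ℙ)
    (f : ℝ → ℝ) (Cf : ℝ) (hf : ∀ x y, |f x - f y| ≤ Cf * |x - y|)
    (hfL2 : MemLp (fun ω => f (∑ j, a ω j * b ω j)) 2 ℙ)
    -- a single index, uniform on {1,…,n}, independent of (a, b)
    (r : Ω → Fin n) (hr : Measurable r)
    (hr_unif : ∀ j, ℙ {ω | r ω = j} = (n : ENNReal)⁻¹)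
    (hr_ab : IndepFun (fun ω => (a ω, b ω)) r ℙ)
    (μ ν : ℝ)
    (hμ : μ = (∑ j, Real.sqrt (w j)) ^ 2 - ∫ ω, (∑ j, a ω j * b ω j) ^ 2 ∂ℙ)
    (hν : ν = ∑ i, (Real.sqrt (w i) - (1 / (n : ℝ)) * ∑ j, Real.sqrt (w j)) ^ 2) :
    variance (fun ω => f ((n : ℝ) * (a ω (r ω) * b ω (r ω)))) ℙ ≤
      2 * Cf ^ 2 * ((n : ℝ) * ν + μ) +
        2 * variance (fun ω => f (∑ j, a ω j * b ω j)) ℙ := by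
  have hn' : (n : ℝ) ≠ 0 := Nat.cast_ne_zero.mpr hn.ne'
  set S : Ω → ℝ := fun ω => ∑ j, a ω j * b ω j with hSdef
  set X : Ω → ℝ := fun ω => (n : ℝ) * (a ω (r ω) * b ω (r ω)) with hXdef
  set I : Fin n → Ω → ℝ := fun j ω => if r ω = j then 1 else 0 with hIdef
  -- measurability
  have hSmeas : Measurable S := Finset.measurable_sum _ (fun j _ => (ha j).mul (hb j))
  have hrj : ∀ j : Fin n, MeasurableSet {ω | r ω = j} := fun j => hr (measurableSet_singleton j)
  have hXeq : ∀ ω, X ω = ∑ j, if r ω = j then (n:ℝ) * (a ω j * b ω j) else 0 := by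
    intro ω
    rw [Finset.sum_ite_eq]
    simp [hXdef]
  have hXmeas : Measurable X := by
    have e : X = fun ω => ∑ j, if r ω = j then (n:ℝ) * (a ω j * b ω j) else 0 := funext hXeq
    rw [e]
    exact Finset.measurable_sum _ fun j _ =>
      Measurable.ite (hrj j) (((ha j).mul (hb j)).const_mul _) measurable_const
  -- L² facts
  have hSL2 : MemLp S 2 ℙ := (memLp_two_iff_integrable_sq hSmeas.aestronglyMeasurable).2 hab_sq_int
  have habj : ∀ j, MemLp (fun ω => a ω j * b ω j) 2 ℙ := fun j => by
    refine (memLp_two_iff_integrable_sq ((ha j).mul (hb j)).aestronglyMeasurable).2 ?_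
    simpa [mul_pow] using hw_int j
  have hXL2 : MemLp X 2 ℙ := by
    have e : X = fun ω => ∑ j, ({ω' | r ω' = j}.indicator (fun ω' => (n:ℝ) * (a ω' j * b ω' j)) ω) := by
      funext ω
      rw [hXeq ω]
      refine Finset.sum_congr rfl fun j _ => ?_
      simp [Set.indicator_apply]
    rw [e]
    exact memLp_finset_sum _ fun j _ => MemLp.indicator (hrj j) ((habj j).const_mul (n:ℝ))
  -- indicator integrals
  have hIind : ∀ j, (I j) = Set.indicator {ω | r ω = j} (fun _ => (1:ℝ)) := by
    intro j; funext ω; simp [hIdef, Set.indicator_apply]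
  have hIint : ∀ j, Integrable (I j) ℙ := fun j => by
    rw [hIind j]; exact (integrable_const 1).indicator (hrj j)
  have hIval : ∀ j, ∫ ω, I j ω ∂ℙ = (n:ℝ)⁻¹ := fun j => by
    rw [hIind j, integral_indicator_const (1:ℝ) (hrj j), measureReal_def, hr_unif j]
    simp
  -- independence & product rule
  have hIndep : ∀ (j : Fin n) (g : ((Fin n → ℝ) × (Fin n → ℝ)) → ℝ), Measurable g →
      IndepFun (I j) (fun ω => g (a ω, b ω)) ℙ := by
    intro j g hg
    have h := (hr_ab.comp hg
      (Measurable.of_discrete (f := fun k : Fin n => if k = j then (1:ℝ) else 0))).symm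
    exact h
  have hmul : ∀ (j : Fin n) (g : ((Fin n → ℝ) × (Fin n → ℝ)) → ℝ), Measurable g →
      Integrable (fun ω => g (a ω, b ω)) ℙ →
      ∫ ω, I j ω * g (a ω, b ω) ∂ℙ = (n:ℝ)⁻¹ * ∫ ω, g (a ω, b ω) ∂ℙ := by
    intro j g hg hgi
    have h := (hIndep j g hg).integral_mul_eq_mul_integral (hIint j).aestronglyMeasurable hgi.aestronglyMeasurable
    rw [show (fun ω => I j ω * g (a ω, b ω)) = (I j * fun ω => g (a ω, b ω)) from rfl, h, hIval j]
  -- integrable building blocks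
  have hIG : ∀ (j : Fin n) (h : Ω → ℝ), Integrable h ℙ → Integrable (fun ω => I j ω * h ω) ℙ := by
    intro j h hh
    have e : (fun ω => I j ω * h ω) = {ω | r ω = j}.indicator h := by
      funext ω; simp [hIdef, Set.indicator_apply, ite_mul]
    rw [e]; exact hh.indicator (hrj j)
  have hGint : ∀ j, Integrable (fun ω => ((n:ℝ) * (a ω j * b ω j))^2) ℙ := fun j => by
    have := (hw_int j).const_mul ((n:ℝ)^2)
    simpa [mul_pow] using this
  -- E[X²] = n * Σ w
  have hX2 : ∫ ω, X ω ^ 2 ∂ℙ = (n:ℝ) * ∑ j, w j := by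
    have hpt : ∀ ω, X ω ^ 2 = ∑ j, I j ω * ((n:ℝ) * (a ω j * b ω j))^2 := by
      intro ω
      have e : ∀ j, I j ω * ((n:ℝ) * (a ω j * b ω j))^2
          = if r ω = j then ((n:ℝ) * (a ω j * b ω j))^2 else 0 := fun j => by
        simp [hIdef, ite_mul]
      simp_rw [e, Finset.sum_ite_eq]
      simp [hXdef]
    simp_rw [hpt]
    rw [integral_finset_sum _ (fun j _ => hIG j _ (hGint j))]
    have e2 : ∀ j : Fin n, ∫ ω, I j ω * ((n:ℝ) * (a ω j * b ω j))^2 ∂ℙ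
        = (n:ℝ)⁻¹ * ((n:ℝ)^2 * w j) := by
      intro j
      have hg : Measurable (fun p : (Fin n → ℝ) × (Fin n → ℝ) => ((n:ℝ) * (p.1 j * p.2 j))^2) := by
        fun_prop
      rw [hmul j _ hg (hGint j)]
      congr 1
      simp_rw [mul_pow]
      rw [integral_const_mul, hw j]
    simp_rw [e2]
    rw [← Finset.mul_sum, ← Finset.mul_sum]
    field_simp
  -- E[X·S] = E[S²]
  have habjS : ∀ j, Integrable (fun ω => a ω j * b ω j * S ω) ℙ := fun j =>
    aux_L2_mul (habj j) hSL2
  have hXS : ∫ ω, X ω * S ω ∂ℙ = ∫ ω, S ω ^ 2 ∂ℙ := by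
    have hpt : ∀ ω, X ω * S ω = ∑ j, I j ω * ((n:ℝ) * (a ω j * b ω j * S ω)) := by
      intro ω
      have e : ∀ j, I j ω * ((n:ℝ) * (a ω j * b ω j * S ω))
          = if r ω = j then (n:ℝ) * (a ω j * b ω j * S ω) else 0 := fun j => by
        simp [hIdef, ite_mul]
      simp_rw [e, Finset.sum_ite_eq]
      simp [hXdef]
      ring
    simp_rw [hpt]
    have hint : ∀ j : Fin n, Integrable (fun ω => (n:ℝ) * (a ω j * b ω j * S ω)) ℙ := fun j =>
      (habjS j).const_mul _
    rw [integral_finset_sum _ (fun j _ => hIG j _ (hint j))]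
    have e2 : ∀ j : Fin n, ∫ ω, I j ω * ((n:ℝ) * (a ω j * b ω j * S ω)) ∂ℙ
        = ∫ ω, a ω j * b ω j * S ω ∂ℙ := by
      intro j
      have hg : Measurable (fun p : (Fin n → ℝ) × (Fin n → ℝ) =>
          (n:ℝ) * (p.1 j * p.2 j * (∑ k, p.1 k * p.2 k))) := by fun_prop
      rw [hmul j _ hg (hint j), integral_const_mul]
      rw [inv_mul_cancel_left₀ hn']
    simp_rw [e2]
    rw [← integral_finset_sum _ (fun j _ => habjS j)]
    congr 1
    funext ω
    rw [← Finset.sum_mul, sq]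
  -- the key identity : E[(S-X)²] = n ν + μ
  have hXSint : Integrable (fun ω => X ω * S ω) ℙ := aux_L2_mul hXL2 hSL2
  have hX2int : Integrable (fun ω => X ω ^ 2) ℙ := hXL2.integrable_sq
  have hS2int : Integrable (fun ω => S ω ^ 2) ℙ := hab_sq_int
  have hkey : ∫ ω, (S ω - X ω)^2 ∂ℙ = (n:ℝ) * ν + μ := by
    have expand : ∀ ω, (S ω - X ω)^2 = S ω ^ 2 - 2 * (X ω * S ω) + X ω ^ 2 := fun ω => by ring
    simp_rw [expand]
    have i1 : Integrable (fun ω => S ω ^ 2 - 2 * (X ω * S ω)) ℙ := hS2int.sub (hXSint.const_mul 2)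
    have i2 : Integrable (fun ω => 2 * (X ω * S ω)) ℙ := hXSint.const_mul 2
    rw [integral_add i1 hX2int, integral_sub hS2int i2, integral_const_mul, hXS, hX2]
    have hsq : ∀ i : Fin n, Real.sqrt (w i) ^ 2 = w i := fun i => Real.sq_sqrt (hw_pos i).le
    have hν' : ∑ i, (Real.sqrt (w i) - (1 / (n:ℝ)) * ∑ j, Real.sqrt (w j)) ^ 2
        = (∑ i, w i) - (∑ j, Real.sqrt (w j))^2 / n := by
      have e : ∀ i : Fin n, (Real.sqrt (w i) - (1 / (n:ℝ)) * ∑ j, Real.sqrt (w j)) ^ 2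
          = w i - (2 * ((1/(n:ℝ)) * ∑ j, Real.sqrt (w j))) * Real.sqrt (w i)
            + ((1/(n:ℝ)) * ∑ j, Real.sqrt (w j))^2 := fun i => by
        rw [sub_sq, hsq i]; ring
      rw [Finset.sum_congr rfl (fun i _ => e i), Finset.sum_add_distrib,
        Finset.sum_sub_distrib, ← Finset.mul_sum, Finset.sum_const, Finset.card_univ,
        Fintype.card_fin, nsmul_eq_mul]
      field_simp
      ring
    rw [hμ, hν, hν']
    field_simp
    ring
  -- Lipschitz facts
  have hflip : LipschitzWith (Real.nnabs Cf) f := by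
    refine LipschitzWith.of_dist_le_mul fun x y => ?_
    rw [Real.dist_eq, Real.dist_eq, Real.coe_nnabs]
    exact (hf x y).trans (mul_le_mul_of_nonneg_right (le_abs_self Cf) (abs_nonneg _))
  have hfmeas : Measurable f := hflip.continuous.measurable
  have habs : ∀ x y, (f x - f y)^2 ≤ Cf^2 * (x - y)^2 := by
    intro x y
    calc (f x - f y)^2 = |f x - f y|^2 := (sq_abs _).symm
      _ ≤ (Cf * |x - y|)^2 := pow_le_pow_left₀ (abs_nonneg _) (hf x y) 2
      _ = Cf^2 * (x - y)^2 := by rw [mul_pow, sq_abs]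
  -- L² facts for f
  have hGL2 : MemLp (fun ω => f (S ω)) 2 ℙ := hfL2
  have hDL2 : MemLp (fun ω => f (X ω) - f (S ω)) 2 ℙ := by
    have hmb : MemLp (fun ω => Cf * (X ω - S ω)) 2 ℙ := (hXL2.sub hSL2).const_mul Cf
    refine MemLp.of_le hmb
      (((hfmeas.comp hXmeas).sub (hfmeas.comp hSmeas)).aestronglyMeasurable) ?_
    filter_upwards with ω
    rw [Real.norm_eq_abs, Real.norm_eq_abs, abs_mul]
    exact (hf _ _).trans (mul_le_mul_of_nonneg_right (le_abs_self _) (abs_nonneg _))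
  have hFL2 : MemLp (fun ω => f (X ω)) 2 ℙ := by
    have h1 := hDL2.add hGL2
    have h2 : ((fun ω => f (X ω) - f (S ω)) + fun ω => f (S ω)) = fun ω => f (X ω) := by
      funext ω; simp
    rwa [h2] at h1
  -- assemble
  set c : ℝ := ∫ ω, f (S ω) ∂ℙ with hc
  have step1 : variance (fun ω => f (X ω)) ℙ ≤ ∫ ω, (f (X ω) - c)^2 ∂ℙ := aux_var_le hFL2 c
  have int1 : Integrable (fun ω => (f (X ω) - c)^2) ℙ := (hFL2.sub (memLp_const c)).integrable_sq
  have intD : Integrable (fun ω => (f (X ω) - f (S ω))^2) ℙ := hDL2.integrable_sq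
  have intG : Integrable (fun ω => (f (S ω) - c)^2) ℙ := (hGL2.sub (memLp_const c)).integrable_sq
  have step2 : ∫ ω, (f (X ω) - c)^2 ∂ℙ
      ≤ ∫ ω, (2 * (f (X ω) - f (S ω))^2 + 2 * (f (S ω) - c)^2) ∂ℙ := by
    refine integral_mono int1 ((intD.const_mul 2).add (intG.const_mul 2)) fun ω => ?_
    nlinarith [sq_nonneg ((f (X ω) - f (S ω)) - (f (S ω) - c))]
  have step3 : ∫ ω, (2 * (f (X ω) - f (S ω))^2 + 2 * (f (S ω) - c)^2) ∂ℙ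
      = 2 * (∫ ω, (f (X ω) - f (S ω))^2 ∂ℙ) + 2 * (∫ ω, (f (S ω) - c)^2 ∂ℙ) := by
    rw [integral_add (intD.const_mul 2) (intG.const_mul 2), integral_const_mul, integral_const_mul]
  have step4 : ∫ ω, (f (X ω) - f (S ω))^2 ∂ℙ ≤ Cf^2 * ((n:ℝ) * ν + μ) := by
    have hmono : ∫ ω, (f (X ω) - f (S ω))^2 ∂ℙ ≤ ∫ ω, Cf^2 * (X ω - S ω)^2 ∂ℙ :=
      integral_mono intD (((hXL2.sub hSL2).integrable_sq).const_mul _) fun ω => habs _ _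
    rw [integral_const_mul] at hmono
    have e : (fun ω => (X ω - S ω)^2) = fun ω => (S ω - X ω)^2 := by funext ω; ring
    rw [e, hkey] at hmono
    exact hmono
  have step5 : ∫ ω, (f (S ω) - c)^2 ∂ℙ = variance (fun ω => f (S ω)) ℙ := by
    rw [variance_eq_integral hGL2.aestronglyMeasurable.aemeasurable]
  show variance (fun ω => f (X ω)) ℙ
      ≤ 2 * Cf ^ 2 * ((n:ℝ) * ν + μ) + 2 * variance (fun ω => f (S ω)) ℙ
  linarith [step1, step2, step3, step4, step5]
end

section
/- Let a, b ∈ ℝ^n be random vectors whose 2n coordinates are mutually independent with finite nonzero moments w_j = E[a_j^2 b_j^2] and E[(aᵀb)^2] < ∞, let f : ℝ → ℝ be Lipschitz with constant C_f with f(aᵀb) square-integrable, and let M ≥ 2, L ≥ 0 be integers. Let X_L^{(1)}, ..., X_L^{(N)} be N i.i.d. copies of the sketched inner product of a, b using M^L uniformly sampled indices, and define the Monte Carlo estimator P̂ := (1/N) Σ_{k=1}^N f(X_L^{(k)}). Then E[(P̂ − E[P̂])^2] ≤ (1/N) ( C_f M^{−L/2} (n·ν + μ)^{1/2} + Var[f(aᵀb)]^{1/2}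 )^2, where μ = (Σ_{j=1}^n √(w_j))^2 − E[(aᵀb)^2] and ν = Σ_{i=1}^n ( √(w_i) − (1/n) Σ_{j=1}^n √(w_j) )^2. -/
open MeasureTheory ProbabilityTheory

private lemma mc_integrable_mul' {Ω : Type*} [MeasureSpace Ω]
    {u v : Ω → ℝ} (hu : MemLp u 2 ℙ) (hv : MemLp v 2 ℙ) :
    Integrable (fun ω => u ω * v ω) ℙ := by
  have : ENNReal.HolderTriple 2 2 1 := ⟨by rw [inv_one, ENNReal.inv_two_add_inv_two]⟩
  have h := hv.smul (φ := u) hu (r := 1)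
  rw [← memLp_one_iff_integrable]
  exact h


private lemma mc_var_le {Ω : Type*} [MeasureSpace Ω] [IsProbabilityMeasure (ℙ : Measure Ω)]
    {Z : Ω → ℝ} (hZ : MemLp Z 2 ℙ) (c : ℝ) :
    variance Z ℙ ≤ ∫ ω, (Z ω - c) ^ 2 ∂ℙ := by
  have hZ1 : Integrable Z ℙ := hZ.integrable one_le_two
  have hZ2 : Integrable (fun ω => Z ω ^ 2) ℙ := hZ.integrable_sq
  have expand : ∫ ω, (Z ω - c) ^ 2 ∂ℙ
      = (∫ ω, Z ω ^ 2 ∂ℙ) - 2 * c * (∫ ω, Z ω ∂ℙ) + c ^ 2 := by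
    have : (fun ω => (Z ω - c) ^ 2) = fun ω => Z ω ^ 2 - 2 * c * Z ω + c ^ 2 := by
      funext ω; ring
    have i1 : Integrable (fun ω => Z ω ^ 2 - 2 * c * Z ω) ℙ := hZ2.sub (hZ1.const_mul _)
    rw [this, integral_add i1 (integrable_const _), integral_sub hZ2 (hZ1.const_mul _),
      integral_const_mul, integral_const]
    simp
  have hvar : variance Z ℙ = (∫ ω, Z ω ^ 2 ∂ℙ) - (∫ ω, Z ω ∂ℙ) ^ 2 := by
    rw [variance_eq_sub hZ]; simp [Pi.pow_apply]
  rw [hvar, expand]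
  nlinarith [sq_nonneg ((∫ ω, Z ω ∂ℙ) - c)]

private lemma mc_l2_triangle {Ω : Type*} [MeasureSpace Ω]
    {u v : Ω → ℝ} (hu : MemLp u 2 ℙ) (hv : MemLp v 2 ℙ)
    (hcs : ∫ ω, u ω * v ω ∂ℙ ≤ Real.sqrt (∫ ω, u ω ^ 2 ∂ℙ) * Real.sqrt (∫ ω, v ω ^ 2 ∂ℙ)) :
    ∫ ω, (u ω + v ω) ^ 2 ∂ℙ
      ≤ (Real.sqrt (∫ ω, u ω ^ 2 ∂ℙ) + Real.sqrt (∫ ω, v ω ^ 2 ∂ℙ)) ^ 2 := by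
  have hu2 : Integrable (fun ω => u ω ^ 2) ℙ := hu.integrable_sq
  have hv2 : Integrable (fun ω => v ω ^ 2) ℙ := hv.integrable_sq
  have huv : Integrable (fun ω => u ω * v ω) ℙ := mc_integrable_mul' hu hv
  have expand : ∫ ω, (u ω + v ω) ^ 2 ∂ℙ
      = (∫ ω, u ω ^ 2 ∂ℙ) + 2 * (∫ ω, u ω * v ω ∂ℙ) + (∫ ω, v ω ^ 2 ∂ℙ) := by
    have : (fun ω => (u ω + v ω) ^ 2) = fun ω => u ω ^ 2 + 2 * (u ω * v ω) + v ω ^ 2 := by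
      funext ω; ring
    have i1 : Integrable (fun ω => u ω ^ 2 + 2 * (u ω * v ω)) ℙ := hu2.add (huv.const_mul _)
    rw [this, integral_add i1 hv2, integral_add hu2 (huv.const_mul _), integral_const_mul]
  have hA2 : Real.sqrt (∫ ω, u ω ^ 2 ∂ℙ) ^ 2 = ∫ ω, u ω ^ 2 ∂ℙ :=
    Real.sq_sqrt (integral_nonneg fun ω => sq_nonneg _)
  have hB2 : Real.sqrt (∫ ω, v ω ^ 2 ∂ℙ) ^ 2 = ∫ ω, v ω ^ 2 ∂ℙ :=
    Real.sq_sqrt (integral_nonneg fun ω => sq_nonneg _)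
  rw [expand]; nlinarith


private lemma mc_cauchy_schwarz {Ω : Type*} [MeasureSpace Ω]
    {u v : Ω → ℝ} (hu : MemLp u 2 ℙ) (hv : MemLp v 2 ℙ) :
    ∫ ω, u ω * v ω ∂ℙ ≤ Real.sqrt (∫ ω, u ω ^ 2 ∂ℙ) * Real.sqrt (∫ ω, v ω ^ 2 ∂ℙ) := by
  set A := Real.sqrt (∫ ω, u ω ^ 2 ∂ℙ) with hA
  set B := Real.sqrt (∫ ω, v ω ^ 2 ∂ℙ) with hB
  have hAnn : 0 ≤ A := Real.sqrt_nonneg _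
  have hBnn : 0 ≤ B := Real.sqrt_nonneg _
  have hA2 : A ^ 2 = ∫ ω, u ω ^ 2 ∂ℙ := Real.sq_sqrt (integral_nonneg fun ω => sq_nonneg _)
  have hB2 : B ^ 2 = ∫ ω, v ω ^ 2 ∂ℙ := Real.sq_sqrt (integral_nonneg fun ω => sq_nonneg _)
  have hu2 : Integrable (fun ω => u ω ^ 2) ℙ := hu.integrable_sq
  have hv2 : Integrable (fun ω => v ω ^ 2) ℙ := hv.integrable_sq
  have huv : Integrable (fun ω => u ω * v ω) ℙ := mc_integrable_mul' hu hv
  rcases eq_or_lt_of_le hAnn with hA0 | hA0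
  · -- A = 0 : u = 0 a.e.
    have hu0 : (fun ω => u ω ^ 2) =ᵐ[ℙ] 0 := by
      rw [← integral_eq_zero_iff_of_nonneg_ae (ae_of_all _ fun ω => sq_nonneg (u ω)) hu2]
      rw [← hA2, ← hA0]; ring
    have huv0 : (fun ω => u ω * v ω) =ᵐ[ℙ] 0 := by
      filter_upwards [hu0] with ω hω
      have : u ω = 0 := by simpa [pow_eq_zero_iff] using hω
      simp [this]
    rw [integral_congr_ae huv0]
    simp [← hA0]
  rcases eq_or_lt_of_le hBnn with hB0 | hB0
  · have hv0 : (fun ω => v ω ^ 2) =ᵐ[ℙ] 0 := by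
      rw [← integral_eq_zero_iff_of_nonneg_ae (ae_of_all _ fun ω => sq_nonneg (v ω)) hv2]
      rw [← hB2, ← hB0]; ring
    have huv0 : (fun ω => u ω * v ω) =ᵐ[ℙ] 0 := by
      filter_upwards [hv0] with ω hω
      have : v ω = 0 := by simpa [pow_eq_zero_iff] using hω
      simp [this]
    rw [integral_congr_ae huv0]
    simp [← hB0]
  · -- A, B > 0
    have key : 0 ≤ ∫ ω, (B * u ω - A * v ω) ^ 2 ∂ℙ := integral_nonneg fun ω => sq_nonneg _
    have expand : ∫ ω, (B * u ω - A * v ω) ^ 2 ∂ℙ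
        = B ^ 2 * (∫ ω, u ω ^ 2 ∂ℙ) - 2 * A * B * (∫ ω, u ω * v ω ∂ℙ)
          + A ^ 2 * (∫ ω, v ω ^ 2 ∂ℙ) := by
      have : (fun ω => (B * u ω - A * v ω) ^ 2)
          = fun ω => B ^ 2 * u ω ^ 2 - 2 * A * B * (u ω * v ω) + A ^ 2 * v ω ^ 2 := by
        funext ω; ring
      have i1 : Integrable (fun ω => B ^ 2 * u ω ^ 2 - 2 * A * B * (u ω * v ω)) ℙ :=
        (hu2.const_mul _).sub (huv.const_mul _)
      rw [this, integral_add i1 (hv2.const_mul _),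
        integral_sub (hu2.const_mul _) (huv.const_mul _), integral_const_mul, integral_const_mul,
        integral_const_mul]
    rw [expand, ← hA2, ← hB2] at key
    have h2 : 2 * A * B * (∫ ω, u ω * v ω ∂ℙ) ≤ 2 * A * B * (A * B) := by nlinarith
    have hpos : 0 < 2 * A * B := by positivity
    exact le_of_mul_le_mul_left (by linarith) hpos


private theorem mc_sketch_moment {Ω : Type*} [MeasureSpace Ω]
    [IsProbabilityMeasure (ℙ : Measure Ω)]
    (n : ℕ) (hn : 0 < n) (a b : Ω → Fin n → ℝ)
    (ha : ∀ j, Measurable fun ω => a ω j) (hb : ∀ j, Measurable fun ω => b ω j)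
    (w : Fin n → ℝ) (hw : ∀ j, w j = ∫ ω, (a ω j) ^ 2 * (b ω j) ^ 2 ∂ℙ)
    (hw_int : ∀ j, Integrable (fun ω => (a ω j) ^ 2 * (b ω j) ^ 2) ℙ)
    (hab_sq_int : Integrable (fun ω => (∑ j, a ω j * b ω j) ^ 2) ℙ)
    (s : ℕ) (hs : 0 < s)
    (r : Ω → Fin s → Fin n) (hr : ∀ i, Measurable fun ω => r ω i)
    (hr_iid : iIndepFun
      (fun i ω => r ω i) ℙ)
    (hr_unif : ∀ i j, ℙ {ω | r ω i = j} = (n : ENNReal)⁻¹)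
    (hr_ab : IndepFun (fun ω => (a ω, b ω)) r ℙ) :
    Integrable (fun ω =>
      ((n : ℝ) / (s : ℝ) * ∑ i, a ω (r ω i) * b ω (r ω i) - ∑ j, a ω j * b ω j) ^ 2) ℙ ∧
    ∫ ω, ((n : ℝ) / (s : ℝ) * ∑ i, a ω (r ω i) * b ω (r ω i) - ∑ j, a ω j * b ω j) ^ 2 ∂ℙ
      = ((n : ℝ) * ∑ j, w j - ∫ ω, (∑ j, a ω j * b ω j) ^ 2 ∂ℙ) / (s : ℝ) := by
  classical
  have hnR : (0:ℝ) < (n:ℝ) := by exact_mod_cast hn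
  have hsR : (0:ℝ) < (s:ℝ) := by exact_mod_cast hs
  set q : Fin n → Ω → ℝ := fun j ω => a ω j * b ω j with hq_def
  set S : Ω → ℝ := fun ω => ∑ j, q j ω with hS_def
  set u : Fin s → Ω → ℝ := fun i ω => q (r ω i) ω with hu_def
  set e : Fin s → Fin n → Ω → ℝ := fun i j ω => if r ω i = j then 1 else 0 with he_def
  set c : ℝ := (n : ℝ) / (s : ℝ) with hc_def
  -- measurability
  have hqm : ∀ j, Measurable (q j) := fun j => (ha j).mul (hb j)
  have hSm : Measurable S := by
    apply Finset.measurable_sum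
    exact fun j _ => hqm j
  have hA : ∀ i j, MeasurableSet {ω | r ω i = j} :=
    fun i j => (hr i) (measurableSet_singleton j)
  have hem : ∀ i j, Measurable (e i j) := by
    intro i j
    exact Measurable.ite (hA i j) measurable_const measurable_const
  have hum : ∀ i, Measurable (u i) := by
    intro i
    have : u i = fun ω => ∑ j, e i j ω * q j ω := by
      funext ω
      simp only [hu_def, he_def, ite_mul, one_mul, zero_mul, Finset.sum_ite_eq,
        Finset.mem_univ, if_true]
    rw [this]
    exact Finset.measurable_sum _ fun j _ => (hem i j).mul (hqm j)
  -- L2 membership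
  have hq2 : ∀ j, MemLp (q j) 2 ℙ := by
    intro j
    refine (memLp_two_iff_integrable_sq (hqm j).aestronglyMeasurable).2 ?_
    simp only [hq_def, mul_pow]
    exact hw_int j
  have hS2 : MemLp S 2 ℙ := by
    refine (memLp_two_iff_integrable_sq hSm.aestronglyMeasurable).2 ?_
    simp only [hS_def, hq_def]
    exact hab_sq_int
  have iqq : ∀ j k, Integrable (fun ω => q j ω * q k ω) ℙ :=
    fun j k => mc_integrable_mul' (hq2 j) (hq2 k)
  have iqS : ∀ j, Integrable (fun ω => q j ω * S ω) ℙ :=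
    fun j => mc_integrable_mul' (hq2 j) hS2
  -- indicators: integrability and expectation
  have he_int : ∀ i j, Integrable (e i j) ℙ := by
    intro i j
    have h : Integrable ({ω | r ω i = j}.indicator fun _ => (1:ℝ)) ℙ :=
      (integrable_const 1).indicator (hA i j)
    have : ({ω | r ω i = j}.indicator (fun _ => (1:ℝ))) = e i j := by
      funext ω
      simp [Set.indicator_apply, he_def]
    rwa [this] at h
  have he_val : ∀ i j, ∫ ω, e i j ω ∂ℙ = (n:ℝ)⁻¹ := by
    intro i j
    have h1 : ∫ ω, ({ω | r ω i = j}).indicator 1 ω ∂ℙ = (ℙ {ω | r ω i = j}).toReal := by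
      exact integral_indicator_one (hA i j)
    have h2 : ({ω | r ω i = j}).indicator (1 : Ω → ℝ) = e i j := by
      funext ω
      simp [Set.indicator_apply, he_def]
    rw [h2] at h1
    rw [h1, hr_unif i j]
    simp [ENNReal.toReal_inv]
  have hee_val : ∀ i i', i ≠ i' → ∀ j k,
      ∫ ω, e i j ω * e i' k ω ∂ℙ = (n:ℝ)⁻¹ * (n:ℝ)⁻¹ := by
    intro i i' hii' j k
    have hsets : {ω | r ω i = j} ∩ {ω | r ω i' = k}
        = (fun ω => r ω i) ⁻¹' {j} ∩ (fun ω => r ω i') ⁻¹' {k} := rfl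
    have hmeas : ℙ ({ω | r ω i = j} ∩ {ω | r ω i' = k}) = (n:ENNReal)⁻¹ * (n:ENNReal)⁻¹ := by
      rw [hsets, (hr_iid.indepFun hii').measure_inter_preimage_eq_mul _ _
        (measurableSet_singleton j) (measurableSet_singleton k)]
      have e1 : ℙ ((fun ω => r ω i) ⁻¹' {j}) = (n:ENNReal)⁻¹ := hr_unif i j
      have e2 : ℙ ((fun ω => r ω i') ⁻¹' {k}) = (n:ENNReal)⁻¹ := hr_unif i' k
      rw [e1, e2]
    have h2 : (({ω | r ω i = j} ∩ {ω | r ω i' = k}).indicator (1 : Ω → ℝ))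
        = fun ω => e i j ω * e i' k ω := by
      funext ω
      by_cases h1 : r ω i = j <;> by_cases h2 : r ω i' = k <;>
        simp [Set.indicator_apply, he_def, h1, h2, Set.mem_inter_iff]
    have h1 : ∫ ω, (({ω | r ω i = j} ∩ {ω | r ω i' = k}).indicator 1) ω ∂ℙ
        = (ℙ ({ω | r ω i = j} ∩ {ω | r ω i' = k})).toReal := by
      exact integral_indicator_one ((hA i j).inter (hA i' k))
    rw [h2] at h1
    rw [h1, hmeas]
    simp [ENNReal.toReal_inv, ENNReal.toReal_mul]
  have he2_eq : ∀ (i i' : Fin s) (j k : Fin n),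
      (({ω | r ω i = j} ∩ {ω | r ω i' = k}).indicator (1 : Ω → ℝ))
        = fun ω => e i j ω * e i' k ω := by
    intro i i' j k
    funext ω
    by_cases h1 : r ω i = j <;> by_cases h2 : r ω i' = k <;>
      simp [Set.indicator_apply, he_def, h1, h2, Set.mem_inter_iff, Set.mem_setOf_eq]
  have he2_int : ∀ (i i' : Fin s) (j k : Fin n),
      Integrable (fun ω => e i j ω * e i' k ω) ℙ := by
    intro i i' j k
    have h : Integrable (({ω | r ω i = j} ∩ {ω | r ω i' = k}).indicator fun _ => (1:ℝ)) ℙ :=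
      (integrable_const 1).indicator ((hA i j).inter (hA i' k))
    rwa [show (({ω | r ω i = j} ∩ {ω | r ω i' = k}).indicator fun _ => (1:ℝ))
      = ({ω | r ω i = j} ∩ {ω | r ω i' = k}).indicator (1 : Ω → ℝ) from rfl, he2_eq] at h
  have hee_val : ∀ (i i' : Fin s), i ≠ i' → ∀ (j k : Fin n),
      ∫ ω, e i j ω * e i' k ω ∂ℙ = (n:ℝ)⁻¹ * (n:ℝ)⁻¹ := by
    intro i i' hii' j k
    have hmeas : ℙ ({ω | r ω i = j} ∩ {ω | r ω i' = k}) = (n:ENNReal)⁻¹ * (n:ENNReal)⁻¹ := by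
      rw [show {ω | r ω i = j} ∩ {ω | r ω i' = k}
          = (fun ω => r ω i) ⁻¹' {j} ∩ (fun ω => r ω i') ⁻¹' {k} from rfl,
        (hr_iid.indepFun hii').measure_inter_preimage_eq_mul _ _
          (measurableSet_singleton j) (measurableSet_singleton k)]
      have e1 : ℙ ((fun ω => r ω i) ⁻¹' {j}) = (n:ENNReal)⁻¹ := hr_unif i j
      have e2 : ℙ ((fun ω => r ω i') ⁻¹' {k}) = (n:ENNReal)⁻¹ := hr_unif i' k
      rw [e1, e2]
    have h1 : ∫ ω, (({ω | r ω i = j} ∩ {ω | r ω i' = k}).indicator 1) ω ∂ℙ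
        = (ℙ ({ω | r ω i = j} ∩ {ω | r ω i' = k})).toReal := by
      exact integral_indicator_one ((hA i j).inter (hA i' k))
    rw [he2_eq] at h1
    rw [h1, hmeas]
    simp [ENNReal.toReal_inv, ENNReal.toReal_mul]
  -- independence keys
  have key1 : ∀ (i : Fin s) (j : Fin n) (g : Ω → ℝ)
      (G : (Fin n → ℝ) × (Fin n → ℝ) → ℝ), Measurable G → (∀ ω, G (a ω, b ω) = g ω) →
      Integrable g ℙ →
      Integrable (fun ω => e i j ω * g ω) ℙ ∧
        ∫ ω, e i j ω * g ω ∂ℙ = (n:ℝ)⁻¹ * ∫ ω, g ω ∂ℙ := by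
    intro i j g G hG hGg hgi
    have hset1 : MeasurableSet {v : Fin s → Fin n | v i = j} := by
      have h : MeasurableSet ((fun v : Fin s → Fin n => v i) ⁻¹' {j}) :=
        measurable_pi_apply i (measurableSet_singleton j)
      exact h
    have hφ : Measurable (fun v : Fin s → Fin n => if v i = j then (1:ℝ) else 0) :=
      Measurable.ite hset1 measurable_const measurable_const
    have hind : IndepFun (e i j) g ℙ := by
      have h := (hr_ab.comp hG hφ).symm
      have e1 : ((fun v : Fin s → Fin n => if v i = j then (1:ℝ) else 0) ∘ r) = e i j := rfl
      have e2 : (G ∘ fun ω => (a ω, b ω)) = g := funext hGg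
      rwa [e1, e2] at h
    have hint : Integrable (e i j * g) ℙ := hind.integrable_mul (he_int i j) hgi
    refine ⟨hint, ?_⟩
    have hval := hind.integral_mul_eq_mul_integral (he_int i j).aestronglyMeasurable hgi.aestronglyMeasurable
    rw [show (∫ ω, e i j ω * g ω ∂ℙ) = integral ℙ (e i j * g) from rfl, hval,
      show integral ℙ (e i j) = ∫ ω, e i j ω ∂ℙ from rfl, he_val i j]
  have key2 : ∀ (i i' : Fin s), i ≠ i' → ∀ (j k : Fin n) (g : Ω → ℝ)
      (G : (Fin n → ℝ) × (Fin n → ℝ) → ℝ), Measurable G → (∀ ω, G (a ω, b ω) = g ω) →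
      Integrable g ℙ →
      Integrable (fun ω => e i j ω * e i' k ω * g ω) ℙ ∧
        ∫ ω, e i j ω * e i' k ω * g ω ∂ℙ = (n:ℝ)⁻¹ * (n:ℝ)⁻¹ * ∫ ω, g ω ∂ℙ := by
    intro i i' hii' j k g G hG hGg hgi
    have hφ : Measurable (fun v : Fin s → Fin n =>
        (if v i = j then (1:ℝ) else 0) * (if v i' = k then (1:ℝ) else 0)) :=
      by
        have hset1 : MeasurableSet {v : Fin s → Fin n | v i = j} := by
          have h : MeasurableSet ((fun v : Fin s → Fin n => v i) ⁻¹' {j}) :=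
            measurable_pi_apply i (measurableSet_singleton j)
          exact h
        have hset2 : MeasurableSet {v : Fin s → Fin n | v i' = k} := by
          have h : MeasurableSet ((fun v : Fin s → Fin n => v i') ⁻¹' {k}) :=
            measurable_pi_apply i' (measurableSet_singleton k)
          exact h
        exact (Measurable.ite hset1 measurable_const measurable_const).mul
          (Measurable.ite hset2 measurable_const measurable_const)
    have hind : IndepFun (fun ω => e i j ω * e i' k ω) g ℙ := by
      have h := (hr_ab.comp hG hφ).symm
      have e1 : ((fun v : Fin s → Fin n =>
          (if v i = j then (1:ℝ) else 0) * (if v i' = k then (1:ℝ) else 0)) ∘ r)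
          = fun ω => e i j ω * e i' k ω := rfl
      have e2 : (G ∘ fun ω => (a ω, b ω)) = g := funext hGg
      rwa [e1, e2] at h
    have hint : Integrable ((fun ω => e i j ω * e i' k ω) * g) ℙ :=
      hind.integrable_mul (he2_int i i' j k) hgi
    refine ⟨hint, ?_⟩
    have hval := hind.integral_mul_eq_mul_integral (he2_int i i' j k).aestronglyMeasurable hgi.aestronglyMeasurable
    rw [show (∫ ω, e i j ω * e i' k ω * g ω ∂ℙ)
        = integral ℙ ((fun ω => e i j ω * e i' k ω) * g) from rfl, hval,
      show integral ℙ (fun ω => e i j ω * e i' k ω) = ∫ ω, e i j ω * e i' k ω ∂ℙ from rfl,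
      hee_val i i' hii' j k]
  -- G functions
  have Gqq_m : ∀ j k : Fin n, Measurable (fun p : (Fin n → ℝ) × (Fin n → ℝ) =>
      (p.1 j * p.2 j) * (p.1 k * p.2 k)) := by
    intro j k
    exact (((measurable_pi_apply j).comp measurable_fst).mul
      ((measurable_pi_apply j).comp measurable_snd)).mul
      (((measurable_pi_apply k).comp measurable_fst).mul
        ((measurable_pi_apply k).comp measurable_snd))
  have GqS_m : ∀ j : Fin n, Measurable (fun p : (Fin n → ℝ) × (Fin n → ℝ) =>
      (p.1 j * p.2 j) * (∑ l, p.1 l * p.2 l)) := by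
    intro j
    exact (((measurable_pi_apply j).comp measurable_fst).mul
      ((measurable_pi_apply j).comp measurable_snd)).mul
      (Finset.measurable_sum _ fun l _ => ((measurable_pi_apply l).comp measurable_fst).mul
        ((measurable_pi_apply l).comp measurable_snd))
  -- basic integral identities
  have hq_sq : ∀ j, ∫ ω, q j ω * q j ω ∂ℙ = w j := by
    intro j
    rw [hw j]
    congr 1
    funext ω
    simp only [hq_def]
    ring
  have hqS_sum : ∑ j, ∫ ω, q j ω * S ω ∂ℙ = ∫ ω, S ω ^ 2 ∂ℙ := by
    rw [← integral_finset_sum _ (fun j _ => iqS j)]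
    congr 1
    funext ω
    rw [← Finset.sum_mul]
    show S ω * S ω = S ω ^ 2
    exact (pow_two _).symm
  have hqq_sum : ∑ j, ∑ k, ∫ ω, q j ω * q k ω ∂ℙ = ∫ ω, S ω ^ 2 ∂ℙ := by
    have hinner : ∀ j, ∑ k, ∫ ω, q j ω * q k ω ∂ℙ = ∫ ω, q j ω * S ω ∂ℙ := by
      intro j
      rw [← integral_finset_sum _ (fun k _ => iqq j k)]
      congr 1
      funext ω
      rw [← Finset.mul_sum]
    rw [Finset.sum_congr rfl fun j _ => hinner j, hqS_sum]
  -- representation of u in terms of indicators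
  have hrep1 : ∀ (i : Fin s) (g : Fin n → Ω → ℝ) (ω : Ω),
      g (r ω i) ω = ∑ j, e i j ω * g j ω := by
    intro i g ω
    simp only [he_def, ite_mul, one_mul, zero_mul, Finset.sum_ite_eq, Finset.mem_univ, if_true]
  -- expectations of products involving u
  have huS_val : ∀ i, ∫ ω, u i ω * S ω ∂ℙ = (n:ℝ)⁻¹ * ∫ ω, S ω ^ 2 ∂ℙ := by
    intro i
    have hptw : (fun ω => u i ω * S ω) = fun ω => ∑ j, e i j ω * (q j ω * S ω) := by
      funext ω
      exact hrep1 i (fun j ω => q j ω * S ω) ω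
    rw [hptw,
      integral_finset_sum _ (fun j _ => (key1 i j _ _ (GqS_m j) (fun ω => rfl) (iqS j)).1),
      Finset.sum_congr rfl (fun j _ => (key1 i j _ _ (GqS_m j) (fun ω => rfl) (iqS j)).2),
      ← Finset.mul_sum, hqS_sum]
  have iuS : ∀ i, Integrable (fun ω => u i ω * S ω) ℙ := by
    intro i
    have hptw : (fun ω => u i ω * S ω) = fun ω => ∑ j, e i j ω * (q j ω * S ω) := by
      funext ω
      exact hrep1 i (fun j ω => q j ω * S ω) ω
    rw [hptw]
    exact integrable_finset_sum _ fun j _ => (key1 i j _ _ (GqS_m j) (fun ω => rfl) (iqS j)).1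
  have huu_diag : ∀ i, ∫ ω, u i ω * u i ω ∂ℙ = (n:ℝ)⁻¹ * ∑ j, w j := by
    intro i
    have hptw : (fun ω => u i ω * u i ω) = fun ω => ∑ j, e i j ω * (q j ω * q j ω) := by
      funext ω
      exact hrep1 i (fun j ω => q j ω * q j ω) ω
    rw [hptw,
      integral_finset_sum _ (fun j _ => (key1 i j _ _ (Gqq_m j j) (fun ω => rfl) (iqq j j)).1),
      Finset.sum_congr rfl (fun j _ => (key1 i j _ _ (Gqq_m j j) (fun ω => rfl) (iqq j j)).2),
      ← Finset.mul_sum]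
    congr 1
    exact Finset.sum_congr rfl fun j _ => hq_sq j
  have hptw2 : ∀ (i i' : Fin s), (fun ω => u i ω * u i' ω)
      = fun ω => ∑ j, ∑ k, e i j ω * e i' k ω * (q j ω * q k ω) := by
    intro i i'
    funext ω
    rw [show u i ω = ∑ j, e i j ω * q j ω from hrep1 i q ω,
      show u i' ω = ∑ k, e i' k ω * q k ω from hrep1 i' q ω,
      Finset.sum_mul_sum]
    exact Finset.sum_congr rfl fun j _ => Finset.sum_congr rfl fun k _ => by ring
  have huu_off : ∀ (i i' : Fin s), i ≠ i' →
      ∫ ω, u i ω * u i' ω ∂ℙ = (n:ℝ)⁻¹ * (n:ℝ)⁻¹ * ∫ ω, S ω ^ 2 ∂ℙ := by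
    intro i i' hii'
    rw [hptw2 i i',
      integral_finset_sum _ (fun j _ => integrable_finset_sum _
        (fun k _ => (key2 i i' hii' j k _ _ (Gqq_m j k) (fun ω => rfl) (iqq j k)).1)),
      Finset.sum_congr rfl (fun j _ => integral_finset_sum _
        (fun k _ => (key2 i i' hii' j k _ _ (Gqq_m j k) (fun ω => rfl) (iqq j k)).1)),
      Finset.sum_congr rfl (fun j _ => Finset.sum_congr rfl
        (fun k _ => (key2 i i' hii' j k _ _ (Gqq_m j k) (fun ω => rfl) (iqq j k)).2))]
    simp_rw [← Finset.mul_sum]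
    rw [hqq_sum]
  have iuu : ∀ (i i' : Fin s), Integrable (fun ω => u i ω * u i' ω) ℙ := by
    intro i i'
    by_cases hii' : i = i'
    · subst hii'
      have hptw : (fun ω => u i ω * u i ω) = fun ω => ∑ j, e i j ω * (q j ω * q j ω) := by
        funext ω
        exact hrep1 i (fun j ω => q j ω * q j ω) ω
      rw [hptw]
      exact integrable_finset_sum _ fun j _ => (key1 i j _ _ (Gqq_m j j) (fun ω => rfl) (iqq j j)).1
    · rw [hptw2 i i']
      exact integrable_finset_sum _ fun j _ => integrable_finset_sum _
        fun k _ => (key2 i i' hii' j k _ _ (Gqq_m j k) (fun ω => rfl) (iqq j k)).1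
  -- assemble
  have hS2i : Integrable (fun ω => S ω ^ 2) ℙ := hS2.integrable_sq
  have iuuI : Integrable (fun ω => ∑ i, ∑ i', u i ω * u i' ω) ℙ :=
    integrable_finset_sum _ fun i _ => integrable_finset_sum _ fun i' _ => iuu i i'
  have iuSI : Integrable (fun ω => ∑ i, u i ω * S ω) ℙ :=
    integrable_finset_sum _ fun i _ => iuS i
  have hptw_main : (fun ω => (c * ∑ i, u i ω - S ω) ^ 2)
      = fun ω => c ^ 2 * (∑ i, ∑ i', u i ω * u i' ω) - 2 * c * (∑ i, u i ω * S ω) + S ω ^ 2 := by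
    funext ω
    rw [← Finset.sum_mul_sum, ← Finset.sum_mul]
    ring
  have hIntMain : Integrable (fun ω => (c * ∑ i, u i ω - S ω) ^ 2) ℙ := by
    rw [hptw_main]
    exact ((iuuI.const_mul _).sub (iuSI.const_mul _)).add hS2i
  have hrow : ∀ i, ∑ i', ∫ ω, u i ω * u i' ω ∂ℙ
      = (n:ℝ)⁻¹ * ∑ j, w j + ((s:ℝ) - 1) * ((n:ℝ)⁻¹ * (n:ℝ)⁻¹ * ∫ ω, S ω ^ 2 ∂ℙ) := by
    intro i
    rw [← Finset.add_sum_erase _ _ (Finset.mem_univ i), huu_diag i,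
      Finset.sum_congr rfl (fun i' hi' => huu_off i i' (Finset.ne_of_mem_erase hi').symm),
      Finset.sum_const, Finset.card_erase_of_mem (Finset.mem_univ i), Finset.card_univ,
      Fintype.card_fin, nsmul_eq_mul, Nat.cast_sub hs, Nat.cast_one]
  have hInt1 : ∫ ω, (∑ i, ∑ i', u i ω * u i' ω) ∂ℙ
      = (s:ℝ) * ((n:ℝ)⁻¹ * ∑ j, w j
          + ((s:ℝ) - 1) * ((n:ℝ)⁻¹ * (n:ℝ)⁻¹ * ∫ ω, S ω ^ 2 ∂ℙ)) := by
    rw [integral_finset_sum _ (fun i _ => integrable_finset_sum _ fun i' _ => iuu i i'),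
      Finset.sum_congr rfl (fun i _ => integral_finset_sum _ fun i' _ => iuu i i'),
      Finset.sum_congr rfl (fun i _ => hrow i), Finset.sum_const, Finset.card_univ,
      Fintype.card_fin, nsmul_eq_mul]
  have hInt2 : ∫ ω, (∑ i, u i ω * S ω) ∂ℙ = (s:ℝ) * ((n:ℝ)⁻¹ * ∫ ω, S ω ^ 2 ∂ℙ) := by
    rw [integral_finset_sum _ (fun i _ => iuS i),
      Finset.sum_congr rfl (fun i _ => huS_val i), Finset.sum_const, Finset.card_univ,
      Fintype.card_fin, nsmul_eq_mul]
  have hValMain : ∫ ω, (c * ∑ i, u i ω - S ω) ^ 2 ∂ℙ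
      = ((n:ℝ) * ∑ j, w j - ∫ ω, S ω ^ 2 ∂ℙ) / (s:ℝ) := by
    have i1 : Integrable (fun ω => c ^ 2 * (∑ i, ∑ i', u i ω * u i' ω)
        - 2 * c * (∑ i, u i ω * S ω)) ℙ := (iuuI.const_mul _).sub (iuSI.const_mul _)
    rw [hptw_main, integral_add i1 hS2i, integral_sub (iuuI.const_mul _) (iuSI.const_mul _),
      integral_const_mul, integral_const_mul, hInt1, hInt2, hc_def]
    have hn0 : (n:ℝ) ≠ 0 := ne_of_gt hnR
    have hs0 : (s:ℝ) ≠ 0 := ne_of_gt hsR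
    field_simp
    ring
  constructor
  · exact hIntMain
  · exact hValMain
/-- Variance of the standard Monte Carlo estimator
`P̂ = (1/N) ∑ₖ f(X_L^{(k)})` built from `N` i.i.d. copies `X_L^{(k)}` of the sketched
inner product `X_L = (n/M^L) ∑ᵢ a_{rᵢ} b_{rᵢ}` with `M^L` uniform indices:
`E[(P̂ − E[P̂])²] ≤ (1/N) (C_f M^(−L/2) (n ν + μ)^{1/2} + Var[f(aᵀb)]^{1/2})²`. -/
theorem monte_carlo_variance_inner_product
    {Ω : Type*} [MeasureSpace Ω] [IsProbabilityMeasure (ℙ : Measure Ω)]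
    (n : ℕ) (hn : 0 < n)
    (a b : Ω → Fin n → ℝ)
    (ha : ∀ j, Measurable fun ω => a ω j) (hb : ∀ j, Measurable fun ω => b ω j)
    (hab_indep : iIndepFun
      (Sum.elim (fun j ω => a ω j) (fun j ω => b ω j)) ℙ)
    (w : Fin n → ℝ) (hw : ∀ j, w j = ∫ ω, (a ω j) ^ 2 * (b ω j) ^ 2 ∂ℙ)
    (hw_int : ∀ j, Integrable (fun ω => (a ω j) ^ 2 * (b ω j) ^ 2) ℙ)
    (hw_pos : ∀ j, 0 < w j)
    (hab_sq_int : Integrable (fun ω => (∑ j, a ω j * b ω j) ^ 2) ℙ)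
    (f : ℝ → ℝ) (Cf : ℝ) (hf : ∀ x y, |f x - f y| ≤ Cf * |x - y|)
    (hfL2 : MemLp (fun ω => f (∑ j, a ω j * b ω j)) 2 ℙ)
    (M L : ℕ) (hM : 2 ≤ M)
    -- M^L i.i.d. uniform indices, independent of (a, b)
    (r : Ω → Fin (M ^ L) → Fin n) (hr : ∀ i, Measurable fun ω => r ω i)
    (hr_iid : iIndepFun
      (fun i ω => r ω i) ℙ)
    (hr_unif : ∀ i j, ℙ {ω | r ω i = j} = (n : ENNReal)⁻¹)
    (hr_ab : IndepFun (fun ω => (a ω, b ω)) r ℙ)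
    -- N i.i.d. copies of the sketched inner product X_L
    (N : ℕ) (hN : 0 < N)
    (X : Fin N → Ω → ℝ) (hX : ∀ k, Measurable (X k))
    (hX_indep : iIndepFun X ℙ)
    (hX_copy : ∀ k, Measure.map (X k) ℙ =
      Measure.map (fun ω => (n : ℝ) / (M ^ L : ℝ) * ∑ i, a ω (r ω i) * b ω (r ω i)) ℙ)
    (μ ν : ℝ)
    (hμ : μ = (∑ j, Real.sqrt (w j)) ^ 2 - ∫ ω, (∑ j, a ω j * b ω j) ^ 2 ∂ℙ)
    (hν : ν = ∑ i, (Real.sqrt (w i) - (1 / (n : ℝ)) * ∑ j, Real.sqrt (w j)) ^ 2) :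
    ∫ ω, ((1 / (N : ℝ)) * ∑ k, f (X k ω) -
        ∫ ω', (1 / (N : ℝ)) * ∑ k, f (X k ω') ∂ℙ) ^ 2 ∂ℙ ≤
      (1 / (N : ℝ)) *
        (Cf * (M : ℝ) ^ (-(L : ℝ) / 2) * Real.sqrt ((n : ℝ) * ν + μ) +
          Real.sqrt (variance (fun ω => f (∑ j, a ω j * b ω j)) ℙ)) ^ 2 := by
  classical
  have hM0 : 0 < M := lt_of_lt_of_le two_pos hM
  have hsN : 0 < M ^ L := pow_pos hM0 L
  have hnR : (0:ℝ) < (n:ℝ) := by exact_mod_cast hn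
  have hNR : (0:ℝ) < (N:ℝ) := by exact_mod_cast hN
  have hCf : 0 ≤ Cf := by
    have h := hf 0 1
    have h2 : |(0:ℝ) - 1| = 1 := by norm_num
    rw [h2, mul_one] at h
    exact le_trans (abs_nonneg _) h
  have hfm : Measurable f := by
    have hLip : LipschitzWith (Real.toNNReal Cf) f := by
      apply LipschitzWith.of_dist_le_mul
      intro x y
      rw [Real.dist_eq, Real.dist_eq]
      calc |f x - f y| ≤ Cf * |x - y| := hf x y
        _ = (Real.toNNReal Cf : ℝ) * |x - y| := by rw [Real.coe_toNNReal _ hCf]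
    exact hLip.continuous.measurable
  obtain ⟨hYsq_int, hYval⟩ := mc_sketch_moment n hn a b ha hb w hw hw_int hab_sq_int
    (M ^ L) hsN r hr hr_iid hr_unif hr_ab
  have hcast : ((M ^ L : ℕ) : ℝ) = ((M : ℝ) ^ L : ℝ) := by push_cast; ring
  rw [hcast] at hYsq_int hYval
  set S : Ω → ℝ := fun ω => ∑ j, a ω j * b ω j with hS_def
  set Y : Ω → ℝ := fun ω => (n : ℝ) / ((M : ℝ) ^ L) * ∑ i, a ω (r ω i) * b ω (r ω i)
    with hY_def
  -- measurability
  have hA : ∀ i j, MeasurableSet {ω | r ω i = j} :=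
    fun i j => (hr i) (measurableSet_singleton j)
  have hum : ∀ i, Measurable fun ω => a ω (r ω i) * b ω (r ω i) := by
    intro i
    have : (fun ω => a ω (r ω i) * b ω (r ω i))
        = fun ω => ∑ j, if r ω i = j then a ω j * b ω j else 0 := by
      funext ω
      simp [Finset.sum_ite_eq, Finset.mem_univ]
    rw [this]
    exact Finset.measurable_sum _ fun j _ =>
      Measurable.ite (hA i j) ((ha j).mul (hb j)) measurable_const
  have hYm : Measurable Y := (Finset.measurable_sum _ fun i _ => hum i).const_mul _
  have hSm : Measurable S := Finset.measurable_sum _ fun j _ => (ha j).mul (hb j)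
  have hYS2 : MemLp (fun ω => Y ω - S ω) 2 ℙ := by
    refine (memLp_two_iff_integrable_sq ((hYm.sub hSm).aestronglyMeasurable)).2 ?_
    exact hYsq_int
  have hT_eq : ∫ ω, (Y ω - S ω) ^ 2 ∂ℙ
      = ((n:ℝ) * ∑ j, w j - ∫ ω, S ω ^ 2 ∂ℙ) / ((M:ℝ) ^ L) := hYval
  have hspos : (0:ℝ) < (M:ℝ) ^ L := by positivity
  have hT_nonneg : 0 ≤ (n:ℝ) * ∑ j, w j - ∫ ω, S ω ^ 2 ∂ℙ := by
    have h : 0 ≤ ∫ ω, (Y ω - S ω) ^ 2 ∂ℙ := integral_nonneg fun ω => sq_nonneg _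
    rw [hT_eq] at h
    have h2 := mul_nonneg h hspos.le
    rwa [div_mul_cancel₀ _ (ne_of_gt hspos)] at h2
  -- Lipschitz consequences
  have hLipSq : ∀ x y : ℝ, (f x - f y) ^ 2 ≤ Cf ^ 2 * (x - y) ^ 2 := by
    intro x y
    calc (f x - f y) ^ 2 = |f x - f y| ^ 2 := (sq_abs _).symm
      _ ≤ (Cf * |x - y|) ^ 2 := pow_le_pow_left₀ (abs_nonneg _) (hf x y) 2
      _ = Cf ^ 2 * (x - y) ^ 2 := by rw [mul_pow, sq_abs]
  have hdiff2 : MemLp (fun ω => f (Y ω) - f (S ω)) 2 ℙ := by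
    refine MemLp.of_le ((hYS2.const_mul Cf))
      (((hfm.comp hYm).sub (hfm.comp hSm)).aestronglyMeasurable)
      (ae_of_all _ fun ω => ?_)
    rw [Real.norm_eq_abs, Real.norm_eq_abs, abs_mul, abs_of_nonneg hCf]
    exact hf _ _
  have hfY2 : MemLp (fun ω => f (Y ω)) 2 ℙ := by
    have h := hdiff2.add hfL2
    have he : ((fun ω => f (Y ω) - f (S ω)) + fun ω => f (∑ j, a ω j * b ω j))
        = fun ω => f (Y ω) := by
      funext ω
      simp only [Pi.add_apply]
      show f (Y ω) - f (S ω) + f (S ω) = f (Y ω)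
      ring
    rwa [he] at h
  -- moment transfer to the copies
  have hYme : AEMeasurable Y ℙ := hYm.aemeasurable
  have hfXk2 : ∀ k, MemLp (fun ω => f (X k ω)) 2 ℙ := by
    intro k
    have h1 : MemLp f 2 (Measure.map Y ℙ) :=
      (memLp_map_measure_iff hfm.aestronglyMeasurable hYme).2 hfY2
    have h2 : MemLp f 2 (Measure.map (X k) ℙ) := by
      rw [hX_copy k]; exact h1
    exact (memLp_map_measure_iff hfm.aestronglyMeasurable (hX k).aemeasurable).1 h2
  have hmom : ∀ (k : Fin N) (g : ℝ → ℝ), Measurable g →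
      ∫ ω, g (X k ω) ∂ℙ = ∫ ω, g (Y ω) ∂ℙ := by
    intro k g hg
    rw [← integral_map (hX k).aemeasurable hg.aestronglyMeasurable, hX_copy k,
      integral_map hYme hg.aestronglyMeasurable]
  have hvar_k : ∀ k, variance (fun ω => f (X k ω)) ℙ = variance (fun ω => f (Y ω)) ℙ := by
    intro k
    rw [variance_eq_sub (hfXk2 k), variance_eq_sub hfY2]
    have h1 := hmom k f hfm
    have h2 := hmom k (fun x => f x ^ 2) (hfm.pow_const 2)
    simp only [Pi.pow_apply]
    rw [h1, h2]
  -- variance of the estimator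
  have hP2 : MemLp (fun ω => (1 / (N:ℝ)) * ∑ k, f (X k ω)) 2 ℙ := by
    have hsum : MemLp (fun ω => ∑ k, f (X k ω)) 2 ℙ := by
      have h := memLp_finset_sum' (μ := ℙ) (p := 2) Finset.univ
        (f := fun k => fun ω => f (X k ω)) (fun k _ => hfXk2 k)
      rwa [show (∑ k ∈ Finset.univ, fun ω => f (X k ω)) = fun ω => ∑ k, f (X k ω) from by
        funext ω; simp] at h
    exact hsum.const_mul _
  have hLHS : ∫ ω, ((1 / (N:ℝ)) * ∑ k, f (X k ω) -
        ∫ ω', (1 / (N:ℝ)) * ∑ k, f (X k ω') ∂ℙ) ^ 2 ∂ℙ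
      = variance (fun ω => (1 / (N:ℝ)) * ∑ k, f (X k ω)) ℙ := by
    rw [variance_eq_integral hP2.aemeasurable]
  have hvar_split : variance (fun ω => ∑ k, f (X k ω)) ℙ
      = ∑ k : Fin N, variance (fun ω => f (X k ω)) ℙ := by
    have hpair : Set.Pairwise ↑(Finset.univ : Finset (Fin N))
        fun k l => IndepFun (fun ω => f (X k ω)) (fun ω => f (X l ω)) ℙ := by
      intro k _ l _ hkl
      exact (hX_indep.indepFun hkl).comp hfm hfm
    have h := IndepFun.variance_sum (μ := ℙ) (fun k _ => hfXk2 k) hpair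
    rwa [show (∑ k ∈ Finset.univ, fun ω => f (X k ω)) = fun ω => ∑ k, f (X k ω) from by
      funext ω; simp] at h
  have hvar_est : variance (fun ω => (1 / (N:ℝ)) * ∑ k, f (X k ω)) ℙ
      = (1 / (N:ℝ)) * variance (fun ω => f (Y ω)) ℙ := by
    rw [variance_const_mul, hvar_split, Finset.sum_congr rfl (fun k _ => hvar_k k),
      Finset.sum_const, Finset.card_univ, Fintype.card_fin, nsmul_eq_mul]
    field_simp
  -- bound on the variance of f ∘ Y
  set m : ℝ := ∫ ω, f (S ω) ∂ℙ with hm_def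
  have hfSm2 : MemLp (fun ω => f (S ω) - m) 2 ℙ := hfL2.sub (memLp_const m)
  have step1 : variance (fun ω => f (Y ω)) ℙ ≤ ∫ ω, (f (Y ω) - m) ^ 2 ∂ℙ :=
    mc_var_le hfY2 m
  have step2 : ∫ ω, (f (Y ω) - m) ^ 2 ∂ℙ
      ≤ (Real.sqrt (∫ ω, (f (Y ω) - f (S ω)) ^ 2 ∂ℙ)
          + Real.sqrt (∫ ω, (f (S ω) - m) ^ 2 ∂ℙ)) ^ 2 := by
    have hdecomp : (fun ω => (f (Y ω) - m) ^ 2)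
        = fun ω => ((f (Y ω) - f (S ω)) + (f (S ω) - m)) ^ 2 := by
      funext ω; ring
    calc ∫ ω, (f (Y ω) - m) ^ 2 ∂ℙ
        = ∫ ω, ((f (Y ω) - f (S ω)) + (f (S ω) - m)) ^ 2 ∂ℙ := by rw [hdecomp]
      _ ≤ _ := mc_l2_triangle hdiff2 hfSm2 (mc_cauchy_schwarz hdiff2 hfSm2)
  have hsqrt2 : ∫ ω, (f (S ω) - m) ^ 2 ∂ℙ = variance (fun ω => f (S ω)) ℙ := by
    rw [variance_eq_integral hfL2.aemeasurable]
  have hbound1 : ∫ ω, (f (Y ω) - f (S ω)) ^ 2 ∂ℙ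
      ≤ Cf ^ 2 * (((n:ℝ) * ∑ j, w j - ∫ ω, S ω ^ 2 ∂ℙ) / ((M:ℝ) ^ L)) := by
    have hmono : ∫ ω, (f (Y ω) - f (S ω)) ^ 2 ∂ℙ ≤ ∫ ω, Cf ^ 2 * (Y ω - S ω) ^ 2 ∂ℙ :=
      integral_mono hdiff2.integrable_sq (hYS2.integrable_sq.const_mul _)
        (fun ω => hLipSq _ _)
    rwa [integral_const_mul, hT_eq] at hmono
  -- algebra: n ν + μ = n ∑ w − ∫ S²
  have hμν : (n:ℝ) * ν + μ = (n:ℝ) * ∑ j, w j - ∫ ω, S ω ^ 2 ∂ℙ := by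
    rw [hμ, hν]
    have hsq : ∀ i : Fin n, (Real.sqrt (w i) - (1 / (n:ℝ)) * ∑ j, Real.sqrt (w j)) ^ 2
        = w i - 2 * ((1 / (n:ℝ)) * ∑ j, Real.sqrt (w j)) * Real.sqrt (w i)
          + ((1 / (n:ℝ)) * ∑ j, Real.sqrt (w j)) ^ 2 := by
      intro i
      rw [sub_sq, Real.sq_sqrt (hw_pos i).le]
      ring
    rw [Finset.sum_congr rfl fun i _ => hsq i]
    rw [Finset.sum_add_distrib, Finset.sum_sub_distrib, ← Finset.mul_sum,
      Finset.sum_const, Finset.card_univ, Fintype.card_fin, nsmul_eq_mul]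
    have hn0 : (n:ℝ) ≠ 0 := ne_of_gt hnR
    field_simp
    ring
  -- the rpow identity
  have hrpow : Real.sqrt (((n:ℝ) * ∑ j, w j - ∫ ω, S ω ^ 2 ∂ℙ) / ((M:ℝ) ^ L))
      = (M:ℝ) ^ (-(L:ℝ) / 2) * Real.sqrt ((n:ℝ) * ν + μ) := by
    rw [hμν, Real.sqrt_div hT_nonneg]
    have hMR : (0:ℝ) ≤ (M:ℝ) := by positivity
    have h1 : Real.sqrt ((M:ℝ) ^ L) = (M:ℝ) ^ ((L:ℝ) / 2) := by
      rw [show ((M:ℝ) ^ L) = (M:ℝ) ^ ((L:ℕ) : ℝ) from (Real.rpow_natCast _ _).symm,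
        Real.sqrt_eq_rpow, ← Real.rpow_mul hMR, mul_one_div]
    rw [h1, div_eq_mul_inv, ← Real.rpow_neg hMR, mul_comm]
    norm_num [neg_div]
  -- final chain
  rw [hLHS, hvar_est]
  have hchain : variance (fun ω => f (Y ω)) ℙ
      ≤ (Cf * (M:ℝ) ^ (-(L:ℝ) / 2) * Real.sqrt ((n:ℝ) * ν + μ)
          + Real.sqrt (variance (fun ω => f (S ω)) ℙ)) ^ 2 := by
    refine le_trans step1 (le_trans step2 ?_)
    have h1 : Real.sqrt (∫ ω, (f (Y ω) - f (S ω)) ^ 2 ∂ℙ)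
        ≤ Cf * (M:ℝ) ^ (-(L:ℝ) / 2) * Real.sqrt ((n:ℝ) * ν + μ) := by
      have h := Real.sqrt_le_sqrt hbound1
      rwa [Real.sqrt_mul (sq_nonneg Cf), Real.sqrt_sq hCf, hrpow, ← mul_assoc] at h
    have h2 : Real.sqrt (∫ ω, (f (S ω) - m) ^ 2 ∂ℙ)
        = Real.sqrt (variance (fun ω => f (S ω)) ℙ) := by rw [hsqrt2]
    rw [← h2]
    have hnn : 0 ≤ Real.sqrt (∫ ω, (f (Y ω) - f (S ω)) ^ 2 ∂ℙ)
        + Real.sqrt (∫ ω, (f (S ω) - m) ^ 2 ∂ℙ) :=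
      add_nonneg (Real.sqrt_nonneg _) (Real.sqrt_nonneg _)
    exact pow_le_pow_left₀ hnn (add_le_add_left h1 _) 2
  calc (1 / (N:ℝ)) * variance (fun ω => f (Y ω)) ℙ
      ≤ (1 / (N:ℝ)) * (Cf * (M:ℝ) ^ (-(L:ℝ) / 2) * Real.sqrt ((n:ℝ) * ν + μ)
          + Real.sqrt (variance (fun ω => f (S ω)) ℙ)) ^ 2 :=
        mul_le_mul_of_nonneg_left hchain (by positivity)
    _ = _ := rfl
end

section
/- Let A be a random m×n real matrix and B a random n×d real matrix such that all entries of A and B are mutually independent random variables, with finite nonzero moments E[‖A_{:,j}‖_2^2] and E[‖B_{j,:}‖_2^2] for each j, and E[‖AB‖_F^2] < ∞. Let s be a positive integer, and for a probability vector ξ on {1,...,n} with positive entries let Ẑ_s := (1/s) Σ_{i=1}^s A_{:,r_i} B_{r_i,:}/ξ_{r_i} where r_1,...,r_s are i.i.d. indices with distribution ξ, independent of (A,B). Then the probability ξ* given by ξ*_j = √(E[‖A_{:,j}‖_2^2]·E[‖B_{j,:}‖_2^2]) / Σ_{i=1}^n √(E[‖A_{:,i}‖_2^2]·E[‖B_{i,:}‖_2^2])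 minimizes E_{A,B}[ E_ξ[ ‖AB − Ẑ_s‖_F^2 ] ] over all positive probability vectors ξ, and the minimum value equals μ̄/s, where μ̄ = ( Σ_{j=1}^n √(E[‖A_{:,j}‖_2^2]·E[‖B_{j,:}‖_2^2]) )^2 − E[‖AB‖_F^2]. -/
namespace OSP
variable {s n : ℕ}

lemma sum_pi_prod (φ : Fin s → Fin n → ℝ) :
    ∑ ρ : Fin s → Fin n, ∏ t, φ t (ρ t) = ∏ t, ∑ j, φ t j := by
  rw [Finset.prod_univ_sum, Fintype.piFinset_univ]

lemma marg0 (ξ : Fin n → ℝ) (hξ : ∑ j, ξ j = 1) :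
    ∑ ρ : Fin s → Fin n, ∏ t, ξ (ρ t) = 1 := by
  rw [sum_pi_prod (fun _ j => ξ j)]
  simp [hξ]

lemma marg1 (ξ : Fin n → ℝ) (hξ : ∑ j, ξ j = 1) (f : Fin n → ℝ) (t₀ : Fin s) :
    ∑ ρ : Fin s → Fin n, (∏ t, ξ (ρ t)) * f (ρ t₀) = ∑ j, ξ j * f j := by
  have key : ∀ ρ : Fin s → Fin n, (∏ t, ξ (ρ t)) * f (ρ t₀)
      = ∏ t, (fun t j => ξ j * (if t = t₀ then f j else 1)) t (ρ t) := by
    intro ρ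
    simp only
    rw [Finset.prod_mul_distrib, Finset.prod_ite_eq' Finset.univ t₀ (fun t => f (ρ t))]
    simp
  simp_rw [key]
  rw [sum_pi_prod (fun t j => ξ j * (if t = t₀ then f j else 1))]
  have h2 : ∀ t : Fin s, (∑ j, ξ j * (if t = t₀ then f j else 1))
      = if t = t₀ then (∑ j, ξ j * f j) else 1 := by
    intro t
    by_cases h : t = t₀ <;> simp [h, hξ]
  simp_rw [h2]
  rw [Finset.prod_ite_eq' Finset.univ t₀ (fun _ => ∑ j, ξ j * f j)]
  simp

lemma marg2 (ξ : Fin n → ℝ) (hξ : ∑ j, ξ j = 1) (f g : Fin n → ℝ) (t₀ t₁ : Fin s)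
    (hne : t₀ ≠ t₁) :
    ∑ ρ : Fin s → Fin n, (∏ t, ξ (ρ t)) * (f (ρ t₀) * g (ρ t₁))
      = (∑ j, ξ j * f j) * (∑ j, ξ j * g j) := by
  have key : ∀ ρ : Fin s → Fin n, (∏ t, ξ (ρ t)) * (f (ρ t₀) * g (ρ t₁))
      = ∏ t, (fun t j => ξ j * ((if t = t₀ then f j else 1) * (if t = t₁ then g j else 1))) t (ρ t) := by
    intro ρ
    simp only
    rw [Finset.prod_mul_distrib, Finset.prod_mul_distrib,
      Finset.prod_ite_eq' Finset.univ t₀ (fun t => f (ρ t)),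
      Finset.prod_ite_eq' Finset.univ t₁ (fun t => g (ρ t))]
    simp
  simp_rw [key]
  rw [sum_pi_prod (fun t j => ξ j * ((if t = t₀ then f j else 1) * (if t = t₁ then g j else 1)))]
  have h2 : ∀ t : Fin s, (∑ j, ξ j * ((if t = t₀ then f j else 1) * (if t = t₁ then g j else 1)))
      = (if t = t₀ then (∑ j, ξ j * f j) else 1) * (if t = t₁ then (∑ j, ξ j * g j) else 1) := by
    intro t
    by_cases h0 : t = t₀
    · have h1 : t ≠ t₁ := h0 ▸ hne
      simp [h0, h1, hξ, hne]
    · by_cases h1 : t = t₁ <;> simp [h0, h1, hξ, hne, Ne.symm hne]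
  simp_rw [h2]
  rw [Finset.prod_mul_distrib,
    Finset.prod_ite_eq' Finset.univ t₀ (fun _ => ∑ j, ξ j * f j),
    Finset.prod_ite_eq' Finset.univ t₁ (fun _ => ∑ j, ξ j * g j)]
  simp

lemma marg2' (ξ : Fin n → ℝ) (hξ : ∑ j, ξ j = 1) (g : Fin n → Fin n → ℝ) (t₀ t₁ : Fin s)
    (hne : t₀ ≠ t₁) :
    ∑ ρ : Fin s → Fin n, (∏ t, ξ (ρ t)) * g (ρ t₀) (ρ t₁)
      = ∑ j, ∑ j', (ξ j * ξ j') * g j j' := by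
  have key : ∀ ρ : Fin s → Fin n, g (ρ t₀) (ρ t₁)
      = ∑ j, ∑ j', ((if ρ t₀ = j then (1:ℝ) else 0) * (if ρ t₁ = j' then (1:ℝ) else 0)) * g j j' := by
    intro ρ
    rw [Finset.sum_eq_single (ρ t₀)]
    · rw [Finset.sum_eq_single (ρ t₁)]
      · simp
      · intro b _ hb; simp [Ne.symm hb]
      · simp
    · intro b _ hb; simp [Ne.symm hb]
    · simp
  simp_rw [key, Finset.mul_sum]
  rw [Finset.sum_comm]
  refine Finset.sum_congr rfl fun j _ => ?_
  rw [Finset.sum_comm]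
  refine Finset.sum_congr rfl fun j' _ => ?_
  have hm := marg2 ξ hξ (fun x => if x = j then (1:ℝ) else 0) (fun x => if x = j' then (1:ℝ) else 0) t₀ t₁ hne
  have h3 : ∀ ρ : Fin s → Fin n,
      (∏ t, ξ (ρ t)) * (((if ρ t₀ = j then (1:ℝ) else 0) * (if ρ t₁ = j' then (1:ℝ) else 0)) * g j j')
      = ((∏ t, ξ (ρ t)) * ((if ρ t₀ = j then (1:ℝ) else 0) * (if ρ t₁ = j' then (1:ℝ) else 0))) * g j j' := by
    intro ρ; ring
  simp_rw [h3]
  rw [← Finset.sum_mul, hm]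
  congr 1
  congr 1 <;> simp [mul_ite, Finset.sum_ite_eq']




lemma weighted_sum_eq {s n : ℕ} (hs : 0 < s) (ξ : Fin n → ℝ) (hξ1 : ∑ j, ξ j = 1)
    (q D : ℝ) (a : Fin n → ℝ) (b : Fin n → Fin n → ℝ)
    (ha : ∑ j, ξ j * a j = q) (hb : ∑ j, ∑ j', (ξ j * ξ j') * b j j' = q)
    (hbd : ∑ j, ξ j * b j j = D) :
    ∑ ρ : Fin s → Fin n, (∏ t, ξ (ρ t)) *
      (q - (2 / (s : ℝ)) * ∑ t, a (ρ t) + (1 / (s : ℝ) ^ 2) * ∑ t, ∑ t', b (ρ t) (ρ t'))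
    = (D - q) / s := by
  have hsne : (s : ℝ) ≠ 0 := Nat.cast_ne_zero.2 hs.ne'
  have hdist : ∀ ρ : Fin s → Fin n, (∏ t, ξ (ρ t)) *
      (q - (2 / (s : ℝ)) * ∑ t, a (ρ t) + (1 / (s : ℝ) ^ 2) * ∑ t, ∑ t', b (ρ t) (ρ t'))
      = (∏ t, ξ (ρ t)) * q - (2 / (s : ℝ)) * ∑ t, (∏ t', ξ (ρ t')) * a (ρ t)
        + (1 / (s : ℝ) ^ 2) * ∑ t, ∑ t', (∏ u, ξ (ρ u)) * b (ρ t) (ρ t') := by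
    intro ρ
    rw [Finset.mul_sum (f := fun t => (∏ t', ξ (ρ t')) * a (ρ t))]
    simp_rw [← Finset.mul_sum]
    ring
  simp_rw [hdist]
  rw [Finset.sum_add_distrib, Finset.sum_sub_distrib, ← Finset.sum_mul, marg0 ξ hξ1, one_mul,
    ← Finset.mul_sum, ← Finset.mul_sum, Finset.sum_comm]
  have hT2 : ∀ t : Fin s, ∑ ρ : Fin s → Fin n, (∏ t', ξ (ρ t')) * a (ρ t) = q := by
    intro t; rw [marg1 ξ hξ1 a t, ha]
  have hT3 : (∑ ρ : Fin s → Fin n, ∑ t : Fin s, ∑ t' : Fin s,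
      (∏ u, ξ (ρ u)) * b (ρ t) (ρ t')) = (s : ℝ) * (D + ((s : ℝ) - 1) * q) := by
    rw [Finset.sum_comm]
    have hrow : ∀ t : Fin s, (∑ ρ : Fin s → Fin n, ∑ t' : Fin s,
        (∏ u, ξ (ρ u)) * b (ρ t) (ρ t')) = D + ((s : ℝ) - 1) * q := by
      intro t
      rw [Finset.sum_comm]
      have hcell : ∀ t' : Fin s, (∑ ρ : Fin s → Fin n, (∏ u, ξ (ρ u)) * b (ρ t) (ρ t'))
          = if t' = t then D else q := by
        intro t'
        by_cases h : t' = t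
        · subst h
          rw [if_pos rfl, ← hbd]
          exact marg1 ξ hξ1 (fun j => b j j) t'
        · rw [if_neg h, ← hb]
          exact marg2' ξ hξ1 b t t' (fun hc => h hc.symm)
      simp_rw [hcell]
      have : ∀ t' : Fin s, (if t' = t then D else q) = q + (if t' = t then D - q else 0) := by
        intro t'; by_cases h : t' = t <;> simp [h]
      simp_rw [this]
      rw [Finset.sum_add_distrib, Finset.sum_const, Finset.sum_ite_eq' Finset.univ t
        (fun _ => D - q)]
      simp [Finset.card_univ, nsmul_eq_mul]
      ring
    simp_rw [hrow]
    rw [Finset.sum_const]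
    simp [Finset.card_univ, nsmul_eq_mul]
    ring
  rw [hT3]
  have : ∑ t : Fin s, ∑ ρ : Fin s → Fin n, (∏ t', ξ (ρ t')) * a (ρ t) = (s : ℝ) * q := by
    simp_rw [hT2]
    rw [Finset.sum_const]
    simp [Finset.card_univ, nsmul_eq_mul]
  rw [this]
  field_simp
  ring


open MeasureTheory ProbabilityTheory

variable {Ω : Type*} [MeasureSpace Ω] [IsProbabilityMeasure (ℙ : Measure Ω)]

lemma L2mul {f g : Ω → ℝ} (hf : MemLp f 2 ℙ) (hg : MemLp g 2 ℙ) :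
    Integrable (fun ω => f ω * g ω) ℙ := by
  have h : MemLp (f • g) 1 ℙ := hg.smul hf
  rw [memLp_one_iff_integrable] at h
  exact h

set_option maxHeartbeats 2000000 in
lemma key {m n d s : ℕ} (hs : 0 < s)
    (A : Ω → Fin m → Fin n → ℝ) (B : Ω → Fin n → Fin d → ℝ)
    (hA : ∀ i j, Measurable fun ω => A ω i j) (hB : ∀ j k, Measurable fun ω => B ω j k)
    (hAB_indep : iIndepFun
      (m := fun _ : (Fin m × Fin n) ⊕ (Fin n × Fin d) => (inferInstance : MeasurableSpace ℝ))
      (Sum.elim (fun p ω => A ω p.1 p.2) (fun p ω => B ω p.1 p.2)) ℙ)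
    (hwA_int : ∀ j, Integrable (fun ω => ∑ i, (A ω i j) ^ 2) ℙ)
    (hwB_int : ∀ j, Integrable (fun ω => ∑ k, (B ω j k) ^ 2) ℙ)
    (hABF_int : Integrable (fun ω => ∑ i, ∑ k, (∑ j, A ω i j * B ω j k) ^ 2) ℙ)
    (ξ : Fin n → ℝ) (hξpos : ∀ j, 0 < ξ j) (hξ1 : ∑ j, ξ j = 1)
    (r : Ω → Fin s → Fin n) (hr : ∀ t, Measurable fun ω => r ω t)
    (hr_indep : iIndepFun (m := fun _ : Fin s => (inferInstance : MeasurableSpace (Fin n)))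
          (fun t ω => r ω t) ℙ)
    (hr_law : ∀ t j, ℙ {ω | r ω t = j} = ENNReal.ofReal (ξ j))
    (hr_AB : IndepFun (fun ω => (A ω, B ω)) r ℙ) :
    ∫ ω, ∑ i, ∑ k, ((∑ j, A ω i j * B ω j k) -
        (1 / (s : ℝ)) * ∑ t, A ω i (r ω t) * B ω (r ω t) k / ξ (r ω t)) ^ 2 ∂ℙ
    = ((∑ j, (∫ ω, ∑ i, (A ω i j) ^ 2 ∂ℙ) * (∫ ω, ∑ k, (B ω j k) ^ 2 ∂ℙ) / ξ j)
       - ∫ ω, ∑ i, ∑ k, (∑ j, A ω i j * B ω j k) ^ 2 ∂ℙ) / s := by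
  have hξne : ∀ j, ξ j ≠ 0 := fun j => (hξpos j).ne'
  -- measurability
  have hmF : ∀ i k, Measurable (fun ω => ∑ j, A ω i j * B ω j k) :=
    fun i k => Finset.measurable_sum _ (fun j _ => (hA i j).mul (hB j k))
  -- integrability of entry squares
  have hA2 : ∀ i j, Integrable (fun ω => (A ω i j) ^ 2) ℙ := by
    intro i j
    refine (hwA_int j).mono' ((hA i j).pow_const 2).aestronglyMeasurable ?_
    filter_upwards with ω
    rw [Real.norm_eq_abs, abs_of_nonneg (sq_nonneg _)]
    exact Finset.single_le_sum (f := fun i' => (A ω i' j) ^ 2)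
      (fun i' _ => sq_nonneg _) (Finset.mem_univ i)
  have hB2 : ∀ j k, Integrable (fun ω => (B ω j k) ^ 2) ℙ := by
    intro j k
    refine (hwB_int j).mono' ((hB j k).pow_const 2).aestronglyMeasurable ?_
    filter_upwards with ω
    rw [Real.norm_eq_abs, abs_of_nonneg (sq_nonneg _)]
    exact Finset.single_le_sum (f := fun k' => (B ω j k') ^ 2)
      (fun k' _ => sq_nonneg _) (Finset.mem_univ k)
  have hF2 : ∀ i k, Integrable (fun ω => (∑ j, A ω i j * B ω j k) ^ 2) ℙ := by
    intro i k
    refine hABF_int.mono' ((hmF i k).pow_const 2).aestronglyMeasurable ?_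
    filter_upwards with ω
    rw [Real.norm_eq_abs, abs_of_nonneg (sq_nonneg _)]
    calc (∑ j, A ω i j * B ω j k) ^ 2
        ≤ ∑ k', (∑ j, A ω i j * B ω j k') ^ 2 :=
          Finset.single_le_sum (f := fun k' => (∑ j, A ω i j * B ω j k') ^ 2)
            (fun _ _ => sq_nonneg _) (Finset.mem_univ k)
      _ ≤ ∑ i', ∑ k', (∑ j, A ω i' j * B ω j k') ^ 2 :=
          Finset.single_le_sum (f := fun i' => ∑ k', (∑ j, A ω i' j * B ω j k') ^ 2)
            (fun _ _ => Finset.sum_nonneg fun _ _ => sq_nonneg _) (Finset.mem_univ i)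
  -- independence of squared entries
  have hindep2 : ∀ (i : Fin m) (j : Fin n) (k : Fin d),
      IndepFun (fun ω => (A ω i j) ^ 2) (fun ω => (B ω j k) ^ 2) ℙ := by
    intro i j k
    have h := hAB_indep.indepFun
      (i := Sum.inl (i, j)) (j := Sum.inr (j, k)) (by simp)
    exact h.comp (measurable_id.pow_const 2) (measurable_id.pow_const 2)
  have hAB2int : ∀ (i : Fin m) (j : Fin n) (k : Fin d),
      Integrable (fun ω => (A ω i j) ^ 2 * (B ω j k) ^ 2) ℙ := by
    intro i j k
    have := (hindep2 i j k).integrable_mul (hA2 i j) (hB2 j k)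
    exact this
  have hAB2mul : ∀ (i : Fin m) (j : Fin n) (k : Fin d),
      ∫ ω, (A ω i j) ^ 2 * (B ω j k) ^ 2 ∂ℙ
        = (∫ ω, (A ω i j) ^ 2 ∂ℙ) * ∫ ω, (B ω j k) ^ 2 ∂ℙ := by
    intro i j k
    have := (hindep2 i j k).integral_mul_eq_mul_integral (hA2 i j).aestronglyMeasurable
      (hB2 j k).aestronglyMeasurable
    exact this
  -- MemLp 2 facts
  have mAB : ∀ (i : Fin m) (j : Fin n) (k : Fin d),
      MemLp (fun ω => A ω i j * B ω j k) 2 ℙ := by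
    intro i j k
    refine (memLp_two_iff_integrable_sq ((hA i j).mul (hB j k)).aestronglyMeasurable).2 ?_
    simpa [mul_pow] using hAB2int i j k
  have mc : ∀ (i : Fin m) (k : Fin d) (j : Fin n),
      MemLp (fun ω => A ω i j * B ω j k / ξ j) 2 ℙ := by
    intro i k j
    have heq : (fun ω => A ω i j * B ω j k / ξ j)
        = fun ω => (ξ j)⁻¹ * (A ω i j * B ω j k) := funext fun ω => by ring
    rw [heq]
    exact (mAB i j k).const_mul _
  have mF : ∀ i k, MemLp (fun ω => ∑ j, A ω i j * B ω j k) 2 ℙ :=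
    fun i k => (memLp_two_iff_integrable_sq (hmF i k).aestronglyMeasurable).2 (hF2 i k)
  
  -- integrable products
  have hInt_Fc : ∀ (i : Fin m) (k : Fin d) (j : Fin n),
      Integrable (fun ω => (∑ j', A ω i j' * B ω j' k) * (A ω i j * B ω j k / ξ j)) ℙ :=
    fun i k j => L2mul (mF i k) (mc i k j)
  have hInt_cc : ∀ (i : Fin m) (k : Fin d) (j j' : Fin n),
      Integrable (fun ω => (A ω i j * B ω j k / ξ j) * (A ω i j' * B ω j' k / ξ j')) ℙ :=
    fun i k j j' => L2mul (mc i k j) (mc i k j')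
  -- pointwise: ∑ⱼ ξⱼ cⱼ = F
  have hsum_c : ∀ (i : Fin m) (k : Fin d) (ω : Ω),
      ∑ j, ξ j * (A ω i j * B ω j k / ξ j) = ∑ j, A ω i j * B ω j k :=
    fun i k ω => Finset.sum_congr rfl fun j _ => by
      rw [mul_comm]; exact div_mul_cancel₀ _ (hξne j)
  -- (I1)
  have hI1 : ∀ (i : Fin m) (k : Fin d),
      ∑ j, ξ j * ∫ ω, (∑ j', A ω i j' * B ω j' k) * (A ω i j * B ω j k / ξ j) ∂ℙ
        = ∫ ω, (∑ j, A ω i j * B ω j k) ^ 2 ∂ℙ := by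
    intro i k
    calc ∑ j, ξ j * ∫ ω, (∑ j', A ω i j' * B ω j' k) * (A ω i j * B ω j k / ξ j) ∂ℙ
        = ∑ j, ∫ ω, ξ j * ((∑ j', A ω i j' * B ω j' k) * (A ω i j * B ω j k / ξ j)) ∂ℙ := by
          simp_rw [integral_const_mul]
      _ = ∫ ω, ∑ j, ξ j * ((∑ j', A ω i j' * B ω j' k) * (A ω i j * B ω j k / ξ j)) ∂ℙ :=
          (integral_finset_sum _ fun j _ => (hInt_Fc i k j).const_mul (ξ j)).symm
      _ = ∫ ω, (∑ j, A ω i j * B ω j k) ^ 2 ∂ℙ := by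
          congr 1; funext ω
          rw [show ∑ j, ξ j * ((∑ j', A ω i j' * B ω j' k) * (A ω i j * B ω j k / ξ j))
              = (∑ j', A ω i j' * B ω j' k) * ∑ j, ξ j * (A ω i j * B ω j k / ξ j) by
            rw [Finset.mul_sum]; exact Finset.sum_congr rfl fun j _ => by ring]
          rw [hsum_c i k ω, ← pow_two]
  -- (I2)
  have hI2 : ∀ (i : Fin m) (k : Fin d),
      ∑ j, ∑ j', (ξ j * ξ j') *
          ∫ ω, (A ω i j * B ω j k / ξ j) * (A ω i j' * B ω j' k / ξ j') ∂ℙ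
        = ∫ ω, (∑ j, A ω i j * B ω j k) ^ 2 ∂ℙ := by
    intro i k
    calc ∑ j, ∑ j', (ξ j * ξ j') *
          ∫ ω, (A ω i j * B ω j k / ξ j) * (A ω i j' * B ω j' k / ξ j') ∂ℙ
        = ∑ j, ∑ j', ∫ ω, (ξ j * ξ j') *
            ((A ω i j * B ω j k / ξ j) * (A ω i j' * B ω j' k / ξ j')) ∂ℙ := by
          simp_rw [integral_const_mul]
      _ = ∑ j, ∫ ω, ∑ j', (ξ j * ξ j') *
            ((A ω i j * B ω j k / ξ j) * (A ω i j' * B ω j' k / ξ j')) ∂ℙ :=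
          Finset.sum_congr rfl fun j _ =>
            (integral_finset_sum _ fun j' _ => (hInt_cc i k j j').const_mul _).symm
      _ = ∫ ω, ∑ j, ∑ j', (ξ j * ξ j') *
            ((A ω i j * B ω j k / ξ j) * (A ω i j' * B ω j' k / ξ j')) ∂ℙ :=
          (integral_finset_sum _ fun j _ => integrable_finset_sum _
            fun j' _ => (hInt_cc i k j j').const_mul _).symm
      _ = ∫ ω, (∑ j, A ω i j * B ω j k) ^ 2 ∂ℙ := by
          congr 1; funext ω
          rw [show ∑ j, ∑ j', (ξ j * ξ j') *
              ((A ω i j * B ω j k / ξ j) * (A ω i j' * B ω j' k / ξ j'))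
              = (∑ j, ξ j * (A ω i j * B ω j k / ξ j)) *
                ∑ j', ξ j' * (A ω i j' * B ω j' k / ξ j') by
            rw [Finset.sum_mul_sum]
            exact Finset.sum_congr rfl fun j _ => Finset.sum_congr rfl fun j' _ => by ring]
          rw [hsum_c i k ω, ← pow_two]
  -- (I3)
  have hI3 : ∀ (i : Fin m) (k : Fin d) (j : Fin n),
      ξ j * ∫ ω, (A ω i j * B ω j k / ξ j) * (A ω i j * B ω j k / ξ j) ∂ℙ
        = (∫ ω, (A ω i j) ^ 2 ∂ℙ) * (∫ ω, (B ω j k) ^ 2 ∂ℙ) / ξ j := by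
    intro i k j
    have hpt : (fun ω => (A ω i j * B ω j k / ξ j) * (A ω i j * B ω j k / ξ j))
        = fun ω => ((A ω i j) ^ 2 * (B ω j k) ^ 2) * (ξ j ^ 2)⁻¹ := by
      funext ω; field_simp
    rw [hpt, integral_mul_const, hAB2mul i j k]
    field_simp [hξne j]
  -- expansion of the squared error for a fixed draw ρ
  have hexp : ∀ (ρ : Fin s → Fin n) (i : Fin m) (k : Fin d),
      ∫ ω, ((∑ j, A ω i j * B ω j k) -
          (1 / (s : ℝ)) * ∑ t, A ω i (ρ t) * B ω (ρ t) k / ξ (ρ t)) ^ 2 ∂ℙ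
      = (∫ ω, (∑ j, A ω i j * B ω j k) ^ 2 ∂ℙ)
        - (2 / (s : ℝ)) * ∑ t, (∫ ω, (∑ j', A ω i j' * B ω j' k) *
            (A ω i (ρ t) * B ω (ρ t) k / ξ (ρ t)) ∂ℙ)
        + (1 / (s : ℝ) ^ 2) * ∑ t, ∑ t', (∫ ω, (A ω i (ρ t) * B ω (ρ t) k / ξ (ρ t)) *
            (A ω i (ρ t') * B ω (ρ t') k / ξ (ρ t')) ∂ℙ) := by
    intro ρ i k
    have hpt : (fun ω => ((∑ j, A ω i j * B ω j k) -
          (1 / (s : ℝ)) * ∑ t, A ω i (ρ t) * B ω (ρ t) k / ξ (ρ t)) ^ 2)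
        = fun ω => ((∑ j, A ω i j * B ω j k) ^ 2
          - (2 / (s : ℝ)) * ∑ t, (∑ j', A ω i j' * B ω j' k) *
              (A ω i (ρ t) * B ω (ρ t) k / ξ (ρ t)))
          + (1 / (s : ℝ) ^ 2) * ∑ t, ∑ t', (A ω i (ρ t) * B ω (ρ t) k / ξ (ρ t)) *
              (A ω i (ρ t') * B ω (ρ t') k / ξ (ρ t')) := by
      funext ω
      rw [← Finset.mul_sum, ← Finset.sum_mul_sum]
      ring
    rw [hpt]
    rw [integral_add
      (f := fun ω => (∑ j, A ω i j * B ω j k) ^ 2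
          - (2 / (s : ℝ)) * ∑ t, (∑ j', A ω i j' * B ω j' k) *
              (A ω i (ρ t) * B ω (ρ t) k / ξ (ρ t)))
      (g := fun ω => (1 / (s : ℝ) ^ 2) * ∑ t, ∑ t', (A ω i (ρ t) * B ω (ρ t) k / ξ (ρ t)) *
              (A ω i (ρ t') * B ω (ρ t') k / ξ (ρ t')))
      (((hF2 i k).sub ((integrable_finset_sum _ fun t _ => hInt_Fc i k (ρ t)).const_mul _)))
      ((integrable_finset_sum _ fun t _ => integrable_finset_sum _
        fun t' _ => hInt_cc i k (ρ t) (ρ t')).const_mul _),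
      integral_sub
      (f := fun ω => (∑ j, A ω i j * B ω j k) ^ 2)
      (g := fun ω => (2 / (s : ℝ)) * ∑ t, (∑ j', A ω i j' * B ω j' k) *
              (A ω i (ρ t) * B ω (ρ t) k / ξ (ρ t)))
      (hF2 i k)
        ((integrable_finset_sum _ fun t _ => hInt_Fc i k (ρ t)).const_mul _),
      integral_const_mul, integral_const_mul,
      integral_finset_sum _ (fun t _ => hInt_Fc i k (ρ t)),
      integral_finset_sum _ (fun t _ => integrable_finset_sum _
        fun t' _ => hInt_cc i k (ρ t) (ρ t'))]
    congr 2
    exact Finset.sum_congr rfl fun t _ =>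
      integral_finset_sum _ fun t' _ => hInt_cc i k (ρ t) (ρ t')
  
  -- MemLp / integrability of the fixed-ρ error
  have mg : ∀ (ρ : Fin s → Fin n) (i : Fin m) (k : Fin d),
      MemLp (fun ω => (∑ j, A ω i j * B ω j k) -
        (1 / (s : ℝ)) * ∑ t, A ω i (ρ t) * B ω (ρ t) k / ξ (ρ t)) 2 ℙ := by
    intro ρ i k
    have h := (memLp_finset_sum' (μ := ℙ) Finset.univ
      (fun t (_ : t ∈ Finset.univ) => mc i k (ρ t))).const_mul (1 / (s : ℝ))
    simp only [Finset.sum_apply] at h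
    exact (mF i k).sub h
  have herrρ_int : ∀ (ρ : Fin s → Fin n),
      Integrable (fun ω => ∑ i, ∑ k, ((∑ j, A ω i j * B ω j k) -
        (1 / (s : ℝ)) * ∑ t, A ω i (ρ t) * B ω (ρ t) k / ξ (ρ t)) ^ 2) ℙ := by
    intro ρ
    exact integrable_finset_sum _ fun i _ => integrable_finset_sum _
      fun k _ => (mg ρ i k).integrable_sq
  -- indicator decomposition
  have hrm : Measurable r := measurable_pi_lambda _ hr
  have hsetρ : ∀ (ρ : Fin s → Fin n), MeasurableSet {ω | r ω = ρ} :=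
    fun ρ => hrm (measurableSet_singleton ρ)
  have hind_meas : ∀ (ρ : Fin s → Fin n),
      Measurable (fun ω => if r ω = ρ then (1 : ℝ) else 0) :=
    fun ρ => Measurable.ite (hsetρ ρ) measurable_const measurable_const
  have hind_int : ∀ (ρ : Fin s → Fin n),
      Integrable (fun ω => if r ω = ρ then (1 : ℝ) else 0) ℙ := by
    intro ρ
    refine (integrable_const (1 : ℝ)).mono' (hind_meas ρ).aestronglyMeasurable ?_
    filter_upwards with ω
    by_cases h : r ω = ρ <;> simp [h]
  have hmul_int : ∀ (ρ : Fin s → Fin n),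
      Integrable (fun ω => (if r ω = ρ then (1 : ℝ) else 0) *
        ∑ i, ∑ k, ((∑ j, A ω i j * B ω j k) -
        (1 / (s : ℝ)) * ∑ t, A ω i (ρ t) * B ω (ρ t) k / ξ (ρ t)) ^ 2) ℙ := by
    intro ρ
    refine (herrρ_int ρ).bdd_mul (c := 1) (hind_meas ρ).aestronglyMeasurable
      (Filter.Eventually.of_forall fun ω => ?_)
    by_cases h : r ω = ρ <;> simp [h]
  have hpt_err : ∀ ω, (∑ i, ∑ k, ((∑ j, A ω i j * B ω j k) -
        (1 / (s : ℝ)) * ∑ t, A ω i (r ω t) * B ω (r ω t) k / ξ (r ω t)) ^ 2)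
      = ∑ ρ : Fin s → Fin n, (if r ω = ρ then (1 : ℝ) else 0) *
        (∑ i, ∑ k, ((∑ j, A ω i j * B ω j k) -
        (1 / (s : ℝ)) * ∑ t, A ω i (ρ t) * B ω (ρ t) k / ξ (ρ t)) ^ 2) := by
    intro ω
    rw [Finset.sum_eq_single (r ω)]
    · rw [if_pos rfl, one_mul]
    · intro ρ _ hρ; rw [if_neg (Ne.symm hρ), zero_mul]
    · intro h; exact absurd (Finset.mem_univ _) h
  -- split the integral over the draws
  have hsplit : ∫ ω, ∑ i, ∑ k, ((∑ j, A ω i j * B ω j k) -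
        (1 / (s : ℝ)) * ∑ t, A ω i (r ω t) * B ω (r ω t) k / ξ (r ω t)) ^ 2 ∂ℙ
      = ∑ ρ : Fin s → Fin n, ∫ ω, (if r ω = ρ then (1 : ℝ) else 0) *
        (∑ i, ∑ k, ((∑ j, A ω i j * B ω j k) -
        (1 / (s : ℝ)) * ∑ t, A ω i (ρ t) * B ω (ρ t) k / ξ (ρ t)) ^ 2) ∂ℙ := by
    rw [integral_congr_ae (Filter.Eventually.of_forall hpt_err)]
    exact integral_finset_sum _ fun ρ _ => hmul_int ρ
  -- measure of each draw
  have hweight : ∀ (ρ : Fin s → Fin n),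
      (ℙ {ω | r ω = ρ}).toReal = ∏ t, ξ (ρ t) := by
    intro ρ
    have hset : {ω | r ω = ρ} = ⋂ t ∈ Finset.univ, (fun ω => r ω t) ⁻¹' {ρ t} := by
      ext ω; simp [funext_iff]
    rw [hset, hr_indep.measure_inter_preimage_eq_mul Finset.univ
      (sets := fun t => {ρ t}) (fun t _ => measurableSet_singleton _)]
    rw [ENNReal.toReal_prod]
    refine Finset.prod_congr rfl fun t _ => ?_
    have : (fun ω => r ω t) ⁻¹' {ρ t} = {ω | r ω t = ρ t} := by ext ω; simp
    rw [this, hr_law t (ρ t), ENNReal.toReal_ofReal (hξpos (ρ t)).le]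
  -- independence factorization
  have hfactor : ∀ (ρ : Fin s → Fin n),
      ∫ ω, (if r ω = ρ then (1 : ℝ) else 0) *
        (∑ i, ∑ k, ((∑ j, A ω i j * B ω j k) -
        (1 / (s : ℝ)) * ∑ t, A ω i (ρ t) * B ω (ρ t) k / ξ (ρ t)) ^ 2) ∂ℙ
      = (∏ t, ξ (ρ t)) * ∫ ω, ∑ i, ∑ k, ((∑ j, A ω i j * B ω j k) -
        (1 / (s : ℝ)) * ∑ t, A ω i (ρ t) * B ω (ρ t) k / ξ (ρ t)) ^ 2 ∂ℙ := by
    intro ρ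
    have hGA : ∀ (i : Fin m) (j : Fin n),
        Measurable fun p : (Fin m → Fin n → ℝ) × (Fin n → Fin d → ℝ) => p.1 i j :=
      fun i j => (measurable_pi_apply j).comp ((measurable_pi_apply i).comp measurable_fst)
    have hGB : ∀ (j : Fin n) (k : Fin d),
        Measurable fun p : (Fin m → Fin n → ℝ) × (Fin n → Fin d → ℝ) => p.2 j k :=
      fun j k => (measurable_pi_apply k).comp ((measurable_pi_apply j).comp measurable_snd)
    have hG : Measurable fun p : (Fin m → Fin n → ℝ) × (Fin n → Fin d → ℝ) =>
        ∑ i, ∑ k, ((∑ j, p.1 i j * p.2 j k) -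
          (1 / (s : ℝ)) * ∑ t, p.1 i (ρ t) * p.2 (ρ t) k / ξ (ρ t)) ^ 2 := by
      refine Finset.measurable_sum _ fun i _ => Finset.measurable_sum _ fun k _ => ?_
      refine Measurable.pow_const ?_ 2
      refine Measurable.sub (Finset.measurable_sum _ fun j _ => (hGA i j).mul (hGB j k)) ?_
      exact (Finset.measurable_sum _ fun t _ =>
        ((hGA i (ρ t)).mul (hGB (ρ t) k)).div_const _).const_mul _
    have hH : Measurable fun x : Fin s → Fin n => if x = ρ then (1 : ℝ) else 0 :=
      Measurable.ite (measurableSet_singleton ρ) measurable_const measurable_const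
    have hIndep : IndepFun (fun ω => if r ω = ρ then (1 : ℝ) else 0)
        (fun ω => ∑ i, ∑ k, ((∑ j, A ω i j * B ω j k) -
          (1 / (s : ℝ)) * ∑ t, A ω i (ρ t) * B ω (ρ t) k / ξ (ρ t)) ^ 2) ℙ :=
      (hr_AB.comp hG hH).symm
    have hmm := hIndep.integral_mul_eq_mul_integral (hind_int ρ).aestronglyMeasurable
      (herrρ_int ρ).aestronglyMeasurable
    refine Eq.trans hmm ?_
    congr 1
    have hindic : (fun ω => if r ω = ρ then (1 : ℝ) else 0)
        = Set.indicator {ω | r ω = ρ} (fun _ => (1 : ℝ)) := by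
      funext ω; by_cases h : r ω = ρ <;> simp [Set.indicator_apply, h]
    rw [hindic]
    exact (integral_indicator_const (1 : ℝ) (hsetρ ρ)).trans
      (by rw [smul_eq_mul, mul_one]; exact hweight ρ)
  
  -- per-ρ expectation split over matrix entries
  have hEerrρ : ∀ ρ : Fin s → Fin n,
      ∫ ω, ∑ i, ∑ k, ((∑ j, A ω i j * B ω j k) -
        (1 / (s : ℝ)) * ∑ t, A ω i (ρ t) * B ω (ρ t) k / ξ (ρ t)) ^ 2 ∂ℙ
      = ∑ i, ∑ k, ∫ ω, ((∑ j, A ω i j * B ω j k) -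
        (1 / (s : ℝ)) * ∑ t, A ω i (ρ t) * B ω (ρ t) k / ξ (ρ t)) ^ 2 ∂ℙ := by
    intro ρ
    rw [integral_finset_sum _ fun i _ => integrable_finset_sum _
      fun k _ => (mg ρ i k).integrable_sq]
    exact Finset.sum_congr rfl fun i _ => integral_finset_sum _
      fun k _ => (mg ρ i k).integrable_sq
  have hsne : (s : ℝ) ≠ 0 := Nat.cast_ne_zero.2 hs.ne'
  -- per-(i,k) weighted average over all draws
  have hper : ∀ (i : Fin m) (k : Fin d),
      ∑ ρ : Fin s → Fin n, (∏ t, ξ (ρ t)) *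
        ∫ ω, ((∑ j, A ω i j * B ω j k) -
          (1 / (s : ℝ)) * ∑ t, A ω i (ρ t) * B ω (ρ t) k / ξ (ρ t)) ^ 2 ∂ℙ
      = ((∑ j, (∫ ω, (A ω i j) ^ 2 ∂ℙ) * (∫ ω, (B ω j k) ^ 2 ∂ℙ) / ξ j)
          - ∫ ω, (∑ j, A ω i j * B ω j k) ^ 2 ∂ℙ) / s := by
    intro i k
    have hw := weighted_sum_eq hs ξ hξ1
      (∫ ω, (∑ j, A ω i j * B ω j k) ^ 2 ∂ℙ)
      (∑ j, (∫ ω, (A ω i j) ^ 2 ∂ℙ) * (∫ ω, (B ω j k) ^ 2 ∂ℙ) / ξ j)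
      (fun j => ∫ ω, (∑ j', A ω i j' * B ω j' k) * (A ω i j * B ω j k / ξ j) ∂ℙ)
      (fun j j' => ∫ ω, (A ω i j * B ω j k / ξ j) * (A ω i j' * B ω j' k / ξ j') ∂ℙ)
      (hI1 i k) (hI2 i k)
      (Finset.sum_congr rfl fun j _ => hI3 i k j)
    rw [← hw]
    exact Finset.sum_congr rfl fun ρ _ => by rw [hexp ρ i k]
  -- assemble everything
  rw [hsplit]
  have h1 : ∑ ρ : Fin s → Fin n, ∫ ω, (if r ω = ρ then (1 : ℝ) else 0) *
        (∑ i, ∑ k, ((∑ j, A ω i j * B ω j k) -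
        (1 / (s : ℝ)) * ∑ t, A ω i (ρ t) * B ω (ρ t) k / ξ (ρ t)) ^ 2) ∂ℙ
      = ∑ ρ : Fin s → Fin n, (∏ t, ξ (ρ t)) *
        ∑ i, ∑ k, ∫ ω, ((∑ j, A ω i j * B ω j k) -
        (1 / (s : ℝ)) * ∑ t, A ω i (ρ t) * B ω (ρ t) k / ξ (ρ t)) ^ 2 ∂ℙ :=
    Finset.sum_congr rfl fun ρ _ => by rw [hfactor ρ, hEerrρ ρ]
  rw [h1]
  have h2 : ∑ ρ : Fin s → Fin n, (∏ t, ξ (ρ t)) *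
        ∑ i, ∑ k, ∫ ω, ((∑ j, A ω i j * B ω j k) -
        (1 / (s : ℝ)) * ∑ t, A ω i (ρ t) * B ω (ρ t) k / ξ (ρ t)) ^ 2 ∂ℙ
      = ∑ i, ∑ k, ∑ ρ : Fin s → Fin n, (∏ t, ξ (ρ t)) *
        ∫ ω, ((∑ j, A ω i j * B ω j k) -
        (1 / (s : ℝ)) * ∑ t, A ω i (ρ t) * B ω (ρ t) k / ξ (ρ t)) ^ 2 ∂ℙ := by
    simp_rw [Finset.mul_sum]
    rw [Finset.sum_comm]
    exact Finset.sum_congr rfl fun i _ => Finset.sum_comm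
  rw [h2]
  have h3 : ∑ i, ∑ k, (∑ ρ : Fin s → Fin n, (∏ t, ξ (ρ t)) *
        ∫ ω, ((∑ j, A ω i j * B ω j k) -
        (1 / (s : ℝ)) * ∑ t, A ω i (ρ t) * B ω (ρ t) k / ξ (ρ t)) ^ 2 ∂ℙ)
      = ∑ i, ∑ k, ((∑ j, (∫ ω, (A ω i j) ^ 2 ∂ℙ) * (∫ ω, (B ω j k) ^ 2 ∂ℙ) / ξ j)
          - ∫ ω, (∑ j, A ω i j * B ω j k) ^ 2 ∂ℙ) / s :=
    Finset.sum_congr rfl fun i _ => Finset.sum_congr rfl fun k _ => hper i k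
  rw [h3]
  -- final bookkeeping
  have hQ : ∫ ω, ∑ i, ∑ k, (∑ j, A ω i j * B ω j k) ^ 2 ∂ℙ
      = ∑ i, ∑ k, ∫ ω, (∑ j, A ω i j * B ω j k) ^ 2 ∂ℙ := by
    rw [integral_finset_sum _ fun i _ => integrable_finset_sum _ fun k _ => hF2 i k]
    exact Finset.sum_congr rfl fun i _ => integral_finset_sum _ fun k _ => hF2 i k
  have hwAe : ∀ j, ∫ ω, ∑ i, (A ω i j) ^ 2 ∂ℙ = ∑ i, ∫ ω, (A ω i j) ^ 2 ∂ℙ :=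
    fun j => integral_finset_sum _ fun i _ => hA2 i j
  have hwBe : ∀ j, ∫ ω, ∑ k, (B ω j k) ^ 2 ∂ℙ = ∑ k, ∫ ω, (B ω j k) ^ 2 ∂ℙ :=
    fun j => integral_finset_sum _ fun k _ => hB2 j k
  rw [hQ]
  simp_rw [hwAe, hwBe]
  have halg : ∑ i, ∑ k, ∑ j, (∫ ω, (A ω i j) ^ 2 ∂ℙ) * (∫ ω, (B ω j k) ^ 2 ∂ℙ) / ξ j
      = ∑ j, (∑ i, ∫ ω, (A ω i j) ^ 2 ∂ℙ) * (∑ k, ∫ ω, (B ω j k) ^ 2 ∂ℙ) / ξ j := by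
    rw [show (∑ i, ∑ k, ∑ j, (∫ ω, (A ω i j) ^ 2 ∂ℙ) * (∫ ω, (B ω j k) ^ 2 ∂ℙ) / ξ j)
        = ∑ i, ∑ j, ∑ k, (∫ ω, (A ω i j) ^ 2 ∂ℙ) * (∫ ω, (B ω j k) ^ 2 ∂ℙ) / ξ j from
      Finset.sum_congr rfl fun i _ => Finset.sum_comm]
    rw [Finset.sum_comm]
    refine Finset.sum_congr rfl fun j _ => ?_
    rw [Finset.sum_mul_sum, Finset.sum_div]
    refine Finset.sum_congr rfl fun i _ => ?_
    rw [Finset.sum_div]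
  -- finish by algebra
  simp_rw [← Finset.sum_div]
  congr 1
  simp_rw [Finset.sum_sub_distrib]
  congr 1

end OSP

open MeasureTheory ProbabilityTheory



open MeasureTheory ProbabilityTheory

/-- Optimal sampling probabilities for randomized matrix
multiplication of random matrices `A` (of size `m × n`) and `B` (of size `n × d`)
with mutually independent entries.  For any positive probability vector `ξ` and any
i.i.d. indices `r₁,…,r_s` with law `ξ`, independent of `(A,B)`, the sketched product
`Ẑ_s = (1/s) ∑ₜ A_{:,rₜ} B_{rₜ,:}/ξ_{rₜ}` has expected squared Frobenius error
`E[‖AB − Ẑ_s‖_F²] ≥ μ̄/s`, with equality when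
`ξ j = ξ* j = √(wA j · wB j)/∑ᵢ √(wA i · wB i)`, where `wA j = E[‖A_{:,j}‖₂²]`,
`wB j = E[‖B_{j,:}‖₂²]` and `μ̄ = (∑ⱼ √(wA j · wB j))² − E[‖AB‖_F²]`. -/
theorem optimal_sampling_probability_matrix_product
    {Ω : Type*} [MeasureSpace Ω] [IsProbabilityMeasure (ℙ : Measure Ω)]
    (m n d s : ℕ) (hn : 0 < n) (hs : 0 < s)
    (A : Ω → Fin m → Fin n → ℝ) (B : Ω → Fin n → Fin d → ℝ)
    (hA : ∀ i j, Measurable fun ω => A ω i j) (hB : ∀ j k, Measurable fun ω => B ω j k)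
    -- all entries of A and B are mutually independent
    (hAB_indep : iIndepFun
      (m := fun _ : (Fin m × Fin n) ⊕ (Fin n × Fin d) => (inferInstance : MeasurableSpace ℝ))
      (Sum.elim (fun p ω => A ω p.1 p.2) (fun p ω => B ω p.1 p.2)) ℙ)
    (wA wB : Fin n → ℝ)
    (hwA : ∀ j, wA j = ∫ ω, ∑ i, (A ω i j) ^ 2 ∂ℙ)
    (hwB : ∀ j, wB j = ∫ ω, ∑ k, (B ω j k) ^ 2 ∂ℙ)
    (hwA_int : ∀ j, Integrable (fun ω => ∑ i, (A ω i j) ^ 2) ℙ)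
    (hwB_int : ∀ j, Integrable (fun ω => ∑ k, (B ω j k) ^ 2) ℙ)
    (hwA_pos : ∀ j, 0 < wA j) (hwB_pos : ∀ j, 0 < wB j)
    (hABF_int : Integrable (fun ω => ∑ i, ∑ k, (∑ j, A ω i j * B ω j k) ^ 2) ℙ)
    (ξstar : Fin n → ℝ)
    (hξstar : ∀ j, ξstar j =
      Real.sqrt (wA j * wB j) / ∑ i, Real.sqrt (wA i * wB i))
    (μbar : ℝ)
    (hμbar : μbar = (∑ j, Real.sqrt (wA j * wB j)) ^ 2 -
      ∫ ω, ∑ i, ∑ k, (∑ j, A ω i j * B ω j k) ^ 2 ∂ℙ) :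
    -- ξ* minimizes the expected squared Frobenius error over all positive
    -- probability vectors ξ …
    (∀ ξ : Fin n → ℝ, (∀ j, 0 < ξ j) → ∑ j, ξ j = 1 →
      ∀ r : Ω → Fin s → Fin n, (∀ t, Measurable fun ω => r ω t) →
        iIndepFun (m := fun _ : Fin s => (inferInstance : MeasurableSpace (Fin n)))
          (fun t ω => r ω t) ℙ →
        (∀ t j, ℙ {ω | r ω t = j} = ENNReal.ofReal (ξ j)) →
        IndepFun (fun ω => (A ω, B ω)) r ℙ →
        μbar / s ≤ ∫ ω, ∑ i, ∑ k, ((∑ j, A ω i j * B ω j k) -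
          (1 / (s : ℝ)) * ∑ t, A ω i (r ω t) * B ω (r ω t) k / ξ (r ω t)) ^ 2 ∂ℙ) ∧
    -- … and the minimum value, attained at ξ*, equals μ̄/s
    (∀ r : Ω → Fin s → Fin n, (∀ t, Measurable fun ω => r ω t) →
      iIndepFun (m := fun _ : Fin s => (inferInstance : MeasurableSpace (Fin n)))
        (fun t ω => r ω t) ℙ →
      (∀ t j, ℙ {ω | r ω t = j} = ENNReal.ofReal (ξstar j)) →
      IndepFun (fun ω => (A ω, B ω)) r ℙ →
      (∫ ω, ∑ i, ∑ k, ((∑ j, A ω i j * B ω j k) -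
        (1 / (s : ℝ)) * ∑ t, A ω i (r ω t) * B ω (r ω t) k / ξstar (r ω t)) ^ 2 ∂ℙ)
        = μbar / s) := by
  have hsR : (0 : ℝ) < (s : ℝ) := by exact_mod_cast hs
  have hT_pos : 0 < ∑ j, Real.sqrt (wA j * wB j) :=
    Finset.sum_pos (fun j _ => Real.sqrt_pos.2 (mul_pos (hwA_pos j) (hwB_pos j)))
      ⟨⟨0, hn⟩, Finset.mem_univ _⟩
  constructor
  · intro ξ hξpos hξ1 r hrm hri hrl hrAB
    rw [OSP.key hs A B hA hB hAB_indep hwA_int hwB_int hABF_int ξ hξpos hξ1 r hrm hri hrl hrAB]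
    simp_rw [← hwA, ← hwB]
    rw [hμbar, div_le_div_iff_of_pos_right hsR]
    refine sub_le_sub_right ?_ _
    -- Cauchy–Schwarz
    have hξne : ∀ j, ξ j ≠ 0 := fun j => (hξpos j).ne'
    have hcs := Finset.sum_mul_sq_le_sq_mul_sq Finset.univ
      (fun j => Real.sqrt (wA j * wB j / ξ j)) (fun j => Real.sqrt (ξ j))
    have h1 : ∀ j : Fin n, Real.sqrt (wA j * wB j / ξ j) * Real.sqrt (ξ j)
        = Real.sqrt (wA j * wB j) := by
      intro j
      rw [← Real.sqrt_mul (div_nonneg (mul_pos (hwA_pos j) (hwB_pos j)).le (hξpos j).le),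
        div_mul_cancel₀ _ (hξne j)]
    have h2 : ∀ j : Fin n, Real.sqrt (wA j * wB j / ξ j) ^ 2 = wA j * wB j / ξ j := by
      intro j
      exact Real.sq_sqrt (div_nonneg (mul_pos (hwA_pos j) (hwB_pos j)).le (hξpos j).le)
    have h3 : ∀ j : Fin n, Real.sqrt (ξ j) ^ 2 = ξ j := fun j => Real.sq_sqrt (hξpos j).le
    simp_rw [h1, h2, h3, hξ1, mul_one] at hcs
    exact hcs
  · intro r hrm hri hrl hrAB
    have hξstar_pos : ∀ j, 0 < ξstar j := by
      intro j
      rw [hξstar]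
      exact div_pos (Real.sqrt_pos.2 (mul_pos (hwA_pos j) (hwB_pos j))) hT_pos
    have hξstar_sum : ∑ j, ξstar j = 1 := by
      simp_rw [hξstar]
      rw [← Finset.sum_div, div_self hT_pos.ne']
    rw [OSP.key hs A B hA hB hAB_indep hwA_int hwB_int hABF_int ξstar hξstar_pos hξstar_sum
      r hrm hri hrl hrAB]
    simp_rw [← hwA, ← hwB]
    rw [hμbar]
    congr 2
    have hterm : ∀ j : Fin n, wA j * wB j / ξstar j
        = Real.sqrt (wA j * wB j) * ∑ i, Real.sqrt (wA i * wB i) := by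
      intro j
      have hsq : Real.sqrt (wA j * wB j) ≠ 0 :=
        (Real.sqrt_pos.2 (mul_pos (hwA_pos j) (hwB_pos j))).ne'
      have h0 : 0 ≤ wA j * wB j := (mul_pos (hwA_pos j) (hwB_pos j)).le
      rw [hξstar j, div_div_eq_mul_div, div_eq_iff hsq]
      linear_combination (-(∑ i, Real.sqrt (wA i * wB i))) * Real.mul_self_sqrt h0
    simp_rw [hterm]
    rw [← Finset.sum_mul, sq]
end
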